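/- arXiv:1904.02645 — 3 statements merged into one kernel-verified Lean document; each statement's English description precedes it below -/
import Mathlib

section
/- Let X be a Peano continuum that is not homeomorphic to the circle S¹, equipped with a compatible metric. Then the set E(X) of free arcs of X is countable, and for every ε > 0 only finitely many free arcs of X have diameter greater than ε (that is, the free arcs form a zero-sequence of disjoint open subsets). -/
open Topology Set Filter

/-- A free arc of `X`: an open subset homeomorphic to `(0,1)`, maximal under inclusion
among open subsets homeomorphic to `(0,1)`. -/
def IsFreeArc {X : Type*} [TopologicalSpace X] (e : Set X) : Prop :=
  IsOpen e ∧ Nonempty (e ≃ₜ Set.Ioo (0:ℝ) 1) ∧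
    ∀ e' : Set X, IsOpen e' → Nonempty (e' ≃ₜ Set.Ioo (0:ℝ) 1) → e ⊆ e' → e' = e

/-- The ground space of `X`: the complement of the union of all free arcs. -/
def ground (X : Type*) [TopologicalSpace X] : Set X :=
  {x : X | ∀ e : Set X, IsFreeArc e → x ∉ e}

/-- The edge cut determined by a partition `(A, B)` of the ground space. -/
def edgeCut {X : Type*} [TopologicalSpace X] (A B : Set X) : Set (Set X) :=
  {e : Set X | IsFreeArc e ∧ (closure e ∩ A).Nonempty ∧ (closure e ∩ B).Nonempty}

/-- `X` satisfies the even-cut condition: every edge cut is finite of even cardinality. -/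
def EvenCutCondition (X : Type*) [TopologicalSpace X] : Prop :=
  ∀ A B : Set X, IsClosed A → IsClosed B → A.Nonempty → B.Nonempty → Disjoint A B →
    A ∪ B = ground X → (edgeCut A B).Finite ∧ Even (edgeCut A B).ncard

/-- A continuous surjection onto `X` is edge-wise Eulerian if the preimage of every
interior point of every free arc is a singleton. -/
def EdgewiseEulerian {D X : Type*} [TopologicalSpace X] (g : D → X) : Prop :=
  ∀ e : Set X, IsFreeArc e → ∀ x ∈ e, ∃ t : D, g ⁻¹' {x} = {t}

/-- Strongly irreducible: no proper closed subset of the domain maps onto everything. -/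
def StronglyIrreducible {D X : Type*} [TopologicalSpace D] (g : D → X) : Prop :=
  ∀ A : Set D, IsClosed A → A ≠ Set.univ → g '' A ≠ Set.univ

/-- An arc: a subspace homeomorphic to `[0,1]`. -/
def IsArc {D : Type*} [TopologicalSpace D] (A : Set D) : Prop :=
  Nonempty (A ≃ₜ Set.Icc (0:ℝ) 1)

/-- A subcontinuum: a nonempty closed connected subset. -/
def IsSubcontinuum {D : Type*} [TopologicalSpace D] (A : Set D) : Prop :=
  IsClosed A ∧ IsConnected A

/-- Arcwise increasing: images of strictly nested arcs are strictly nested. -/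
def ArcwiseIncreasing {D X : Type*} [TopologicalSpace D] (g : D → X) : Prop :=
  ∀ A B : Set D, IsArc A → IsArc B → A ⊂ B → g '' A ⊂ g '' B

/-- Hereditarily irreducible: images of strictly nested subcontinua are strictly nested. -/
def HereditarilyIrreducible {D X : Type*} [TopologicalSpace D] (g : D → X) : Prop :=
  ∀ A B : Set D, IsSubcontinuum A → IsSubcontinuum B → A ⊂ B → g '' A ⊂ g '' B

/-- Irreducible: no proper subcontinuum of the domain maps onto everything. -/
def IrreducibleMap {D X : Type*} [TopologicalSpace D] (g : D → X) : Prop :=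
  ∀ K : Set D, IsSubcontinuum K → K ≠ Set.univ → g '' K ≠ Set.univ

/-- Almost injective: the points of injectivity are dense in the domain. -/
def AlmostInjective {D X : Type*} [TopologicalSpace D] (g : D → X) : Prop :=
  Dense {x : D | ∀ y : D, g y = g x → y = x}


open Function

noncomputable section Helpers

/-- the affine order iso `x ↦ k * x + m`. -/
noncomputable def affIso (k m : ℝ) (hk : 0 < k) : ℝ ≃o ℝ :=
  (OrderIso.mulLeft₀ k hk).trans (OrderIso.addRight m)

lemma affIso_apply (k m : ℝ) (hk : 0 < k) (x : ℝ) : affIso k m hk x = k * x + m := rfl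

/-- Any two open intervals are homeomorphic. -/
noncomputable def iooHomeo (a b : ℝ) (h : a < b) : ↥(Ioo (0:ℝ) 1) ≃ₜ ↥(Ioo a b) := by
  refine ((affIso (b-a) a (by linarith)).toHomeomorph.image (Ioo 0 1)).trans
    (Homeomorph.setCongr ?_)
  rw [show ⇑(affIso (b-a) a (by linarith : (0:ℝ) < b - a)).toHomeomorph
      = ⇑(affIso (b-a) a (by linarith)) from rfl]
  rw [OrderIso.image_Ioo]
  simp [affIso_apply]

noncomputable def rHomeo01 : ℝ ≃ₜ ↥(Ioo (0:ℝ) 1) :=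
  (orderIsoIooNegOneOne ℝ).toHomeomorph.trans (iooHomeo (-1) 1 (by norm_num)).symm

/-- the standard strictly monotone map `ℝ → ℝ` with range `(-1, 1)`. -/
noncomputable def s0 : ℝ → ℝ := fun t => ((orderIsoIooNegOneOne ℝ) t : ℝ)

lemma s0_strictMono : StrictMono s0 := fun a b hab => by
  simpa [s0] using (orderIsoIooNegOneOne ℝ).strictMono hab

lemma s0_mem (t : ℝ) : s0 t ∈ Ioo (-1:ℝ) 1 := ((orderIsoIooNegOneOne ℝ) t).2

lemma s0_range : range s0 = Ioo (-1:ℝ) 1 := by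
  apply Set.eq_of_subset_of_subset
  · rintro _ ⟨t, rfl⟩; exact s0_mem t
  · rintro y hy
    exact ⟨(orderIsoIooNegOneOne ℝ).symm ⟨y, hy⟩, by simp [s0]⟩

lemma s0_image_Ioi (a : ℝ) : s0 '' Ioi a = Ioo (s0 a) 1 := by
  apply Set.eq_of_subset_of_subset
  · rintro _ ⟨t, ht, rfl⟩; exact ⟨s0_strictMono ht, (s0_mem t).2⟩
  · rintro y ⟨h1, h2⟩
    have hy : y ∈ Ioo (-1:ℝ) 1 := ⟨lt_trans (s0_mem a).1 h1, h2⟩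
    obtain ⟨t, rfl⟩ : y ∈ range s0 := s0_range ▸ hy
    exact ⟨t, s0_strictMono.lt_iff_lt.mp h1, rfl⟩

lemma s0_image_Iio (a : ℝ) : s0 '' Iio a = Ioo (-1) (s0 a) := by
  apply Set.eq_of_subset_of_subset
  · rintro _ ⟨t, ht, rfl⟩; exact ⟨(s0_mem t).1, s0_strictMono ht⟩
  · rintro y ⟨h1, h2⟩
    have hy : y ∈ Ioo (-1:ℝ) 1 := ⟨h1, lt_trans h2 (s0_mem a).2⟩
    obtain ⟨t, rfl⟩ : y ∈ range s0 := s0_range ▸ hy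
    exact ⟨t, s0_strictMono.lt_iff_lt.mp h2, rfl⟩

lemma s0_image_Iic (a : ℝ) : s0 '' Iic a = Ioc (-1) (s0 a) := by
  apply Set.eq_of_subset_of_subset
  · rintro _ ⟨t, ht, rfl⟩; exact ⟨(s0_mem t).1, s0_strictMono.monotone ht⟩
  · rintro y ⟨h1, h2⟩
    have hy : y ∈ Ioo (-1:ℝ) 1 := ⟨h1, lt_of_le_of_lt h2 (s0_mem a).2⟩
    obtain ⟨t, rfl⟩ : y ∈ range s0 := s0_range ▸ hy
    exact ⟨t, s0_strictMono.le_iff_le.mp h2, rfl⟩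

/-- A strictly monotone real function with open-interval range is continuous and open. -/
lemma strictMono_interval_cont {f : ℝ → ℝ} {A B : ℝ} (hm : StrictMono f)
    (hr : range f = Ioo A B) : Continuous f ∧ IsOpenMap f := by
  have hmem : ∀ x, f x ∈ Ioo A B := fun x => hr ▸ mem_range_self x
  set F : ℝ → ↥(Ioo A B) := fun x => ⟨f x, hmem x⟩ with hF
  have hFm : StrictMono F := fun a b hab => by
    simp only [hF, Subtype.mk_lt_mk]; exact hm hab
  have hFs : Function.Surjective F := by
    rintro ⟨y, hy⟩
    obtain ⟨x, hx⟩ : y ∈ range f := hr ▸ hy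
    exact ⟨x, by simp [hF, hx]⟩
  obtain ⟨hiso, hcoe⟩ : ∃ e : ℝ ≃o ↥(Ioo A B), ⇑e = F :=
    ⟨_, StrictMono.coe_orderIsoOfSurjective F hFm hFs⟩
  have hfeq : f = (Subtype.val : ↥(Ioo A B) → ℝ) ∘ F := rfl
  constructor
  · rw [hfeq, ← hcoe]
    exact continuous_subtype_val.comp hiso.continuous
  · rw [hfeq, ← hcoe]
    exact (isOpen_Ioo.isOpenMap_subtype_val).comp hiso.toHomeomorph.isOpenMap

lemma s0_continuous : Continuous s0 := (strictMono_interval_cont s0_strictMono s0_range).1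
lemma s0_isOpenMap : IsOpenMap s0 := (strictMono_interval_cont s0_strictMono s0_range).2


section ArcParam

variable {X : Type*} [TopologicalSpace X]


/-- parametrize an open set homeomorphic to an interval by an open embedding of `ℝ`. -/
lemma exists_param {e : Set X} (hop : IsOpen e) (hne : Nonempty (e ≃ₜ Set.Ioo (0:ℝ) 1)) :
    ∃ f : ℝ → X, IsOpenEmbedding f ∧ range f = e := by
  obtain ⟨h⟩ := hne
  refine ⟨(Subtype.val : ↥e → X) ∘ (h.symm.trans (Homeomorph.refl _)).toEquiv ∘ ⇑rHomeo01, ?_, ?_⟩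
  · exact hop.isOpenEmbedding_subtypeVal.comp
      ((h.symm.trans (Homeomorph.refl _)).isOpenEmbedding.comp rHomeo01.isOpenEmbedding)
  · rw [range_comp, range_comp]
    simp [Subtype.range_coe]

end ArcParam

section HalfLine

/-- If the connected component of `t₀` in `W` is `A`, then no closure point of `A`
outside `A` can belong to `W`. -/
lemma not_mem_of_component {W A : Set ℝ} (hW : IsOpen W) {t₀ : ℝ} (ht₀ : t₀ ∈ W)
    (hA : connectedComponentIn W t₀ = A) {y : ℝ} (hyA : y ∉ A) (hy : y ∈ closure A) :
    y ∉ W := by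
  intro hyW
  obtain ⟨δ, hδ, hball⟩ := Metric.isOpen_iff.mp hW y hyW
  have hIoo : Ioo (y - δ) (y + δ) ⊆ W := by
    rw [← Real.ball_eq_Ioo]; exact hball
  obtain ⟨z, hzA, hzd⟩ := Metric.mem_closure_iff.mp hy δ hδ
  have hzI : z ∈ Ioo (y - δ) (y + δ) := by
    rw [← Real.ball_eq_Ioo, Metric.mem_ball, dist_comm]; exact hzd
  have hApre : IsPreconnected A := hA ▸ isPreconnected_connectedComponentIn
  have hCpre : IsPreconnected (A ∪ Ioo (y - δ) (y + δ)) :=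
    hApre.union z hzA hzI isPreconnected_Ioo
  have hCW : A ∪ Ioo (y - δ) (y + δ) ⊆ W :=
    union_subset (hA ▸ connectedComponentIn_subset W t₀) hIoo
  have ht₀A : t₀ ∈ A := hA ▸ mem_connectedComponentIn ht₀
  have := hCpre.subset_connectedComponentIn (Or.inl ht₀A) hCW
  rw [hA] at this
  exact hyA (this (Or.inr (by rw [← Real.ball_eq_Ioo]; exact Metric.mem_ball_self hδ)))

variable {X : Type*} [TopologicalSpace X] [T2Space X]

/-- Key lemma: if a connected open set `U` contains `f t` but is not contained in the
arc `range f`, then `U` swallows one of the two halves of the arc at `t`. -/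
lemma halfline {f : ℝ → X} (hf : IsOpenEmbedding f) {U : Set X} (hU : IsOpen U)
    (hUc : IsPreconnected U) {t : ℝ} (ht : f t ∈ U) (hns : ¬ U ⊆ range f) :
    f '' (Ioi t) ⊆ U ∨ f '' (Iio t) ⊆ U := by
  set W : Set ℝ := f ⁻¹' U with hWdef
  have hWopen : IsOpen W := hU.preimage hf.continuous
  have htW : t ∈ W := ht
  set I : Set ℝ := connectedComponentIn W t with hIdef
  have hIp : IsPreconnected I := isPreconnected_connectedComponentIn
  have hIW : I ⊆ W := connectedComponentIn_subset W t
  have hIopen : IsOpen I := hWopen.connectedComponentIn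
  have htI : t ∈ I := mem_connectedComponentIn htW
  suffices hsuff : Ioi t ⊆ I ∨ Iio t ⊆ I by
    rcases hsuff with h | h
    · exact Or.inl (((image_mono (f := f) h).trans (image_mono (f := f) hIW)).trans
        (image_preimage_subset f U))
    · exact Or.inr (((image_mono (f := f) h).trans (image_mono (f := f) hIW)).trans
        (image_preimage_subset f U))
  by_contra hcon
  push_neg at hcon
  obtain ⟨hnot1, hnot2⟩ := hcon
  obtain ⟨q, hq, hqI⟩ := not_subset.mp hnot1
  obtain ⟨p, hp, hpI⟩ := not_subset.mp hnot2
  have hIord : OrdConnected I := hIp.ordConnected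
  have hIbd : I ⊆ Ioo p q := by
    intro z hz
    constructor
    · by_contra hle
      push_neg at hle
      exact hpI (hIord.out hz htI ⟨hle, le_of_lt hp⟩)
    · by_contra hle
      push_neg at hle
      exact hqI (hIord.out htI hz ⟨le_of_lt hq, hle⟩)
  have hbdd : BddAbove I := ⟨q, fun z hz => (hIbd hz).2.le⟩
  have hbddb : BddBelow I := ⟨p, fun z hz => (hIbd hz).1.le⟩
  have hne : I.Nonempty := ⟨t, htI⟩
  set a' := sInf I
  set b' := sSup I
  have hb'I : b' ∉ I := by
    intro hb'
    obtain ⟨ε, hε, hball⟩ := Metric.isOpen_iff.mp hIopen b' hb'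
    have : b' + ε/2 ∈ I := hball (by
      rw [Metric.mem_ball, Real.dist_eq, show b' + ε/2 - b' = ε/2 by ring,
        abs_of_pos (by linarith)]
      linarith)
    have := le_csSup hbdd this
    linarith
  have ha'I : a' ∉ I := by
    intro ha'
    obtain ⟨ε, hε, hball⟩ := Metric.isOpen_iff.mp hIopen a' ha'
    have : a' - ε/2 ∈ I := hball (by
      rw [Metric.mem_ball, Real.dist_eq, show a' - ε/2 - a' = -(ε/2) by ring, abs_neg,
        abs_of_pos (by linarith)]
      linarith)
    have := csInf_le hbddb this
    linarith
  have hIoo : I = Ioo a' b' := by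
    ext z
    constructor
    · intro hz
      constructor
      · exact lt_of_le_of_ne (csInf_le hbddb hz) (fun h => ha'I (h ▸ hz))
      · exact lt_of_le_of_ne (le_csSup hbdd hz) (fun h => hb'I (h ▸ hz))
    · intro hz
      obtain ⟨i, hiI, hiz⟩ := exists_lt_of_csInf_lt hne hz.1
      obtain ⟨j, hjI, hzj⟩ := exists_lt_of_lt_csSup hne hz.2
      exact hIord.out hiI hjI ⟨hiz.le, hzj.le⟩
  have ha'b' : a' < b' := by
    have h2 := htI
    rw [hIoo] at h2
    exact lt_trans h2.1 h2.2
  have hfb'U : f b' ∉ U := not_mem_of_component hWopen htW (hIdef.symm.trans hIoo)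
    (by simp) (by rw [closure_Ioo (ne_of_lt ha'b')]; exact ⟨le_of_lt ha'b', le_refl _⟩)
  have hfa'U : f a' ∉ U := not_mem_of_component hWopen htW (hIdef.symm.trans hIoo)
    (by simp) (by rw [closure_Ioo (ne_of_lt ha'b')]; exact ⟨le_refl _, le_of_lt ha'b'⟩)
  set K := f '' I with hKdef
  have hKU : K ⊆ U := (image_mono (f := f) hIW).trans (image_preimage_subset f U)
  have hclos : closure K ∩ U ⊆ K := by
    have h1 : closure K ⊆ f '' Icc a' b' :=
      closure_minimal (image_mono (f := f) (hIoo ▸ Ioo_subset_Icc_self))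
        ((isCompact_Icc.image hf.continuous).isClosed)
    rintro z ⟨hz1, hz2⟩
    obtain ⟨w, hw, rfl⟩ := h1 hz1
    have hwa : w ≠ a' := fun h => hfa'U (h ▸ hz2)
    have hwb : w ≠ b' := fun h => hfb'U (h ▸ hz2)
    exact mem_image_of_mem f (hIoo ▸ (⟨lt_of_le_of_ne hw.1 (Ne.symm hwa), lt_of_le_of_ne hw.2 hwb⟩ : w ∈ Ioo a' b'))
  have hKopen : IsOpen K := hf.isOpenMap _ hIopen
  have hV₂ : IsOpen (closure K)ᶜ := isClosed_closure.isOpen_compl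
  have hcover : U ⊆ K ∪ (closure K)ᶜ := by
    intro x hx
    by_cases hxc : x ∈ closure K
    · exact Or.inl (hclos ⟨hxc, hx⟩)
    · exact Or.inr hxc
  have hK1 : (U ∩ K).Nonempty := ⟨f t, ht, mem_image_of_mem f htI⟩
  by_cases hV2ne : (U ∩ (closure K)ᶜ).Nonempty
  · obtain ⟨z, hz⟩ := hUc K (closure K)ᶜ hKopen hV₂ hcover hK1 hV2ne
    exact hz.2.2 (subset_closure hz.2.1)
  · apply hns
    intro x hx
    have hxK : x ∈ K := by
      rcases hcover hx with h | h
      · exact h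
      · exact absurd ⟨x, hx, h⟩ hV2ne
    obtain ⟨w, _, rfl⟩ := hxK
    exact mem_range_self w

end HalfLine

section ZeroSeq

variable {X : Type*} [MetricSpace X]

lemma mid_data {f : ℝ → X} (hf : IsOpenEmbedding f) {u v : X}
    (hu : u ∈ range f) (hv : v ∈ range f) {ε : ℝ} (hε : 0 < ε) (hd : ε < dist u v) :
    ∃ t, (∃ w ∈ f '' (Ioi t), ε/2 ≤ dist (f t) w) ∧ (∃ w ∈ f '' (Iio t), ε/2 ≤ dist (f t) w) := by
  have key : ∀ x y : ℝ, x < y → ε < dist (f x) (f y) →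
      ∃ t, (∃ w ∈ f '' (Ioi t), ε/2 ≤ dist (f t) w) ∧
        (∃ w ∈ f '' (Iio t), ε/2 ≤ dist (f t) w) := by
    intro x y hxy hdxy
    have hcont : ContinuousOn (fun s => dist (f x) (f s)) (Icc x y) :=
      (continuous_const.dist hf.continuous).continuousOn
    have hmem : ε/2 ∈ Icc (dist (f x) (f x)) (dist (f x) (f y)) := by
      rw [dist_self]
      exact ⟨by linarith, by linarith⟩
    obtain ⟨s, hs, hds⟩ := intermediate_value_Icc (le_of_lt hxy) hcont hmem
    have hds' : dist (f x) (f s) = ε/2 := hds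
    have hsx : x < s := by
      rcases lt_or_eq_of_le hs.1 with h | h
      · exact h
      · exfalso; rw [← h, dist_self] at hds'; linarith
    have hsy : s < y := by
      rcases lt_or_eq_of_le hs.2 with h | h
      · exact h
      · exfalso; rw [h] at hds'; linarith
    refine ⟨s, ⟨f y, ⟨y, hsy, rfl⟩, ?_⟩, ⟨f x, ⟨x, hsx, rfl⟩, ?_⟩⟩
    · have := dist_triangle (f x) (f s) (f y)
      linarith
    · rw [dist_comm, hds']
  obtain ⟨tu, rfl⟩ := hu
  obtain ⟨tv, rfl⟩ := hv
  have hne : tu ≠ tv := by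
    intro h
    rw [h, dist_self] at hd
    linarith
  rcases lt_or_gt_of_ne hne with h | h
  · exact key tu tv h hd
  · exact key tv tu h (by rwa [dist_comm])

lemma two_far {s : Set X} {ε : ℝ} (hε : 0 ≤ ε) (hd : ε < Metric.diam s) :
    ∃ u ∈ s, ∃ v ∈ s, ε < dist u v := by
  by_contra h
  push_neg at h
  exact absurd (Metric.diam_le_of_forall_dist_le hε h) (not_le.mpr hd)

theorem arcs_finite [CompactSpace X] [LocallyConnectedSpace X]
    (hdisj : ∀ e e' : Set X, IsFreeArc e → IsFreeArc e' → e ≠ e' → Disjoint e e')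
    {ε : ℝ} (hε : 0 < ε) : {e : Set X | IsFreeArc e ∧ ε < Metric.diam e}.Finite := by
  by_contra hinf
  have hSinf : {e : Set X | IsFreeArc e ∧ ε < Metric.diam e}.Infinite := hinf
  set η := hSinf.natEmbedding with hη
  set E : ℕ → Set X := fun n => (η n : Set X) with hEdef
  have hE : ∀ n, IsFreeArc (E n) ∧ ε < Metric.diam (E n) := fun n => (η n).2
  have hEinj : ∀ m n, E m = E n → m = n := by
    intro m n h
    exact η.injective (Subtype.ext h)
  choose f hf hrange using fun n => exists_param (hE n).1.1 (hE n).1.2.1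
  have hdata : ∀ n, ∃ t, (∃ w ∈ f n '' (Ioi t), ε/2 ≤ dist (f n t) w) ∧
      (∃ w ∈ f n '' (Iio t), ε/2 ≤ dist (f n t) w) := by
    intro n
    obtain ⟨u, hu, v, hv, huv⟩ := two_far (le_of_lt hε) (hE n).2
    exact mid_data (hf n) ((hrange n).symm ▸ hu) ((hrange n).symm ▸ hv) hε huv
  choose t ht1 ht2 using hdata
  set p : ℕ → X := fun n => f n (t n) with hp
  obtain ⟨x, -, φ, hφ, htend⟩ := isCompact_univ.tendsto_subseq (fun n => mem_univ (p n))
  set U := connectedComponentIn (Metric.ball x (ε/5)) x with hU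
  have hUopen : IsOpen U := Metric.isOpen_ball.connectedComponentIn
  have hxball : x ∈ Metric.ball x (ε/5) := Metric.mem_ball_self (by linarith)
  have hxU : x ∈ U := mem_connectedComponentIn hxball
  have hUball : U ⊆ Metric.ball x (ε/5) := connectedComponentIn_subset _ _
  have hUpre : IsPreconnected U := isPreconnected_connectedComponentIn
  have hUbd : Bornology.IsBounded U := Metric.isBounded_ball.subset hUball
  have hUdiam : Metric.diam U ≤ 2 * (ε/5) :=
    le_trans (Metric.diam_mono hUball Metric.isBounded_ball) (Metric.diam_ball (by linarith))
  obtain ⟨N, hN⟩ := Filter.eventually_atTop.mp (htend.eventually_mem (hUopen.mem_nhds hxU))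
  set i := φ N with hi
  set j := φ (N + 1) with hj
  have hpiU : p i ∈ U := hN N le_rfl
  have hpjU : p j ∈ U := hN (N + 1) (by omega)
  have hij : i ≠ j := fun h => by
    have := hφ.injective h
    omega
  have hEij : E i ≠ E j := fun h => hij (hEinj _ _ h)
  have hdj : Disjoint (E i) (E j) := hdisj _ _ (hE i).1 (hE j).1 hEij
  have hns : ¬ U ⊆ range (f i) := by
    intro hsub
    rw [hrange i] at hsub
    have hpjEj : p j ∈ E j := by
      rw [← hrange j]; exact mem_range_self _
    exact Set.disjoint_left.mp hdj (hsub hpjU) hpjEj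
  have hd2 : ∀ w ∈ U, ε/2 ≤ dist (p i) w → False := by
    intro w hw hdw
    have := Metric.dist_le_diam_of_mem hUbd hpiU hw
    linarith
  rcases halfline (hf i) hUopen hUpre hpiU hns with hcase | hcase
  · obtain ⟨w, hw1, hw2⟩ := ht1 i
    exact hd2 w (hcase hw1) hw2
  · obtain ⟨w, hw1, hw2⟩ := ht2 i
    exact hd2 w (hcase hw1) hw2

theorem arcs_countable [CompactSpace X]
    (hfin : ∀ ε : ℝ, 0 < ε → {e : Set X | IsFreeArc e ∧ ε < Metric.diam e}.Finite) :
    {e : Set X | IsFreeArc e}.Countable := by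
  have hsub : {e : Set X | IsFreeArc e} ⊆
      ⋃ n : ℕ, {e : Set X | IsFreeArc e ∧ 1/(n+1 : ℝ) < Metric.diam e} := by
    intro e he
    obtain ⟨h⟩ := he.2.1
    set a := h.symm ⟨1/4, by norm_num⟩ with ha
    set b := h.symm ⟨1/2, by norm_num⟩ with hb
    have hab : (a : X) ≠ (b : X) := by
      intro hcon
      have : a = b := Subtype.coe_injective hcon
      have := h.symm.injective this
      rw [Subtype.mk.injEq] at this
      norm_num at this
    have hdpos : 0 < dist (a : X) (b : X) := dist_pos.mpr hab
    have hdle : dist (a : X) (b : X) ≤ Metric.diam e :=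
      Metric.dist_le_diam_of_mem (isCompact_univ.isBounded.subset (subset_univ e)) a.2 b.2
    obtain ⟨n, hn⟩ := exists_nat_one_div_lt hdpos
    exact mem_iUnion.mpr ⟨n, he, lt_of_lt_of_le (by exact_mod_cast hn) hdle⟩
  refine Set.Countable.mono hsub (countable_iUnion fun n : ℕ => ?_)
  exact (hfin _ (by positivity)).countable

end ZeroSeq

section Transition

lemma mono_image_Ioi {h : ℝ → ℝ} (hm : StrictMono h) {B : ℝ} (hr : range h = Iio B) (a : ℝ) :
    h '' (Ioi a) = Ioo (h a) B := by
  apply Set.eq_of_subset_of_subset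
  · rintro _ ⟨t, ht, rfl⟩
    exact ⟨hm ht, by rw [← mem_Iio, ← hr]; exact mem_range_self t⟩
  · rintro y ⟨h1, h2⟩
    obtain ⟨t, rfl⟩ : y ∈ range h := by rw [hr]; exact h2
    exact ⟨t, hm.lt_iff_lt.mp h1, rfl⟩

variable {X : Type*} [TopologicalSpace X] [T2Space X]

lemma closure_im {f : ℝ → X} (hfc : Continuous f) {T : Set ℝ} {u v : ℝ} (hT : T ⊆ Icc u v) :
    closure (f '' T) ⊆ f '' Icc u v :=
  closure_minimal (image_mono (f := f) hT) ((isCompact_Icc.image hfc).isClosed)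

/-- The transition map between two overlapping arcs, when the overlap is a common
end-piece: it is an increasing reparametrization. -/
lemma transition {f f' : ℝ → X} (hf : IsOpenEmbedding f) (hf' : IsOpenEmbedding f') {b c : ℝ}
    (hP : f '' (Iio b) = f' '' (Ioi c)) (hfb : f b ∉ range f') :
    ∃ g : ℝ → ℝ, (∀ s ∈ Ioi c, f (g s) = f' s) ∧ StrictMonoOn g (Ioi c) ∧ g '' (Ioi c) = Iio b := by
  classical
  set μ : ℝ → ℝ := fun t => b - Real.exp (-t) with hμ
  set ν : ℝ → ℝ := fun s => c + Real.exp s with hν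
  have hμmono : StrictMono μ := by
    intro s t hst
    have := Real.exp_lt_exp.mpr (neg_lt_neg hst)
    simp only [hμ]
    linarith
  have hμrange : range μ = Iio b := by
    ext y
    simp only [hμ, mem_range, mem_Iio]
    constructor
    · rintro ⟨t, rfl⟩; have := Real.exp_pos (-t); linarith
    · intro hy
      exact ⟨-Real.log (b - y), by rw [neg_neg, Real.exp_log (by linarith)]; ring⟩
  have hνmono : StrictMono ν := fun s t hst => by
    simp only [hν]
    linarith [Real.exp_lt_exp.mpr hst]
  have hνmem : ∀ s, ν s ∈ Ioi c := fun s => by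
    simp only [hν, mem_Ioi]
    linarith [Real.exp_pos s]
  have hμcont : Continuous μ := continuous_const.sub (Real.continuous_exp.comp continuous_neg)
  have hμb : ∀ t, μ t < b := fun t => by rw [← mem_Iio, ← hμrange]; exact mem_range_self t
  set Finv := Function.invFun f' with hFinvdef
  have hsect : ∀ y ∈ range f', f' (Finv y) = y := fun y hy => Function.invFun_eq hy
  have hlinv : ∀ s, Finv (f' s) = s := fun s => Function.leftInverse_invFun hf'.injective s
  have hmem : ∀ t, f (μ t) ∈ f' '' (Ioi c) := fun t =>
    hP ▸ mem_image_of_mem f (show μ t ∈ Iio b from hμrange ▸ mem_range_self t)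
  set G : ℝ → ℝ := fun t => Real.log (Finv (f (μ t)) - c) with hG
  have hGpos : ∀ t, c < Finv (f (μ t)) := by
    intro t
    obtain ⟨s, hs, hfs⟩ := hmem t
    rw [← hfs, hlinv]
    exact hs
  have hGkey : ∀ t, ν (G t) = Finv (f (μ t)) := by
    intro t
    simp only [hG, hν]
    rw [Real.exp_log (by linarith [hGpos t])]
    ring
  have hGkey2 : ∀ t, f' (ν (G t)) = f (μ t) := by
    intro t
    rw [hGkey t]
    exact hsect _ (image_subset_range f' (Ioi c) (hmem t))
  have hGcont : Continuous G := by
    have hk : Continuous fun t => (⟨f (μ t), image_subset_range f' (Ioi c) (hmem t)⟩ : ↥(range f')) :=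
      Continuous.subtype_mk (hf.continuous.comp hμcont) _
    have h1 : Continuous fun t => Finv (f (μ t)) := by
      have hkey : ∀ z : ↥(range f'), f' ((hf'.isEmbedding.toHomeomorph).symm z) = (z : X) := by
        intro z
        have h := (hf'.isEmbedding.toHomeomorph).apply_symm_apply z
        calc f' ((hf'.isEmbedding.toHomeomorph).symm z)
            = (((hf'.isEmbedding.toHomeomorph)
                ((hf'.isEmbedding.toHomeomorph).symm z)) : X) := rfl
          _ = (z : X) := by rw [h]
      have heq : (fun t => Finv (f (μ t))) = fun t =>
          ((hf'.isEmbedding.toHomeomorph).symm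
            ⟨f (μ t), image_subset_range f' (Ioi c) (hmem t)⟩) := by
        funext t
        apply hf'.injective
        rw [hsect _ (image_subset_range f' (Ioi c) (hmem t)), hkey]
      rw [heq]
      exact (hf'.isEmbedding.toHomeomorph).symm.continuous.comp hk
    exact (h1.sub continuous_const).log (fun t => (sub_pos.mpr (hGpos t)).ne')
  have hGinj : Function.Injective G := by
    intro t t' h
    have : f (μ t) = f (μ t') := by
      rw [← hGkey2 t, ← hGkey2 t', h]
    exact hμmono.injective (hf.injective this)
  have hGsurj : Function.Surjective G := by
    intro y
    have : f' (ν y) ∈ f '' (Iio b) := by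
      rw [hP]
      exact mem_image_of_mem f' (hνmem y)
    obtain ⟨w, hw, hfw⟩ := this
    obtain ⟨t, rfl⟩ : w ∈ range μ := hμrange ▸ hw
    refine ⟨t, hνmono.injective (hf'.injective ?_)⟩
    rw [hGkey2 t, hfw]
  rcases Continuous.strictMono_of_inj hGcont hGinj with hmono | hanti
  · -- increasing case: build g
    set giso := StrictMono.orderIsoOfSurjective G hmono hGsurj with hgiso
    have hgisoc : ⇑giso = G := StrictMono.coe_orderIsoOfSurjective G hmono hGsurj
    set g : ℝ → ℝ := fun s => μ (giso.symm (Real.log (s - c))) with hg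
    have hgkey : ∀ s ∈ Ioi c, f (g s) = f' s := by
      intro s hs
      have h1 : G (giso.symm (Real.log (s - c))) = Real.log (s - c) := by
        rw [← hgisoc]
        exact giso.apply_symm_apply _
      have := hGkey2 (giso.symm (Real.log (s - c)))
      rw [h1] at this
      rw [hg, ← this]
      simp only [hν]
      rw [Real.exp_log (by simp only [mem_Ioi] at hs; linarith)]
      ring_nf
    refine ⟨g, hgkey, ?_, ?_⟩
    · intro s hs s' hs' hss'
      apply hμmono
      apply giso.symm.strictMono
      exact Real.log_lt_log (by simp only [mem_Ioi] at hs; linarith) (by linarith)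
    · apply Set.eq_of_subset_of_subset
      · rintro _ ⟨s, hs, rfl⟩
        rw [← hμrange]
        exact mem_range_self _
      · intro y hy
        obtain ⟨t, rfl⟩ : y ∈ range μ := hμrange ▸ hy
        refine ⟨ν (G t), hνmem _, ?_⟩
        simp only [hg, hν]
        rw [show c + Real.exp (G t) - c = Real.exp (G t) by ring, Real.log_exp, ← hgisoc,
          giso.symm_apply_apply]
  · -- decreasing case: contradiction
    exfalso
    apply hfb
    have h1 : f b ∈ closure (f '' (Ioo (μ 0) b)) := by
      have hb : b ∈ closure (Ioo (μ 0) b) := by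
        rw [closure_Ioo (ne_of_lt (hμb 0))]
        exact ⟨le_of_lt (hμb 0), le_refl _⟩
      exact image_closure_subset_closure_image hf.continuous (mem_image_of_mem f hb)
    have h2 : f '' (Ioo (μ 0) b) ⊆ f' '' (Icc c (ν (G 0))) := by
      rw [← mono_image_Ioi hμmono hμrange 0]
      rintro _ ⟨_, ⟨t, ht, rfl⟩, rfl⟩
      rw [← hGkey2 t]
      apply mem_image_of_mem
      exact ⟨le_of_lt (hνmem _), le_of_lt (hνmono (hanti ht))⟩
    have h3 : closure (f '' (Ioo (μ 0) b)) ⊆ f' '' (Icc c (ν (G 0))) := by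
      have : f '' (Ioo (μ 0) b) ⊆ f' '' (Icc c (ν (G 0))) := h2
      exact closure_minimal this ((isCompact_Icc.image hf'.continuous).isClosed)
    exact image_subset_range f' _ (h3 h1)

end Transition

section Classify

lemma no_min {A : Set ℝ} (hA : IsOpen A) {y : ℝ} (hy : y ∈ A) (hmin : ∀ z ∈ A, y ≤ z) :
    False := by
  obtain ⟨δ, hδ, hball⟩ := Metric.isOpen_iff.mp hA y hy
  have : y - δ/2 ∈ A := hball (by
    rw [Metric.mem_ball, Real.dist_eq, show y - δ/2 - y = -(δ/2) by ring, abs_neg,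
      abs_of_pos (by linarith)]
    linarith)
  linarith [hmin _ this]

lemma no_max {A : Set ℝ} (hA : IsOpen A) {y : ℝ} (hy : y ∈ A) (hmax : ∀ z ∈ A, z ≤ y) :
    False := by
  obtain ⟨δ, hδ, hball⟩ := Metric.isOpen_iff.mp hA y hy
  have : y + δ/2 ∈ A := hball (by
    rw [Metric.mem_ball, Real.dist_eq, show y + δ/2 - y = δ/2 by ring,
      abs_of_pos (by linarith)]
    linarith)
  linarith [hmax _ this]

lemma open_conn_real {A : Set ℝ} (hA : IsOpen A) (hc : IsPreconnected A) (hne : A.Nonempty) :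
    A = univ ∨ (∃ b, A = Iio b) ∨ (∃ a, A = Ioi a) ∨ (∃ a b, a < b ∧ A = Ioo a b) := by
  have h := hc.mem_intervals
  simp only [mem_insert_iff, mem_singleton_iff] at h
  set u := sInf A with hu
  set v := sSup A with hv
  rcases h with h|h|h|h|h|h|h|h|h|h
  · -- Icc
    exfalso
    have huv : u ≤ v := nonempty_Icc.mp (h ▸ hne)
    refine no_min hA (y := u) (by rw [h]; exact left_mem_Icc.mpr huv) ?_
    intro z hz; rw [h] at hz; exact hz.1
  · -- Ico
    exfalso
    have huv : u < v := nonempty_Ico.mp (h ▸ hne)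
    refine no_min hA (y := u) (by rw [h]; exact left_mem_Ico.mpr huv) ?_
    intro z hz; rw [h] at hz; exact hz.1
  · -- Ioc
    exfalso
    have huv : u < v := nonempty_Ioc.mp (h ▸ hne)
    refine no_max hA (y := v) (by rw [h]; exact right_mem_Ioc.mpr huv) ?_
    intro z hz; rw [h] at hz; exact hz.2
  · right; right; right
    exact ⟨_, _, nonempty_Ioo.mp (h ▸ hne), h⟩
  · -- Ici
    exfalso
    refine no_min hA (y := u) (by rw [h]; exact self_mem_Ici) ?_
    intro z hz; rw [h] at hz; exact hz
  · right; right; left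
    exact ⟨_, h⟩
  · -- Iic
    exfalso
    refine no_max hA (y := v) (by rw [h]; exact self_mem_Iic) ?_
    intro z hz; rw [h] at hz; exact hz
  · right; left
    exact ⟨_, h⟩
  · left; exact h
  · exact absurd (h ▸ hne) (Set.not_nonempty_empty)

end Classify

section CompPreimage

variable {X : Type*} [TopologicalSpace X]

lemma preimage_preconn {f : ℝ → X} (hf : IsOpenEmbedding f) {S : Set X}
    (hS : S ⊆ range f) (hSp : IsPreconnected S) : IsPreconnected (f ⁻¹' S) := by
  apply hf.isEmbedding.isInducing.isPreconnected_image.mp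
  rwa [image_preimage_eq_of_subset hS]

lemma comp_preimage {f : ℝ → X} (hf : IsOpenEmbedding f) {V : Set X} (hV : V ⊆ range f)
    {x : X} (hx : x ∈ V) {t₀ : ℝ} (ht₀ : f t₀ = x) :
    f ⁻¹' (connectedComponentIn V x) = connectedComponentIn (f ⁻¹' V) t₀ := by
  have ht₀V : t₀ ∈ f ⁻¹' V := by rw [mem_preimage, ht₀]; exact hx
  apply Subset.antisymm
  · have hPp : IsPreconnected (f ⁻¹' (connectedComponentIn V x)) :=
      preimage_preconn hf ((connectedComponentIn_subset V x).trans hV)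
        isPreconnected_connectedComponentIn
    apply hPp.subset_connectedComponentIn
    · rw [mem_preimage, ht₀]
      exact mem_connectedComponentIn hx
    · exact preimage_mono (connectedComponentIn_subset V x)
  · intro t htm
    have himg : f '' (connectedComponentIn (f ⁻¹' V) t₀) ⊆ connectedComponentIn V x := by
      apply IsPreconnected.subset_connectedComponentIn
        (isPreconnected_connectedComponentIn.image f hf.continuous.continuousOn)
      · exact ⟨t₀, mem_connectedComponentIn ht₀V, ht₀⟩
      · exact (image_mono (f := f) (connectedComponentIn_subset _ _)).trans
          (image_preimage_subset f V)
    exact himg (mem_image_of_mem f htm)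

end CompPreimage

section BuildArc

variable {X : Type*} [TopologicalSpace X]

lemma hom_key {f : ℝ → X} (hf : IsOpenEmbedding f) (z : ↥(range f)) :
    f ((hf.isEmbedding.toHomeomorph).symm z) = (z : X) := by
  have h := (hf.isEmbedding.toHomeomorph).apply_symm_apply z
  calc f ((hf.isEmbedding.toHomeomorph).symm z)
      = (((hf.isEmbedding.toHomeomorph)
          ((hf.isEmbedding.toHomeomorph).symm z)) : X) := rfl
    _ = (z : X) := by rw [h]

lemma invFun_continuousOn {f : ℝ → X} (hf : IsOpenEmbedding f) :
    ContinuousOn (Function.invFun f) (range f) := by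
  rw [continuousOn_iff_continuous_restrict]
  have heq : (range f).domRestrict (Function.invFun f) =
      ⇑(hf.isEmbedding.toHomeomorph).symm := by
    funext z
    apply hf.injective
    rw [hom_key hf z]
    exact Function.invFun_eq z.2
  rw [heq]
  exact (hf.isEmbedding.toHomeomorph).symm.continuous

lemma build_arc {f f' : ℝ → X} (hf : IsOpenEmbedding f) (hf' : IsOpenEmbedding f')
    {b c : ℝ} (hVeq : range f ∩ range f' = f' '' (Ioi c))
    {g₁ : ℝ → ℝ} (hg₁ : ∀ s ∈ Ioi c, f (g₁ s) = f' s) (hg₁m : StrictMonoOn g₁ (Ioi c))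
    (hg₁im : g₁ '' (Ioi c) = Iio b) :
    Nonempty (↥(range f ∪ range f') ≃ₜ ↥(Ioo (0:ℝ) 1)) := by
  classical
  set e := range f with he
  set e' := range f' with he'
  set L : ℝ := -(2 + s0 c) with hL
  have hL1 : L < -1 := by
    have := (s0_mem c).1
    simp only [hL]
    linarith
  have hbm1 : -1 < s0 b := (s0_mem b).1
  have hg₁b : ∀ s ∈ Ioi c, g₁ s < b := by
    intro s hs
    have : g₁ s ∈ g₁ '' (Ioi c) := mem_image_of_mem _ hs
    rw [hg₁im] at this
    exact this
  set v' : ℝ → ℝ := fun s => if s ≤ c then s0 s - s0 c - 1 else s0 (g₁ s) with hv'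
  have hv'le : ∀ s, s ≤ c → v' s = s0 s - s0 c - 1 := fun s hs => if_pos hs
  have hv'gt : ∀ s, c < s → v' s = s0 (g₁ s) := fun s hs => if_neg (not_le.mpr hs)
  have hv'mono : StrictMono v' := by
    intro s t hst
    by_cases hs : s ≤ c
    · by_cases ht : t ≤ c
      · rw [hv'le s hs, hv'le t ht]
        have := s0_strictMono hst
        linarith
      · push_neg at ht
        rw [hv'le s hs, hv'gt t ht]
        have h1 : s0 s ≤ s0 c := s0_strictMono.monotone hs
        have h2 := ((s0_mem (g₁ t)).1)
        linarith
    · push_neg at hs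
      have ht : c < t := lt_trans hs hst
      rw [hv'gt s hs, hv'gt t ht]
      exact s0_strictMono (hg₁m hs ht hst)
  have hv'range : range v' = Ioo L (s0 b) := by
    ext y
    simp only [mem_range, mem_Ioo]
    constructor
    · rintro ⟨s, rfl⟩
      by_cases hs : s ≤ c
      · rw [hv'le s hs]
        have h1 := (s0_mem s).1
        have h2 : s0 s ≤ s0 c := s0_strictMono.monotone hs
        constructor
        · simp only [hL]; linarith
        · linarith
      · push_neg at hs
        rw [hv'gt s hs]
        have h1 := (s0_mem (g₁ s)).1
        have h2 : s0 (g₁ s) < s0 b := s0_strictMono (hg₁b s hs)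
        constructor
        · simp only [hL]; have := (s0_mem c).1; linarith
        · linarith
    · rintro ⟨h1, h2⟩
      rcases le_or_gt y (-1) with hy | hy
      · have hmem : y + s0 c + 1 ∈ Ioo (-1:ℝ) 1 := by
          constructor
          · simp only [hL] at h1; linarith
          · have := (s0_mem c).2; linarith
        obtain ⟨s, hs⟩ : y + s0 c + 1 ∈ range s0 := s0_range ▸ hmem
        have hsc : s ≤ c := by
          rw [← s0_strictMono.le_iff_le, hs]
          linarith
        exact ⟨s, by rw [hv'le s hsc, hs]; ring⟩
      · have hmem : y ∈ Ioo (-1:ℝ) 1 := ⟨hy, lt_trans h2 (s0_mem b).2⟩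
        obtain ⟨w, hw⟩ : y ∈ range s0 := s0_range ▸ hmem
        have hwb : w < b := by
          rw [← s0_strictMono.lt_iff_lt, hw]
          exact h2
        obtain ⟨s, hs, hgs⟩ : w ∈ g₁ '' (Ioi c) := hg₁im ▸ (mem_Iio.mpr hwb)
        exact ⟨s, by rw [hv'gt s hs, hgs, hw]⟩
  obtain ⟨hv'cont, hv'open⟩ := strictMono_interval_cont hv'mono hv'range
  set fi := Function.invFun f with hfi
  set fi' := Function.invFun f' with hfi'
  have hfis : ∀ x ∈ e, f (fi x) = x := fun x hx => Function.invFun_eq hx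
  have hfis' : ∀ x ∈ e', f' (fi' x) = x := fun x hx => Function.invFun_eq hx
  have hfil : ∀ t, fi (f t) = t := fun t => Function.leftInverse_invFun hf.injective t
  have hfil' : ∀ s, fi' (f' s) = s := fun s => Function.leftInverse_invFun hf'.injective s
  set ψ : X → ℝ := fun x => if x ∈ e then s0 (fi x) else v' (fi' x) with hψ
  have hwd : ∀ x ∈ e', ψ x = v' (fi' x) := by
    intro x hx
    by_cases hxe : x ∈ e
    · obtain ⟨s, hs, rfl⟩ : x ∈ f' '' (Ioi c) := hVeq ▸ mem_inter hxe hx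
      have h1 : ψ (f' s) = s0 (fi (f' s)) := if_pos hxe
      rw [h1, hfil', hv'gt s hs, ← hg₁ s hs, hfil]
    · exact if_neg hxe
  have hψe : ∀ x ∈ e, ψ x = s0 (fi x) := fun x hx => if_pos hx
  -- continuity on e ∪ e'
  have hcont : ContinuousOn ψ (e ∪ e') := by
    intro x hx
    apply ContinuousAt.continuousWithinAt
    rcases hx with hxe | hxe'
    · have hbase : ContinuousAt (fun y => s0 (fi y)) x :=
        (s0_continuous.comp_continuousOn (invFun_continuousOn hf)).continuousAt
          (hf.isOpen_range.mem_nhds hxe)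
      exact hbase.congr (Filter.eventuallyEq_of_mem (hf.isOpen_range.mem_nhds hxe)
        (fun y hy => (hψe y hy).symm))
    · have hbase : ContinuousAt (fun y => v' (fi' y)) x :=
        (hv'cont.comp_continuousOn (invFun_continuousOn hf')).continuousAt
          (hf'.isOpen_range.mem_nhds hxe')
      exact hbase.congr (Filter.eventuallyEq_of_mem (hf'.isOpen_range.mem_nhds hxe')
        (fun y hy => (hwd y hy).symm))
  -- not in e means tail coordinate
  have htail : ∀ x ∈ e', x ∉ e → fi' x ≤ c := by
    intro x hx hxe
    by_contra hgt
    push_neg at hgt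
    apply hxe
    have : f' (fi' x) ∈ f' '' (Ioi c) := mem_image_of_mem f' hgt
    rw [hfis' x hx] at this
    rw [← hVeq] at this
    exact this.1
  -- injectivity
  have hinj : Set.InjOn ψ (e ∪ e') := by
    intro x hx y hy hxy
    by_cases hxe : x ∈ e
    · by_cases hye : y ∈ e
      · rw [hψe x hxe, hψe y hye] at hxy
        have := s0_strictMono.injective hxy
        rw [← hfis x hxe, ← hfis y hye, this]
      · have hy' : y ∈ e' := hy.resolve_left hye
        exfalso
        rw [hψe x hxe, hwd y hy', hv'le _ (htail y hy' hye)] at hxy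
        have h1 := (s0_mem (fi x)).1
        have h2 : s0 (fi' y) ≤ s0 c := s0_strictMono.monotone (htail y hy' hye)
        linarith
    · have hx' : x ∈ e' := hx.resolve_left hxe
      by_cases hye : y ∈ e
      · exfalso
        rw [hψe y hye, hwd x hx', hv'le _ (htail x hx' hxe)] at hxy
        have h1 := (s0_mem (fi y)).1
        have h2 : s0 (fi' x) ≤ s0 c := s0_strictMono.monotone (htail x hx' hxe)
        linarith
      · have hy' : y ∈ e' := hy.resolve_left hye
        rw [hwd x hx', hwd y hy'] at hxy
        have := hv'mono.injective hxy
        rw [← hfis' x hx', ← hfis' y hy', this]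
  -- image computations
  have him_e : ψ '' e = Ioo (-1 : ℝ) 1 := by
    apply Set.eq_of_subset_of_subset
    · rintro _ ⟨x, hx, rfl⟩
      rw [hψe x hx]
      exact s0_mem _
    · intro y hy
      obtain ⟨t, rfl⟩ : y ∈ range s0 := s0_range ▸ hy
      exact ⟨f t, mem_range_self t, by rw [hψe _ (mem_range_self t), hfil]⟩
  have him_e' : ψ '' e' = Ioo L (s0 b) := by
    apply Set.eq_of_subset_of_subset
    · rintro _ ⟨x, hx, rfl⟩
      rw [hwd x hx, ← hv'range]
      exact mem_range_self _
    · intro y hy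
      obtain ⟨s, rfl⟩ : y ∈ range v' := hv'range ▸ hy
      exact ⟨f' s, mem_range_self s, by rw [hwd _ (mem_range_self s), hfil']⟩
  have him : ψ '' (e ∪ e') = Ioo L 1 := by
    rw [image_union, him_e, him_e']
    apply Set.eq_of_subset_of_subset
    · rintro y (hy | hy)
      · exact ⟨lt_trans hL1 hy.1, hy.2⟩
      · exact ⟨hy.1, lt_trans hy.2 (s0_mem b).2⟩
    · intro y hy
      rcases lt_or_ge (-1 : ℝ) y with h | h
      · exact Or.inl ⟨h, hy.2⟩
      · exact Or.inr ⟨hy.1, lt_of_le_of_lt h hbm1⟩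
  -- the subtype map
  set Ψ : ↥(e ∪ e') → ℝ := (e ∪ e').restrict ψ with hΨ
  have hΨcont : Continuous Ψ := hcont.restrict
  have hΨinj : Function.Injective Ψ := fun z w h => Subtype.ext (hinj z.2 w.2 h)
  have hΨopen : IsOpenMap Ψ := by
    intro O hO
    obtain ⟨O', hO', rfl⟩ := isOpen_induced_iff.mp hO
    have himeq : Ψ '' (Subtype.val ⁻¹' O') = ψ '' (O' ∩ (e ∪ e')) := by
      apply Set.eq_of_subset_of_subset
      · rintro _ ⟨z, hz, rfl⟩
        exact ⟨z, ⟨hz, z.2⟩, rfl⟩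
      · rintro _ ⟨x, ⟨hx1, hx2⟩, rfl⟩
        exact ⟨⟨x, hx2⟩, hx1, rfl⟩
    rw [himeq]
    have hsplit : O' ∩ (e ∪ e') = (O' ∩ e) ∪ (O' ∩ e') := inter_union_distrib_left O' e e'
    rw [hsplit, image_union]
    apply IsOpen.union
    · have heq2 : ψ '' (O' ∩ e) = s0 '' (f ⁻¹' (O' ∩ e)) := by
        apply Set.eq_of_subset_of_subset
        · rintro _ ⟨x, hx, rfl⟩
          rw [hψe x hx.2]
          exact ⟨fi x, by rw [mem_preimage, hfis x hx.2]; exact hx, rfl⟩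
        · rintro _ ⟨t, ht, rfl⟩
          refine ⟨f t, ht, ?_⟩
          rw [hψe _ (mem_range_self t), hfil]
      rw [heq2]
      exact s0_isOpenMap _ ((hO'.inter hf.isOpen_range).preimage hf.continuous)
    · have heq2 : ψ '' (O' ∩ e') = v' '' (f' ⁻¹' (O' ∩ e')) := by
        apply Set.eq_of_subset_of_subset
        · rintro _ ⟨x, hx, rfl⟩
          rw [hwd x hx.2]
          exact ⟨fi' x, by rw [mem_preimage, hfis' x hx.2]; exact hx, rfl⟩
        · rintro _ ⟨s, hs, rfl⟩
          refine ⟨f' s, hs, ?_⟩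
          rw [hwd _ (mem_range_self s), hfil']
      rw [heq2]
      exact hv'open _ ((hO'.inter hf'.isOpen_range).preimage hf'.continuous)
  have hΨemb : IsOpenEmbedding Ψ :=
    IsOpenEmbedding.of_continuous_injective_isOpenMap hΨcont hΨinj hΨopen
  have hrange : range Ψ = Ioo L 1 := by
    rw [hΨ]; exact (Set.range_domRestrict ψ _).trans him
  refine ⟨(hΨemb.isEmbedding.toHomeomorph).trans
    ((Homeomorph.setCongr hrange).trans (iooHomeo L 1 (by linarith)).symm)⟩

end BuildArc

section BuildCircle

lemma addcircle_eq_iff {p x y : ℝ} :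
    (x : AddCircle p) = (y : AddCircle p) ↔ ∃ k : ℤ, x - y = (k : ℝ) * p := by
  rw [QuotientAddGroup.eq_iff_sub_mem]
  constructor
  · intro h
    obtain ⟨k, hk⟩ := AddSubgroup.mem_zmultiples_iff.mp h
    exact ⟨k, by rw [← hk, zsmul_eq_mul]⟩
  · rintro ⟨k, hk⟩
    exact AddSubgroup.mem_zmultiples_iff.mpr ⟨k, by rw [zsmul_eq_mul, ← hk]⟩

lemma addcircle_sub_period {p x : ℝ} : ((x - p : ℝ) : AddCircle p) = (x : AddCircle p) :=
  addcircle_eq_iff.mpr ⟨-1, by push_cast; ring⟩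

lemma int_mul_cancel {p z : ℝ} (hp : 0 < p) (hz : |z| < p)
    (h : ∃ k : ℤ, z = (k : ℝ) * p) : z = 0 := by
  obtain ⟨k, rfl⟩ := h
  by_contra hne
  have hk : k ≠ 0 := by
    intro h0
    apply hne
    rw [h0]
    simp
  have h1 : (1:ℝ) ≤ |(k:ℝ)| := by
    have := Int.one_le_abs hk
    calc (1:ℝ) = ((1:ℤ) : ℝ) := by norm_num
      _ ≤ ((|k| : ℤ) : ℝ) := by exact_mod_cast this
      _ = |(k:ℝ)| := by push_cast; ring
  rw [abs_mul, abs_of_pos hp] at hz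
  nlinarith

variable {X : Type*} [TopologicalSpace X] [T2Space X] [CompactSpace X] [ConnectedSpace X]

lemma build_circle {f f' : ℝ → X} (hf : IsOpenEmbedding f) (hf' : IsOpenEmbedding f')
    {a b c d : ℝ} (hba : b ≤ a) (hdc : d ≤ c)
    (hP : f '' (Iio b) = f' '' (Ioi c)) (hQ : f '' (Ioi a) = f' '' (Iio d))
    {g₁ : ℝ → ℝ} (hg₁ : ∀ s ∈ Ioi c, f (g₁ s) = f' s) (hg₁m : StrictMonoOn g₁ (Ioi c))
    (hg₁im : g₁ '' (Ioi c) = Iio b)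
    {g₂ : ℝ → ℝ} (hg₂ : ∀ s ∈ Iio d, f (g₂ s) = f' s) (hg₂m : StrictMonoOn g₂ (Iio d))
    (hg₂im : g₂ '' (Iio d) = Ioi a)
    (hVeq : range f ∩ range f' = f' '' (Ioi c) ∪ f' '' (Iio d)) :
    Nonempty (X ≃ₜ Circle) := by
  classical
  set e := range f with he
  set e' := range f' with he'
  have hg₁b : ∀ s ∈ Ioi c, g₁ s < b := by
    intro s hs
    have : g₁ s ∈ g₁ '' (Ioi c) := mem_image_of_mem _ hs
    rw [hg₁im] at this
    exact this
  have hg₂a : ∀ s ∈ Iio d, a < g₂ s := by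
    intro s hs
    have : g₂ s ∈ g₂ '' (Iio d) := mem_image_of_mem _ hs
    rw [hg₂im] at this
    exact this
  -- Step 1 : X = e ∪ e'
  obtain ⟨s₁, hs₁c, hs₁⟩ : (b - 1) ∈ g₁ '' (Ioi c) := by rw [hg₁im]; simp
  obtain ⟨s₂, hs₂d, hs₂⟩ : (a + 1) ∈ g₂ '' (Iio d) := by rw [hg₂im]; simp
  have hs₂s₁ : s₂ < s₁ := lt_of_lt_of_le hs₂d (le_trans hdc (le_of_lt hs₁c))
  have hs₂d' : s₂ < d := hs₂d
  have hs₁c' : c < s₁ := hs₁c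
  have hcov : e ∪ e' = f '' (Icc (b-1) (a+1)) ∪ f' '' (Icc s₂ s₁) := by
    apply Set.eq_of_subset_of_subset
    · rintro x (⟨t, rfl⟩ | ⟨s, rfl⟩)
      · rcases le_or_gt t (a+1) with h1 | h1
        · rcases le_or_gt (b-1) t with h2 | h2
          · exact Or.inl (mem_image_of_mem f ⟨h2, h1⟩)
          · have htb : t ∈ Iio b := by simp only [mem_Iio]; linarith
            obtain ⟨s, hs, hgs⟩ : t ∈ g₁ '' (Ioi c) := hg₁im ▸ htb
            have hss₁ : s < s₁ := by
              rw [← (hg₁m.lt_iff_lt hs hs₁c)]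
              rw [hgs, hs₁]
              exact h2
            have hss₂ : s₂ ≤ s := le_of_lt (lt_of_lt_of_le hs₂d (le_trans hdc (le_of_lt hs)))
            rw [← hgs, hg₁ s hs]
            exact Or.inr (mem_image_of_mem f' ⟨hss₂, le_of_lt hss₁⟩)
        · have hta : t ∈ Ioi a := by simp only [mem_Ioi]; linarith
          obtain ⟨s, hs, hgs⟩ : t ∈ g₂ '' (Iio d) := hg₂im ▸ hta
          have hss₂ : s₂ < s := by
            rw [← (hg₂m.lt_iff_lt hs₂d hs)]
            rw [hgs, hs₂]
            exact h1
          have hss₁ : s ≤ s₁ := le_of_lt (lt_of_lt_of_le hs (le_trans hdc (le_of_lt hs₁c)))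
          rw [← hgs, hg₂ s hs]
          exact Or.inr (mem_image_of_mem f' ⟨le_of_lt hss₂, hss₁⟩)
      · rcases le_or_gt s s₁ with h1 | h1
        · rcases le_or_gt s₂ s with h2 | h2
          · exact Or.inr (mem_image_of_mem f' ⟨h2, h1⟩)
          · have hsd : s ∈ Iio d := by simp only [mem_Iio]; linarith
            rw [← hg₂ s hsd]
            refine Or.inl (mem_image_of_mem f ⟨?_, ?_⟩)
            · have := hg₂a s hsd
              linarith
            · have : g₂ s < g₂ s₂ := hg₂m hsd hs₂d h2
              rw [hs₂] at this
              linarith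
        · have hsc : s ∈ Ioi c := by simp only [mem_Ioi]; linarith
          rw [← hg₁ s hsc]
          refine Or.inl (mem_image_of_mem f ⟨?_, ?_⟩)
          · have : g₁ s₁ < g₁ s := hg₁m hs₁c hsc h1
            rw [hs₁] at this
            linarith
          · have := hg₁b s hsc
            linarith
    · rintro x (⟨t, _, rfl⟩ | ⟨s, _, rfl⟩)
      · exact Or.inl (mem_range_self t)
      · exact Or.inr (mem_range_self s)
  have hcompact : IsCompact (e ∪ e') := by
    rw [hcov]
    exact (isCompact_Icc.image hf.continuous).union (isCompact_Icc.image hf'.continuous)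
  have huniv : e ∪ e' = univ := by
    apply IsClopen.eq_univ
    · exact ⟨hcompact.isClosed, hf.isOpen_range.union hf'.isOpen_range⟩
    · exact ⟨f 0, Or.inl (mem_range_self 0)⟩
  -- Step 2 : the period and the angle function
  set P₀ : ℝ := 2 + (c - d) with hP₀def
  have hP₀2 : 2 ≤ P₀ := by simp only [hP₀def]; linarith
  have hP₀pos : 0 < P₀ := by linarith
  set v : ℝ → ℝ := fun s => if s < d then s0 (g₂ s) - P₀ else if s ≤ c then s - c - 1
    else s0 (g₁ s) with hv
  have hvlt : ∀ s, s < d → v s = s0 (g₂ s) - P₀ := fun s hs => if_pos hs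
  have hvmid : ∀ s, d ≤ s → s ≤ c → v s = s - c - 1 := fun s h1 h2 => by
    rw [hv]
    simp only
    rw [if_neg (not_lt.mpr h1), if_pos h2]
  have hvgt : ∀ s, c < s → v s = s0 (g₁ s) := fun s hs => by
    rw [hv]
    simp only
    rw [if_neg (not_lt.mpr (le_trans hdc (le_of_lt hs))), if_neg (not_le.mpr hs)]
  have hvltbd : ∀ s, s < d → s0 a - P₀ < v s ∧ v s < 1 - P₀ := by
    intro s hs
    rw [hvlt s hs]
    have h1 := s0_strictMono (hg₂a s hs)
    have h2 := (s0_mem (g₂ s)).2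
    exact ⟨by linarith, by linarith⟩
  have hvmidbd : ∀ s, d ≤ s → s ≤ c → 1 - P₀ ≤ v s ∧ v s ≤ -1 := by
    intro s h1 h2
    rw [hvmid s h1 h2]
    constructor
    · simp only [hP₀def]; linarith
    · linarith
  have hvgtbd : ∀ s, c < s → -1 < v s ∧ v s < s0 b := by
    intro s hs
    rw [hvgt s hs]
    exact ⟨(s0_mem (g₁ s)).1, s0_strictMono (hg₁b s hs)⟩
  have hvmono : StrictMono v := by
    intro s t hst
    rcases lt_or_ge s d with hs | hs
    · rcases lt_or_ge t d with ht | ht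
      · rw [hvlt s hs, hvlt t ht]
        have := s0_strictMono (hg₂m hs ht hst)
        linarith
      · rcases le_or_gt t c with ht2 | ht2
        · have := (hvltbd s hs).2
          have := (hvmidbd t ht ht2).1
          linarith
        · have := (hvltbd s hs).2
          have := (hvgtbd t ht2).1
          have : (1:ℝ) - P₀ ≤ -1 := by linarith
          linarith [(hvltbd s hs).2, (hvgtbd t ht2).1]
    · rcases le_or_gt s c with hs2 | hs2
      · rcases le_or_gt t c with ht2 | ht2
        · have htd : d ≤ t := le_trans hs (le_of_lt hst)
          rw [hvmid s hs hs2, hvmid t htd ht2]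
          linarith
        · have := (hvmidbd s hs hs2).2
          have := (hvgtbd t ht2).1
          linarith
      · have ht2 : c < t := lt_trans hs2 hst
        rw [hvgt s hs2, hvgt t ht2]
        exact s0_strictMono (hg₁m hs2 ht2 hst)
  have hvrange : range v = Ioo (s0 a - P₀) (s0 b) := by
    have hsa1 := (s0_mem a).1
    have hsa2 := (s0_mem a).2
    have hsb1 := (s0_mem b).1
    have hsb2 := (s0_mem b).2
    ext y
    simp only [mem_range, mem_Ioo]
    constructor
    · rintro ⟨s, rfl⟩
      rcases lt_or_ge s d with hs | hs
      · obtain ⟨h1, h2⟩ := hvltbd s hs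
        exact ⟨h1, by linarith⟩
      · rcases le_or_gt s c with hs2 | hs2
        · obtain ⟨h1, h2⟩ := hvmidbd s hs hs2
          exact ⟨by linarith, by linarith⟩
        · obtain ⟨h1, h2⟩ := hvgtbd s hs2
          exact ⟨by linarith, h2⟩
    · rintro ⟨h1, h2⟩
      rcases lt_or_ge y (1 - P₀) with hy | hy
      · have hmem : y + P₀ ∈ Ioo (s0 a) 1 := ⟨by linarith, by linarith⟩
        have : y + P₀ ∈ Ioo (s0 a) (1:ℝ) := hmem
        obtain ⟨w, hw1, hw2⟩ : y + P₀ ∈ s0 '' (Ioi a) := by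
          rw [s0_image_Ioi]
          exact hmem
        obtain ⟨s, hs, hgs⟩ : w ∈ g₂ '' (Iio d) := hg₂im ▸ hw1
        refine ⟨s, ?_⟩
        rw [hvlt s hs, hgs, hw2]
        ring
      · rcases le_or_gt y (-1) with hy2 | hy2
        · refine ⟨y + c + 1, ?_⟩
          have hd : d ≤ y + c + 1 := by simp only [hP₀def] at hy; linarith
          have hc : y + c + 1 ≤ c := by linarith
          rw [hvmid _ hd hc]
          ring
        · have hmem : y ∈ Ioo (-1:ℝ) (s0 b) := ⟨hy2, h2⟩
          obtain ⟨w, hw1, hw2⟩ : y ∈ s0 '' (Iio b) := by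
            rw [s0_image_Iio]
            exact hmem
          obtain ⟨s, hs, hgs⟩ : w ∈ g₁ '' (Ioi c) := hg₁im ▸ hw1
          refine ⟨s, ?_⟩
          rw [hvgt s hs, hgs, hw2]
  have hvcont : Continuous v := by
    refine (strictMono_interval_cont hvmono hvrange).1
  -- Step 3 : the map to the circle
  set fi := Function.invFun f with hfi
  set fi' := Function.invFun f' with hfi'
  have hfis : ∀ x ∈ e, f (fi x) = x := fun x hx => Function.invFun_eq hx
  have hfis' : ∀ x ∈ e', f' (fi' x) = x := fun x hx => Function.invFun_eq hx
  have hfil : ∀ t, fi (f t) = t := fun t => Function.leftInverse_invFun hf.injective t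
  have hfil' : ∀ s, fi' (f' s) = s := fun s => Function.leftInverse_invFun hf'.injective s
  set ψ : X → ℝ := fun x => if x ∈ e then s0 (fi x) else v (fi' x) with hψ
  set Φ : X → AddCircle P₀ := fun x => ((ψ x : ℝ) : AddCircle P₀) with hΦ
  have hψe : ∀ x ∈ e, ψ x = s0 (fi x) := fun x hx => if_pos hx
  have htail : ∀ x ∈ e', x ∉ e → d ≤ fi' x ∧ fi' x ≤ c := by
    intro x hx hxe
    constructor
    · by_contra hlt
      push_neg at hlt
      apply hxe
      have h1 : f' (fi' x) ∈ f' '' (Iio d) := mem_image_of_mem f' hlt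
      rw [hfis' x hx, ← hQ] at h1
      exact image_subset_range f _ h1
    · by_contra hlt
      push_neg at hlt
      apply hxe
      have h1 : f' (fi' x) ∈ f' '' (Ioi c) := mem_image_of_mem f' hlt
      rw [hfis' x hx, ← hP] at h1
      exact image_subset_range f _ h1
  have hwd : ∀ x ∈ e', Φ x = ((v (fi' x) : ℝ) : AddCircle P₀) := by
    intro x hx
    by_cases hxe : x ∈ e
    · have hx2 : x ∈ f' '' (Ioi c) ∪ f' '' (Iio d) := hVeq ▸ mem_inter hxe hx
      rcases hx2 with ⟨s, hs, rfl⟩ | ⟨s, hs, rfl⟩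
      · have h1 : ψ (f' s) = s0 (fi (f' s)) := if_pos hxe
        rw [hΦ]
        simp only
        rw [h1, hfil', hvgt s hs, ← hg₁ s hs, hfil]
      · have h1 : ψ (f' s) = s0 (fi (f' s)) := if_pos hxe
        rw [hΦ]
        simp only
        rw [h1, hfil', hvlt s hs, ← hg₂ s hs, hfil]
        exact addcircle_sub_period.symm
    · have hne : ψ x = v (fi' x) := if_neg hxe
      rw [hΦ]
      simp only
      rw [hne]
  -- continuity
  have hΦcont : Continuous Φ := by
    rw [continuous_iff_continuousAt]
    intro x
    have hx : x ∈ e ∪ e' := huniv ▸ mem_univ x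
    rcases hx with hxe | hxe'
    · have hbase : ContinuousAt (fun y => ((s0 (fi y) : ℝ) : AddCircle P₀)) x :=
        (((AddCircle.continuous_mk' P₀).comp s0_continuous).comp_continuousOn
          (invFun_continuousOn hf)).continuousAt (hf.isOpen_range.mem_nhds hxe)
      apply hbase.congr
      apply Filter.eventuallyEq_of_mem (hf.isOpen_range.mem_nhds hxe)
      intro y hy
      rw [hΦ]
      simp only
      rw [hψe y hy]
    · have hbase : ContinuousAt (fun y => ((v (fi' y) : ℝ) : AddCircle P₀)) x :=
        (((AddCircle.continuous_mk' P₀).comp hvcont).comp_continuousOn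
          (invFun_continuousOn hf')).continuousAt (hf'.isOpen_range.mem_nhds hxe')
      apply hbase.congr
      apply Filter.eventuallyEq_of_mem (hf'.isOpen_range.mem_nhds hxe')
      intro y hy
      exact (hwd y hy).symm
  -- injectivity
  have hvmid' : ∀ x ∈ e', x ∉ e → 1 - P₀ ≤ v (fi' x) ∧ v (fi' x) ≤ -1 := by
    intro x hx hxe
    obtain ⟨h1, h2⟩ := htail x hx hxe
    exact hvmidbd _ h1 h2
  have hΦinj : Function.Injective Φ := by
    intro x y hxy
    have hx : x ∈ e ∪ e' := huniv ▸ mem_univ x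
    have hy : y ∈ e ∪ e' := huniv ▸ mem_univ y
    rw [hΦ] at hxy
    simp only at hxy
    have hdiff := addcircle_eq_iff.mp hxy
    by_cases hxe : x ∈ e
    · by_cases hye : y ∈ e
      · rw [hψe x hxe, hψe y hye] at hdiff
        have h1 := (s0_mem (fi x)).1
        have h2 := (s0_mem (fi x)).2
        have h3 := (s0_mem (fi y)).1
        have h4 := (s0_mem (fi y)).2
        have h0 : s0 (fi x) - s0 (fi y) = 0 :=
          int_mul_cancel hP₀pos (by rw [abs_lt]; constructor <;> linarith) hdiff
        have := s0_strictMono.injective (by linarith : s0 (fi x) = s0 (fi y))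
        rw [← hfis x hxe, ← hfis y hye, this]
      · have hy' : y ∈ e' := hy.resolve_left hye
        exfalso
        rw [hψe x hxe, hψ] at hdiff
        simp only at hdiff
        rw [if_neg hye] at hdiff
        obtain ⟨h1, h2⟩ := hvmid' y hy' hye
        have h3 := (s0_mem (fi x)).1
        have h4 := (s0_mem (fi x)).2
        obtain ⟨k, hk⟩ := hdiff
        have hpos : 0 < s0 (fi x) - v (fi' y) := by linarith
        have hlt : s0 (fi x) - v (fi' y) < P₀ := by linarith
        rcases le_or_gt k 0 with hk0 | hk0
        · have : (k:ℝ) * P₀ ≤ 0 := mul_nonpos_of_nonpos_of_nonneg (by exact_mod_cast hk0) (le_of_lt hP₀pos)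
          linarith
        · have hk1 : (1:ℤ) ≤ k := hk0
          have : P₀ ≤ (k:ℝ) * P₀ := le_mul_of_one_le_left (le_of_lt hP₀pos) (by exact_mod_cast hk1)
          linarith
    · have hx' : x ∈ e' := hx.resolve_left hxe
      by_cases hye : y ∈ e
      · exfalso
        rw [hψe y hye, hψ] at hdiff
        simp only at hdiff
        rw [if_neg hxe] at hdiff
        obtain ⟨h1, h2⟩ := hvmid' x hx' hxe
        have h3 := (s0_mem (fi y)).1
        have h4 := (s0_mem (fi y)).2
        obtain ⟨k, hk⟩ := hdiff
        have hneg : v (fi' x) - s0 (fi y) < 0 := by linarith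
        have hgt : -P₀ < v (fi' x) - s0 (fi y) := by linarith
        rcases le_or_gt 0 k with hk0 | hk0
        · have : 0 ≤ (k:ℝ) * P₀ := mul_nonneg (by exact_mod_cast hk0) (le_of_lt hP₀pos)
          linarith
        · have hk1 : k ≤ (-1:ℤ) := by omega
          have : (k:ℝ) * P₀ ≤ -P₀ := by
            have : (k:ℝ) ≤ -1 := by exact_mod_cast hk1
            nlinarith
          linarith
      · have hy' : y ∈ e' := hy.resolve_left hye
        rw [hψ] at hdiff
        simp only at hdiff
        rw [if_neg hxe, if_neg hye] at hdiff
        obtain ⟨hx1, hx2⟩ := hvmid' x hx' hxe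
        obtain ⟨hy1, hy2⟩ := hvmid' y hy' hye
        have h0 : v (fi' x) - v (fi' y) = 0 :=
          int_mul_cancel hP₀pos (by rw [abs_lt]; constructor <;> linarith) hdiff
        have := hvmono.injective (by linarith : v (fi' x) = v (fi' y))
        rw [← hfis' x hx', ← hfis' y hy', this]
  -- surjectivity
  have hΦsurj : Function.Surjective Φ := by
    intro θ
    set z := QuotientAddGroup.equivIocMod hP₀pos (s0 a - P₀) θ with hz
    have hz2 : ((z : ℝ) : AddCircle P₀) = θ := by
      have := (QuotientAddGroup.equivIocMod hP₀pos (s0 a - P₀)).symm_apply_apply θ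
      exact this
    have hzmem : (z : ℝ) ∈ Ioc (s0 a - P₀) (s0 a - P₀ + P₀) := z.2
    have hzle : (z : ℝ) ≤ s0 a := by
      have := hzmem.2
      linarith
    rcases lt_or_ge (z : ℝ) (s0 b) with hcase | hcase
    · have : (z : ℝ) ∈ range v := by
        rw [hvrange]
        exact ⟨hzmem.1, hcase⟩
      obtain ⟨s, hs⟩ := this
      refine ⟨f' s, ?_⟩
      rw [hwd (f' s) (mem_range_self s), hfil', hs, hz2]
    · have : (z : ℝ) ∈ Ioo (-1:ℝ) 1 := by
        constructor
        · linarith [(s0_mem b).1]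
        · linarith [(s0_mem a).2]
      obtain ⟨t, ht⟩ : (z : ℝ) ∈ range s0 := s0_range ▸ this
      refine ⟨f t, ?_⟩
      rw [hΦ]
      simp only
      rw [hψe (f t) (mem_range_self t), hfil, ht, hz2]
  -- conclusion
  have hequiv : Continuous ⇑(Equiv.ofBijective Φ ⟨hΦinj, hΦsurj⟩) := hΦcont
  exact ⟨(hequiv.homeoOfEquivCompactToT2).trans (AddCircle.homeomorphCircle (ne_of_gt hP₀pos))⟩

end BuildCircle

section CoreHelpers

variable {X : Type*} [TopologicalSpace X] [T2Space X]

lemma bounded_comp_false {f f' : ℝ → X} (hf : IsOpenEmbedding f) (hf' : IsOpenEmbedding f')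
    {z : X} (hz : z ∈ range f ∩ range f') (hmax : ¬ (range f' ⊆ range f)) {a₂ b₂ : ℝ}
    (hbdd : f ⁻¹' (connectedComponentIn (range f ∩ range f') z) = Ioo a₂ b₂) : False := by
  set V := range f ∩ range f' with hV
  have hVo : IsOpen V := hf.isOpen_range.inter hf'.isOpen_range
  set R := connectedComponentIn V z with hR
  have hRV : R ⊆ V := connectedComponentIn_subset V z
  have hzR : z ∈ R := mem_connectedComponentIn hz
  have hRf : f '' (Ioo a₂ b₂) = R := by
    rw [← hbdd, image_preimage_eq_of_subset (hRV.trans inter_subset_left)]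
  have hclosR : closure R ⊆ range f := by
    rw [← hRf]
    exact (closure_im hf.continuous Ioo_subset_Icc_self).trans (image_subset_range f _)
  set t' := Function.invFun f' z with ht'def
  have ht' : f' t' = z := Function.invFun_eq hz.2
  have hcomp' : connectedComponentIn (f' ⁻¹' V) t' = f' ⁻¹' R :=
    (comp_preimage hf' inter_subset_right hz ht').symm
  have ht'W : t' ∈ f' ⁻¹' V := by rw [mem_preimage, ht']; exact hz
  have hA'open : IsOpen (f' ⁻¹' R) := by
    rw [← hcomp']
    exact (hVo.preimage hf'.continuous).connectedComponentIn
  have hA'pre : IsPreconnected (f' ⁻¹' R) := by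
    rw [← hcomp']
    exact isPreconnected_connectedComponentIn
  have hA'ne : (f' ⁻¹' R).Nonempty := ⟨t', by rw [mem_preimage, ht']; exact hzR⟩
  have hend : ∀ y', y' ∉ f' ⁻¹' R → y' ∈ closure (f' ⁻¹' R) → False := by
    intro y' hy1 hy2
    have h1 : y' ∉ f' ⁻¹' V :=
      not_mem_of_component (hVo.preimage hf'.continuous) ht'W hcomp' hy1 hy2
    apply h1
    rw [mem_preimage]
    refine ⟨?_, mem_range_self y'⟩
    apply hclosR
    have h2 : f' y' ∈ f' '' (closure (f' ⁻¹' R)) := mem_image_of_mem f' hy2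
    have h3 : f' '' (closure (f' ⁻¹' R)) ⊆ closure (f' '' (f' ⁻¹' R)) :=
      image_closure_subset_closure_image hf'.continuous
    have h4 : f' '' (f' ⁻¹' R) = R :=
      image_preimage_eq_of_subset (hRV.trans inter_subset_right)
    rw [h4] at h3
    exact h3 h2
  rcases open_conn_real hA'open hA'pre hA'ne with h | ⟨d₂, h⟩ | ⟨c₂, h⟩ | ⟨u, w, hlt, h⟩
  · apply hmax
    intro p hp
    obtain ⟨s, rfl⟩ := hp
    have : s ∈ f' ⁻¹' R := h ▸ mem_univ s
    exact (hRV (mem_preimage.mp this)).1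
  · exact hend d₂ (by rw [h]; simp) (by rw [h, closure_Iio]; exact self_mem_Iic)
  · exact hend c₂ (by rw [h]; simp) (by rw [h, closure_Ioi]; exact self_mem_Ici)
  · exact hend u (by rw [h]; simp) (by
      rw [h, closure_Ioo (ne_of_lt hlt)]
      exact ⟨le_refl _, le_of_lt hlt⟩)

lemma image_negcomp_Iio (f : ℝ → X) (r : ℝ) :
    (fun t => f (-t)) '' (Iio r) = f '' (Ioi (-r)) := by
  ext z
  constructor
  · rintro ⟨t, ht, rfl⟩
    exact ⟨-t, by simp only [mem_Ioi]; simp only [mem_Iio] at ht; linarith, rfl⟩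
  · rintro ⟨w, hw, rfl⟩
    refine ⟨-w, by simp only [mem_Iio]; simp only [mem_Ioi] at hw; linarith, by simp⟩

lemma image_negcomp_Ioi (f : ℝ → X) (r : ℝ) :
    (fun t => f (-t)) '' (Ioi r) = f '' (Iio (-r)) := by
  ext z
  constructor
  · rintro ⟨t, ht, rfl⟩
    exact ⟨-t, by simp only [mem_Iio]; simp only [mem_Ioi] at ht; linarith, rfl⟩
  · rintro ⟨w, hw, rfl⟩
    refine ⟨-w, by simp only [mem_Ioi]; simp only [mem_Iio] at hw; linarith, by simp⟩

lemma range_negcomp (f : ℝ → X) : range (fun t => f (-t)) = range f := by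
  ext z
  constructor
  · rintro ⟨t, rfl⟩; exact ⟨-t, rfl⟩
  · rintro ⟨t, rfl⟩; exact ⟨-t, by simp⟩

omit [T2Space X] in
lemma isOpenEmbedding_negcomp {f : ℝ → X} (hf : IsOpenEmbedding f) :
    IsOpenEmbedding (fun t => f (-t)) := by
  have h1 : IsOpenEmbedding (fun t : ℝ => -t) := by
    have := (Homeomorph.neg ℝ).isOpenEmbedding
    exact this
  exact hf.comp h1

end CoreHelpers

section Core

variable {X : Type*} [MetricSpace X] [CompactSpace X] [ConnectedSpace X]

lemma core (hX : IsEmpty (X ≃ₜ Circle))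
    {e e' : Set X} (he : IsFreeArc e) (he' : IsFreeArc e') (hnee : e ≠ e')
    {f f' : ℝ → X} (hf : IsOpenEmbedding f) (hf' : IsOpenEmbedding f')
    (hrf : range f = e) (hrf' : range f' = e')
    {x : X} (hx : x ∈ e ∩ e') {b c : ℝ}
    (hA : f ⁻¹' (connectedComponentIn (e ∩ e') x) = Iio b)
    (hA' : f' ⁻¹' (connectedComponentIn (e ∩ e') x) = Ioi c) : False := by
  classical
  set V := e ∩ e' with hVdef
  have hVo : IsOpen V := he.1.inter he'.1
  have hVf : V ⊆ range f := by rw [hrf]; exact inter_subset_left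
  have hVf' : V ⊆ range f' := by rw [hrf']; exact inter_subset_right
  set P := connectedComponentIn V x with hPdef
  have hPV : P ⊆ V := connectedComponentIn_subset V x
  have hxP : x ∈ P := mem_connectedComponentIn hx
  have hPb : f '' (Iio b) = P := by
    rw [← hA, image_preimage_eq_of_subset (hPV.trans hVf)]
  have hPc : f' '' (Ioi c) = P := by
    rw [← hA', image_preimage_eq_of_subset (hPV.trans hVf')]
  have hP : f '' (Iio b) = f' '' (Ioi c) := hPb.trans hPc.symm
  set t₀ := Function.invFun f x with ht₀def
  have ht₀ : f t₀ = x := Function.invFun_eq (hVf hx)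
  set t₀' := Function.invFun f' x with ht₀'def
  have ht₀' : f' t₀' = x := Function.invFun_eq (hVf' hx)
  have hWo : IsOpen (f ⁻¹' V) := hVo.preimage hf.continuous
  have hWo' : IsOpen (f' ⁻¹' V) := hVo.preimage hf'.continuous
  have ht₀W : t₀ ∈ f ⁻¹' V := by rw [mem_preimage, ht₀]; exact hx
  have ht₀W' : t₀' ∈ f' ⁻¹' V := by rw [mem_preimage, ht₀']; exact hx
  have hWcomp : connectedComponentIn (f ⁻¹' V) t₀ = Iio b :=
    ((comp_preimage hf hVf hx ht₀).symm).trans hA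
  have hWcomp' : connectedComponentIn (f' ⁻¹' V) t₀' = Ioi c :=
    ((comp_preimage hf' hVf' hx ht₀').symm).trans hA'
  have hfb : f b ∉ e' := by
    have hbW : b ∉ f ⁻¹' V := not_mem_of_component hWo ht₀W hWcomp (by simp)
      (by rw [closure_Iio]; exact self_mem_Iic)
    intro hbe'
    exact hbW (by rw [mem_preimage]; exact ⟨hrf ▸ mem_range_self b, hbe'⟩)
  have hf'c : f' c ∉ e := by
    have hcW : c ∉ f' ⁻¹' V := not_mem_of_component hWo' ht₀W' hWcomp' (by simp)
      (by rw [closure_Ioi]; exact self_mem_Ici)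
    intro hce
    exact hcW (by rw [mem_preimage]; exact ⟨hce, hrf' ▸ mem_range_self c⟩)
  obtain ⟨g₁, hg₁, hg₁m, hg₁im⟩ := transition hf hf' hP (by rw [hrf']; exact hfb)
  have hsub_ee' : e ⊆ e' → False := fun hs => hnee (he.2.2 e' he'.1 he'.2.1 hs).symm
  have hsub_e'e : e' ⊆ e → False := fun hs => hnee (he'.2.2 e he.1 he.2.1 hs)
  by_cases hVP : V ⊆ P
  · -- one overlap component : arc case
    have hVeq : range f ∩ range f' = f' '' (Ioi c) := by
      rw [hrf, hrf', hPc]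
      exact Subset.antisymm hVP hPV
    obtain ⟨homeo⟩ := build_arc hf hf' hVeq hg₁ hg₁m hg₁im
    have hmax : (range f ∪ range f') = e :=
      he.2.2 (range f ∪ range f') (hf.isOpen_range.union hf'.isOpen_range) ⟨homeo⟩
        (by rw [hrf]; exact subset_union_left)
    apply hsub_e'e
    rw [← hrf']
    calc range f' ⊆ range f ∪ range f' := subset_union_right
      _ = e := hmax
  · -- two overlap components : circle case
    obtain ⟨y, hyV, hyP⟩ := not_subset.mp hVP
    set Q := connectedComponentIn V y with hQdef
    have hyQ : y ∈ Q := mem_connectedComponentIn hyV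
    have hQV : Q ⊆ V := connectedComponentIn_subset V y
    have hPQ : ∀ z, z ∈ P → z ∈ Q → False := by
      intro z hzP hzQ
      apply hyP
      have h1 : connectedComponentIn V x = connectedComponentIn V z :=
        connectedComponentIn_eq (show z ∈ connectedComponentIn V x from hzP)
      have h2 : connectedComponentIn V y = connectedComponentIn V z :=
        connectedComponentIn_eq (show z ∈ connectedComponentIn V y from hzQ)
      show y ∈ connectedComponentIn V x
      rw [h1, ← h2]
      exact (show y ∈ connectedComponentIn V y from hyQ)
    set t₁ := Function.invFun f y with ht₁def
    have ht₁ : f t₁ = y := Function.invFun_eq (hVf hyV)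
    set t₁' := Function.invFun f' y with ht₁'def
    have ht₁' : f' t₁' = y := Function.invFun_eq (hVf' hyV)
    have hQcomp : connectedComponentIn (f ⁻¹' V) t₁ = f ⁻¹' Q :=
      (comp_preimage hf hVf hyV ht₁).symm
    have hQcomp' : connectedComponentIn (f' ⁻¹' V) t₁' = f' ⁻¹' Q :=
      (comp_preimage hf' hVf' hyV ht₁').symm
    have ht₁W : t₁ ∈ f ⁻¹' V := by rw [mem_preimage, ht₁]; exact hyV
    have ht₁W' : t₁' ∈ f' ⁻¹' V := by rw [mem_preimage, ht₁']; exact hyV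
    have hAQopen : IsOpen (f ⁻¹' Q) := by rw [← hQcomp]; exact hWo.connectedComponentIn
    have hAQpre : IsPreconnected (f ⁻¹' Q) := by
      rw [← hQcomp]; exact isPreconnected_connectedComponentIn
    have hAQne : (f ⁻¹' Q).Nonempty := ⟨t₁, by rw [mem_preimage, ht₁]; exact hyQ⟩
    have hAQ'open : IsOpen (f' ⁻¹' Q) := by rw [← hQcomp']; exact hWo'.connectedComponentIn
    have hAQ'pre : IsPreconnected (f' ⁻¹' Q) := by
      rw [← hQcomp']; exact isPreconnected_connectedComponentIn
    have hAQ'ne : (f' ⁻¹' Q).Nonempty := ⟨t₁', by rw [mem_preimage, ht₁']; exact hyQ⟩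
    have hVrr : range f ∩ range f' = V := by rw [hrf, hrf']
    have hVrr' : range f' ∩ range f = V := by rw [hrf, hrf', inter_comm]
    -- classify f ⁻¹' Q : must be Ioi a
    obtain ⟨a, ha⟩ : ∃ a, f ⁻¹' Q = Ioi a := by
      rcases open_conn_real hAQopen hAQpre hAQne with h | ⟨b₂, h⟩ | ⟨a₂, h⟩ | ⟨a₂, b₂, hlt, h⟩
      · exfalso
        apply hsub_ee'
        intro w hw
        obtain ⟨t, rfl⟩ : w ∈ range f := hrf ▸ hw
        have : t ∈ f ⁻¹' Q := h ▸ mem_univ t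
        exact (hQV (mem_preimage.mp this)).2
      · exfalso
        set zz := min b b₂ - 1 with hzz
        have hz1 : zz ∈ f ⁻¹' P := by
          rw [hA]
          simp only [mem_Iio, hzz]
          have := min_le_left b b₂
          linarith
        have hz2 : zz ∈ f ⁻¹' Q := by
          rw [h]
          simp only [mem_Iio, hzz]
          have := min_le_right b b₂
          linarith
        exact hPQ (f zz) (mem_preimage.mp hz1) (mem_preimage.mp hz2)
      · exact ⟨a₂, h⟩
      · exfalso
        refine bounded_comp_false hf hf' (show y ∈ range f ∩ range f' from hVrr ▸ hyV)
          (fun hss => hsub_e'e (by rw [← hrf, ← hrf']; exact hss)) (a₂ := a₂) (b₂ := b₂) ?_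
        rw [hVrr, ← hQdef]
        exact h
    -- classify f' ⁻¹' Q : must be Iio d
    obtain ⟨d, hd⟩ : ∃ d, f' ⁻¹' Q = Iio d := by
      rcases open_conn_real hAQ'open hAQ'pre hAQ'ne with h | ⟨d₂, h⟩ | ⟨c₂, h⟩ | ⟨a₂, b₂, hlt, h⟩
      · exfalso
        apply hsub_e'e
        intro w hw
        obtain ⟨t, rfl⟩ : w ∈ range f' := hrf' ▸ hw
        have : t ∈ f' ⁻¹' Q := h ▸ mem_univ t
        exact (hQV (mem_preimage.mp this)).1
      · exact ⟨d₂, h⟩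
      · exfalso
        set zz := max c c₂ + 1 with hzz
        have hz1 : zz ∈ f' ⁻¹' P := by
          rw [hA']
          simp only [mem_Ioi, hzz]
          have := le_max_left c c₂
          linarith
        have hz2 : zz ∈ f' ⁻¹' Q := by
          rw [h]
          simp only [mem_Ioi, hzz]
          have := le_max_right c c₂
          linarith
        exact hPQ (f' zz) (mem_preimage.mp hz1) (mem_preimage.mp hz2)
      · exfalso
        refine bounded_comp_false hf' hf (show y ∈ range f' ∩ range f from hVrr' ▸ hyV)
          (fun hss => hsub_ee' (by rw [← hrf, ← hrf']; exact hss)) (a₂ := a₂) (b₂ := b₂) ?_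
        rw [hVrr', ← hQdef]
        exact h
    have hQa : f '' (Ioi a) = Q := by
      rw [← ha, image_preimage_eq_of_subset (hQV.trans hVf)]
    have hQd : f' '' (Iio d) = Q := by
      rw [← hd, image_preimage_eq_of_subset (hQV.trans hVf')]
    have hQ : f '' (Ioi a) = f' '' (Iio d) := hQa.trans hQd.symm
    -- order relations
    have hba : b ≤ a := by
      by_contra hab
      push_neg at hab
      set zz := (a + b) / 2 with hzz
      have hz1 : zz ∈ f ⁻¹' P := by
        rw [hA]
        simp only [mem_Iio, hzz]
        linarith
      have hz2 : zz ∈ f ⁻¹' Q := by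
        rw [ha]
        simp only [mem_Ioi, hzz]
        linarith
      exact hPQ (f zz) (mem_preimage.mp hz1) (mem_preimage.mp hz2)
    have hdc : d ≤ c := by
      by_contra hcd
      push_neg at hcd
      set zz := (c + d) / 2 with hzz
      have hz1 : zz ∈ f' ⁻¹' P := by
        rw [hA']
        simp only [mem_Ioi, hzz]
        linarith
      have hz2 : zz ∈ f' ⁻¹' Q := by
        rw [hd]
        simp only [mem_Iio, hzz]
        linarith
      exact hPQ (f' zz) (mem_preimage.mp hz1) (mem_preimage.mp hz2)
    -- endpoints of Q
    have hfa : f a ∉ e' := by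
      have haW : a ∉ f ⁻¹' V := not_mem_of_component hWo ht₁W (hQcomp.trans ha) (by simp)
        (by rw [closure_Ioi]; exact self_mem_Ici)
      intro hae'
      exact haW (by rw [mem_preimage]; exact ⟨hrf ▸ mem_range_self a, hae'⟩)
    -- second transition via negation
    obtain ⟨g₂', hg₂', hg₂'m, hg₂'im⟩ :=
      transition (isOpenEmbedding_negcomp hf) (isOpenEmbedding_negcomp hf')
        (b := -a) (c := -d)
        (by rw [image_negcomp_Iio, image_negcomp_Ioi, neg_neg, neg_neg]; exact hQ)
        (by
          rw [range_negcomp, hrf', neg_neg]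
          exact hfa)
    set g₂ : ℝ → ℝ := fun s => - g₂' (-s) with hg₂def
    have hg₂ : ∀ s ∈ Iio d, f (g₂ s) = f' s := by
      intro s hs
      have hsm : -s ∈ Ioi (-d) := by simp only [mem_Ioi]; simp only [mem_Iio] at hs; linarith
      have := hg₂' (-s) hsm
      rw [hg₂def]
      simp only
      rw [show f (-g₂' (-s)) = f (-(g₂' (-s))) from rfl]
      rw [this, neg_neg]
    have hg₂m : StrictMonoOn g₂ (Iio d) := by
      intro s hs t ht hst
      have hsm : -s ∈ Ioi (-d) := by simp only [mem_Ioi]; simp only [mem_Iio] at hs; linarith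
      have htm : -t ∈ Ioi (-d) := by simp only [mem_Ioi]; simp only [mem_Iio] at ht; linarith
      have := hg₂'m htm hsm (by linarith)
      simp only [hg₂def]
      linarith
    have hg₂im : g₂ '' (Iio d) = Ioi a := by
      apply Set.eq_of_subset_of_subset
      · rintro _ ⟨s, hs, rfl⟩
        have hsm : -s ∈ Ioi (-d) := by simp only [mem_Ioi]; simp only [mem_Iio] at hs; linarith
        have : g₂' (-s) ∈ (fun t => g₂' t) '' (Ioi (-d)) := mem_image_of_mem _ hsm
        rw [hg₂'im] at this
        simp only [mem_Iio] at this
        simp only [hg₂def, mem_Ioi]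
        linarith
      · intro w hw
        have hwm : -w ∈ Iio (-a) := by simp only [mem_Iio]; simp only [mem_Ioi] at hw; linarith
        obtain ⟨σ, hσ, hgσ⟩ : -w ∈ g₂' '' (Ioi (-d)) := hg₂'im ▸ hwm
        refine ⟨-σ, by simp only [mem_Iio]; simp only [mem_Ioi] at hσ; linarith, ?_⟩
        simp only [hg₂def, neg_neg]
        rw [hgσ, neg_neg]
    -- V = P ∪ Q
    have hVPQ : V = f' '' (Ioi c) ∪ f' '' (Iio d) := by
      rw [hPc, hQd]
      apply Set.eq_of_subset_of_subset
      · intro z hz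
        by_contra hznot
        obtain ⟨hz1, hz2⟩ := not_or.mp (fun hcon => hznot (by
          rcases hcon with h | h
          · exact Or.inl h
          · exact Or.inr h))
        set R := connectedComponentIn V z with hRdef
        have hzR : z ∈ R := mem_connectedComponentIn hz
        have hRV : R ⊆ V := connectedComponentIn_subset V z
        set t₂ := Function.invFun f z with ht₂def
        have ht₂ : f t₂ = z := Function.invFun_eq (hVf hz)
        have hRcomp : connectedComponentIn (f ⁻¹' V) t₂ = f ⁻¹' R :=
          (comp_preimage hf hVf hz ht₂).symm
        have hRopen : IsOpen (f ⁻¹' R) := by rw [← hRcomp]; exact hWo.connectedComponentIn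
        have hRpre : IsPreconnected (f ⁻¹' R) := by
          rw [← hRcomp]; exact isPreconnected_connectedComponentIn
        have hRne : (f ⁻¹' R).Nonempty := ⟨t₂, by rw [mem_preimage, ht₂]; exact hzR⟩
        have hRP : ∀ w, w ∈ R → w ∈ P → False := by
          intro w hwR hwP
          apply hz1
          have h1 : connectedComponentIn V z = connectedComponentIn V w :=
            connectedComponentIn_eq (show w ∈ connectedComponentIn V z from hwR)
          have h2 : connectedComponentIn V x = connectedComponentIn V w :=
            connectedComponentIn_eq (show w ∈ connectedComponentIn V x from hwP)
          show z ∈ connectedComponentIn V x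
          rw [h2, ← h1]
          exact mem_connectedComponentIn hz
        have hRQ : ∀ w, w ∈ R → w ∈ Q → False := by
          intro w hwR hwQ
          apply hz2
          have h1 : connectedComponentIn V z = connectedComponentIn V w :=
            connectedComponentIn_eq (show w ∈ connectedComponentIn V z from hwR)
          have h2 : connectedComponentIn V y = connectedComponentIn V w :=
            connectedComponentIn_eq (show w ∈ connectedComponentIn V y from hwQ)
          show z ∈ connectedComponentIn V y
          rw [h2, ← h1]
          exact mem_connectedComponentIn hz
        rcases open_conn_real hRopen hRpre hRne with h | ⟨b₃, h⟩ | ⟨a₃, h⟩ | ⟨a₃, b₃, hlt, h⟩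
        · apply hsub_ee'
          intro w hw
          obtain ⟨t, rfl⟩ : w ∈ range f := hrf ▸ hw
          have : t ∈ f ⁻¹' R := h ▸ mem_univ t
          exact (hRV (mem_preimage.mp this)).2
        · set zz := min b b₃ - 1 with hzz
          have hw1 : zz ∈ f ⁻¹' P := by
            rw [hA]
            simp only [mem_Iio, hzz]
            have := min_le_left b b₃
            linarith
          have hw2 : zz ∈ f ⁻¹' R := by
            rw [h]
            simp only [mem_Iio, hzz]
            have := min_le_right b b₃
            linarith
          exact hRP (f zz) (mem_preimage.mp hw2) (mem_preimage.mp hw1)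
        · set zz := max a a₃ + 1 with hzz
          have hw1 : zz ∈ f ⁻¹' Q := by
            rw [ha]
            simp only [mem_Ioi, hzz]
            have := le_max_left a a₃
            linarith
          have hw2 : zz ∈ f ⁻¹' R := by
            rw [h]
            simp only [mem_Ioi, hzz]
            have := le_max_right a a₃
            linarith
          exact hRQ (f zz) (mem_preimage.mp hw2) (mem_preimage.mp hw1)
        · refine bounded_comp_false hf hf' (show z ∈ range f ∩ range f' from hVrr ▸ hz)
            (fun hss => hsub_e'e (by rw [← hrf, ← hrf']; exact hss)) (a₂ := a₃) (b₂ := b₃) ?_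
          rw [hVrr, ← hRdef]
          exact h
      · rintro z (hz | hz)
        · exact hPV (hPc ▸ hz)
        · exact hQV (hQd ▸ hz)
    -- conclude via the circle construction
    have hVeq2 : range f ∩ range f' = f' '' (Ioi c) ∪ f' '' (Iio d) := by
      rw [hVrr]
      exact hVPQ
    exact hX.elim (Classical.choice
      (build_circle hf hf' hba hdc hP hQ hg₁ hg₁m hg₁im hg₂ hg₂m hg₂im hVeq2))

end Core

section Final

variable {X : Type*} [MetricSpace X] [CompactSpace X] [ConnectedSpace X]

theorem freeArc_disjoint (hX : IsEmpty (X ≃ₜ Circle)) {e e' : Set X}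
    (he : IsFreeArc e) (he' : IsFreeArc e') (hnee : e ≠ e') : Disjoint e e' := by
  classical
  by_contra hdis
  obtain ⟨x, hx⟩ := Set.not_disjoint_iff.mp hdis
  have hx' : x ∈ e ∩ e' := hx
  obtain ⟨f, hf, hrf⟩ := exists_param he.1 he.2.1
  obtain ⟨f', hf', hrf'⟩ := exists_param he'.1 he'.2.1
  set V := e ∩ e' with hVdef
  have hVo : IsOpen V := he.1.inter he'.1
  have hVf : V ⊆ range f := by rw [hrf]; exact inter_subset_left
  have hVf' : V ⊆ range f' := by rw [hrf']; exact inter_subset_right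
  set P := connectedComponentIn V x with hPdef
  have hPV : P ⊆ V := connectedComponentIn_subset V x
  have hxP : x ∈ P := mem_connectedComponentIn hx'
  have hsub_ee' : e ⊆ e' → False := fun hs => hnee (he.2.2 e' he'.1 he'.2.1 hs).symm
  have hsub_e'e : e' ⊆ e → False := fun hs => hnee (he'.2.2 e he.1 he.2.1 hs)
  have hVrr : range f ∩ range f' = V := by rw [hrf, hrf']
  have hVrr' : range f' ∩ range f = V := by rw [hrf, hrf', inter_comm]
  -- normalize f
  have hnormf : ∃ (F : ℝ → X) (b : ℝ), IsOpenEmbedding F ∧ range F = e ∧ F ⁻¹' P = Iio b := by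
    set t₀ := Function.invFun f x with ht₀def
    have ht₀ : f t₀ = x := Function.invFun_eq (hVf hx')
    have hAeq : connectedComponentIn (f ⁻¹' V) t₀ = f ⁻¹' P :=
      (comp_preimage hf hVf hx' ht₀).symm
    have hAopen : IsOpen (f ⁻¹' P) := by
      rw [← hAeq]
      exact (hVo.preimage hf.continuous).connectedComponentIn
    have hApre : IsPreconnected (f ⁻¹' P) := by
      rw [← hAeq]
      exact isPreconnected_connectedComponentIn
    have hAne : (f ⁻¹' P).Nonempty := ⟨t₀, by rw [mem_preimage, ht₀]; exact hxP⟩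
    rcases open_conn_real hAopen hApre hAne with h | ⟨b, h⟩ | ⟨a, h⟩ | ⟨a₂, b₂, hlt, h⟩
    · exfalso
      apply hsub_ee'
      intro w hw
      obtain ⟨t, rfl⟩ : w ∈ range f := hrf ▸ hw
      have : t ∈ f ⁻¹' P := h ▸ mem_univ t
      exact (hPV (mem_preimage.mp this)).2
    · exact ⟨f, b, hf, hrf, h⟩
    · refine ⟨fun t => f (-t), -a, isOpenEmbedding_negcomp hf, by rw [range_negcomp, hrf], ?_⟩
      ext t
      simp only [mem_preimage, mem_Iio]
      constructor
      · intro hm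
        have : -t ∈ f ⁻¹' P := hm
        rw [h] at this
        simp only [mem_Ioi] at this
        linarith
      · intro ht
        show f (-t) ∈ P
        have : -t ∈ Ioi a := by simp only [mem_Ioi]; linarith
        rw [← h] at this
        exact this
    · exfalso
      exact bounded_comp_false hf hf' (show x ∈ range f ∩ range f' from hVrr ▸ hx')
        (fun hss => hsub_e'e (by rw [← hrf, ← hrf']; exact hss)) (a₂ := a₂) (b₂ := b₂)
        (by rw [hVrr, ← hPdef]; exact h)
  -- normalize f'
  have hnormf' : ∃ (F' : ℝ → X) (c : ℝ), IsOpenEmbedding F' ∧ range F' = e' ∧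
      F' ⁻¹' P = Ioi c := by
    set t₀' := Function.invFun f' x with ht₀'def
    have ht₀' : f' t₀' = x := Function.invFun_eq (hVf' hx')
    have hAeq : connectedComponentIn (f' ⁻¹' V) t₀' = f' ⁻¹' P :=
      (comp_preimage hf' hVf' hx' ht₀').symm
    have hAopen : IsOpen (f' ⁻¹' P) := by
      rw [← hAeq]
      exact (hVo.preimage hf'.continuous).connectedComponentIn
    have hApre : IsPreconnected (f' ⁻¹' P) := by
      rw [← hAeq]
      exact isPreconnected_connectedComponentIn
    have hAne : (f' ⁻¹' P).Nonempty := ⟨t₀', by rw [mem_preimage, ht₀']; exact hxP⟩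
    rcases open_conn_real hAopen hApre hAne with h | ⟨b, h⟩ | ⟨a, h⟩ | ⟨a₂, b₂, hlt, h⟩
    · exfalso
      apply hsub_e'e
      intro w hw
      obtain ⟨t, rfl⟩ : w ∈ range f' := hrf' ▸ hw
      have : t ∈ f' ⁻¹' P := h ▸ mem_univ t
      exact (hPV (mem_preimage.mp this)).1
    · refine ⟨fun t => f' (-t), -b, isOpenEmbedding_negcomp hf', by rw [range_negcomp, hrf'], ?_⟩
      ext t
      simp only [mem_preimage, mem_Ioi]
      constructor
      · intro hm
        have : -t ∈ f' ⁻¹' P := hm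
        rw [h] at this
        simp only [mem_Iio] at this
        linarith
      · intro ht
        show f' (-t) ∈ P
        have : -t ∈ Iio b := by simp only [mem_Iio]; linarith
        rw [← h] at this
        exact this
    · exact ⟨f', a, hf', hrf', h⟩
    · exfalso
      exact bounded_comp_false hf' hf (show x ∈ range f' ∩ range f from hVrr' ▸ hx')
        (fun hss => hsub_ee' (by rw [← hrf, ← hrf']; exact hss)) (a₂ := a₂) (b₂ := b₂)
        (by rw [hVrr', ← hPdef]; exact h)
  obtain ⟨F, b, hF, hrF, hFA⟩ := hnormf
  obtain ⟨F', c, hF', hrF', hF'A⟩ := hnormf'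
  exact core hX he he' hnee hF hF' hrF hrF' hx' hFA hF'A

end Final

/-- In a metric Peano continuum not homeomorphic to the circle, the free
arcs are countable and form a zero-sequence: only finitely many have diameter > ε. -/
theorem stmt_7 {X : Type*} [MetricSpace X] [CompactSpace X] [ConnectedSpace X]
    [LocallyConnectedSpace X] [Nonempty X]
    (hX : IsEmpty (X ≃ₜ Circle)) :
    {e : Set X | IsFreeArc e}.Countable ∧
      ∀ ε : ℝ, 0 < ε → {e : Set X | IsFreeArc e ∧ ε < Metric.diam e}.Finite := by
  have hdisj : ∀ e e' : Set X, IsFreeArc e → IsFreeArc e' → e ≠ e' → Disjoint e e' :=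
    fun e e' he he' hne => freeArc_disjoint hX he he' hne
  exact ⟨arcs_countable (fun ε hε => arcs_finite hdisj hε),
    fun ε hε => arcs_finite hdisj hε⟩
end Helpers
end

section
/- Let X be a Peano continuum and let A and B be disjoint nonempty closed subsets of X with A ∪ B = ground(X). Then the set of free arcs of X whose closure meets both A and B is finite. In other words, every edge cut of a Peano continuum is finite. -/
open Topology Set Filter

/-- A parametrization of an open "arc-like" subset `e` by `Ioo 0 1`. -/
structure Chart {X : Type*} [TopologicalSpace X] (e : Set X) where
  p : ℝ → X
  q : X → ℝ
  maps : ∀ t ∈ Ioo (0:ℝ) 1, p t ∈ e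
  qmem : ∀ x ∈ e, q x ∈ Ioo (0:ℝ) 1
  left_inv : ∀ t ∈ Ioo (0:ℝ) 1, q (p t) = t
  right_inv : ∀ x ∈ e, p (q x) = x
  contp : ContinuousOn p (Ioo (0:ℝ) 1)
  contq : ContinuousOn q e
  open_p : ∀ V : Set ℝ, V ⊆ Ioo (0:ℝ) 1 → IsOpen V → IsOpen (p '' V)

namespace Chart

variable {X : Type*} [TopologicalSpace X] {e : Set X} (C : Chart e)

lemma image_Ioo : C.p '' (Ioo 0 1) = e := by
  apply Subset.antisymm
  · rintro x ⟨t, ht, rfl⟩; exact C.maps t ht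
  · intro x hx; exact ⟨C.q x, C.qmem x hx, C.right_inv x hx⟩

lemma injOn : InjOn C.p (Ioo 0 1) := by
  intro s hs t ht h
  have := C.left_inv s hs
  rw [h, C.left_inv t ht] at this
  exact this.symm

/-- Existence of a chart for a set homeomorphic to `Ioo 0 1`. -/
noncomputable def ofHomeomorph [Nonempty X] (he : IsOpen e) (h : e ≃ₜ Ioo (0:ℝ) 1) :
    Chart e := by
  classical
  refine
  { p := fun t => if ht : t ∈ Ioo (0:ℝ) 1 then (h.symm ⟨t, ht⟩ : X) else Classical.arbitrary X
    q := fun x => if hx : x ∈ e then (h ⟨x, hx⟩ : ℝ) else 0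
    maps := fun t ht => by simp only [dif_pos ht]; exact (h.symm ⟨t, ht⟩).2
    qmem := fun x hx => by simp only [dif_pos hx]; exact (h ⟨x, hx⟩).2
    left_inv := fun t ht => by
      simp only [dif_pos ht]
      have hx : ((h.symm ⟨t, ht⟩ : e) : X) ∈ e := (h.symm ⟨t, ht⟩).2
      simp only [dif_pos hx]
      have : h ⟨(h.symm ⟨t, ht⟩ : X), hx⟩ = h (h.symm ⟨t, ht⟩) := by
        congr 1
      rw [this, h.apply_symm_apply]
    right_inv := fun x hx => by
      simp only [dif_pos hx]
      have ht : ((h ⟨x, hx⟩ : Ioo (0:ℝ) 1) : ℝ) ∈ Ioo (0:ℝ) 1 := (h ⟨x, hx⟩).2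
      simp only [dif_pos ht]
      have : h.symm ⟨(h ⟨x, hx⟩ : ℝ), ht⟩ = h.symm (h ⟨x, hx⟩) := by congr 1
      rw [this, h.symm_apply_apply]
    contp := ?_
    contq := ?_
    open_p := ?_ }
  · rw [continuousOn_iff_continuous_restrict]
    have : (Ioo (0:ℝ) 1).domRestrict (fun t => if ht : t ∈ Ioo (0:ℝ) 1 then (h.symm ⟨t, ht⟩ : X)
        else Classical.arbitrary X) = fun s => (h.symm s : X) := by
      funext s; rw [domRestrict_apply, dif_pos s.2]
    rw [this]
    exact continuous_subtype_val.comp h.symm.continuous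
  · rw [continuousOn_iff_continuous_restrict]
    have : e.domRestrict (fun x => if hx : x ∈ e then (h ⟨x, hx⟩ : ℝ) else 0)
        = fun y => (h y : ℝ) := by
      funext y; rw [domRestrict_apply, dif_pos y.2]
    rw [this]
    exact continuous_subtype_val.comp h.continuous
  · intro V hV hVo
    have : (fun t => if ht : t ∈ Ioo (0:ℝ) 1 then (h.symm ⟨t, ht⟩ : X)
        else Classical.arbitrary X) '' V
        = (Subtype.val : e → X) '' (h.symm '' (Subtype.val ⁻¹' V)) := by
      ext x
      constructor
      · rintro ⟨t, htV, rfl⟩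
        have ht := hV htV
        refine ⟨h.symm ⟨t, ht⟩, ⟨⟨t, ht⟩, htV, rfl⟩, by simp [ht]⟩
      · rintro ⟨y, ⟨s, hsV, rfl⟩, rfl⟩
        exact ⟨s, hsV, by simp [s.2]⟩
    rw [this]
    exact he.isOpenMap_subtype_val _ (h.symm.isOpenMap _ (isOpen_induced hVo))

noncomputable def ofFreeArc [Nonempty X] (he : IsFreeArc e) : Chart e :=
  ofHomeomorph he.1 he.2.1.some

/-- Reflect a chart by `t ↦ 1 - t`. -/
noncomputable def reflect : Chart e where
  p := fun t => C.p (1 - t)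
  q := fun x => 1 - C.q x
  maps := fun t ht => C.maps (1 - t)
    (by rw [mem_Ioo] at ht ⊢; constructor <;> [linarith [ht.2]; linarith [ht.1]])
  qmem := fun x hx => by
    have h2 := C.qmem x hx
    rw [mem_Ioo] at h2 ⊢
    constructor <;> [linarith [h2.2]; linarith [h2.1]]
  left_inv := fun t ht => by
    rw [mem_Ioo] at ht
    have h1 : (1:ℝ) - t ∈ Ioo (0:ℝ) 1 := by constructor <;> [linarith [ht.2]; linarith [ht.1]]
    rw [C.left_inv _ h1]; ring
  right_inv := fun x hx => by rw [sub_sub_cancel, C.right_inv x hx]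
  contp := by
    have : ContinuousOn (fun t : ℝ => (1:ℝ) - t) (Ioo (0:ℝ) 1) :=
      (continuous_const.sub continuous_id).continuousOn
    refine ContinuousOn.comp C.contp this ?_
    intro t ht; exact ⟨by linarith [ht.2], by linarith [ht.1]⟩
  contq := (continuousOn_const.sub C.contq)
  open_p := by
    intro V hV hVo
    have himg : (fun t => C.p (1 - t)) '' V = C.p '' ((fun t : ℝ => 1 - t) '' V) := by
      rw [image_image]
    rw [himg]
    refine C.open_p _ ?_ ?_
    · rintro s ⟨t, htV, rfl⟩
      have h2 := hV htV
      rw [mem_Ioo] at h2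
      exact ⟨by dsimp only; linarith [h2.2], by dsimp only; linarith [h2.1]⟩
    · have : (fun t : ℝ => 1 - t) '' V = (fun t : ℝ => 1 - t) ⁻¹' V := by
        ext s
        constructor
        · rintro ⟨t, htV, rfl⟩; simpa using htV
        · intro hs; exact ⟨1 - s, hs, by ring⟩
      rw [this]
      exact hVo.preimage (continuous_const.sub continuous_id)

/-- `q` maps open subsets of `e` to open sets. -/
lemma open_q (he : IsOpen e) : ∀ W : Set X, W ⊆ e → IsOpen W → IsOpen (C.q '' W) := by
  intro W hW hWo
  have : C.q '' W = Ioo (0:ℝ) 1 ∩ C.p ⁻¹' W := by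
    ext t
    constructor
    · rintro ⟨x, hxW, rfl⟩
      exact ⟨C.qmem x (hW hxW), by simpa [C.right_inv x (hW hxW)] using hxW⟩
    · rintro ⟨ht, htW⟩
      exact ⟨C.p t, htW, C.left_inv t ht⟩
  rw [this]
  exact C.contp.isOpen_inter_preimage isOpen_Ioo hWo

end Chart


namespace FAproof

/-- A nonempty open preconnected subset of `Ioo 0 1` is an interval `Ioo a b`. -/
lemma open_preconnected_eq_Ioo {S : Set ℝ} (hS : IsOpen S) (hc : IsPreconnected S)
    (hne : S.Nonempty) (hsub : S ⊆ Ioo 0 1) :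
    ∃ a b : ℝ, 0 ≤ a ∧ a < b ∧ b ≤ 1 ∧ S = Ioo a b := by
  have hbdd : BddBelow S := ⟨0, fun x hx => (hsub hx).1.le⟩
  have hbdd' : BddAbove S := ⟨1, fun x hx => (hsub hx).2.le⟩
  set a := sInf S with ha
  set b := sSup S with hb
  have hord : OrdConnected S := hc.ordConnected
  have hSIoo : S ⊆ Ioo a b := by
    intro x hx
    obtain ⟨ε, hε, hball⟩ := Metric.isOpen_iff.1 hS x hx
    have h1 : x - ε / 2 ∈ S := by
      apply hball; rw [Metric.mem_ball, Real.dist_eq,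
        show x - ε / 2 - x = -(ε/2) by ring, abs_neg, abs_of_pos (by linarith)]
      linarith
    have h2 : x + ε / 2 ∈ S := by
      apply hball; rw [Metric.mem_ball, Real.dist_eq,
        show x + ε / 2 - x = ε/2 by ring, abs_of_pos (by linarith)]
      linarith
    exact ⟨lt_of_le_of_lt (csInf_le hbdd h1) (by linarith),
      lt_of_lt_of_le (by linarith : x < x + ε / 2) (le_csSup hbdd' h2)⟩
  obtain ⟨x₀, hx₀⟩ := id hne
  refine ⟨a, b, le_csInf hne (fun x hx => (hsub hx).1.le),
    lt_of_le_of_lt (csInf_le hbdd hx₀) (hSIoo hx₀).2,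
    csSup_le hne (fun x hx => (hsub hx).2.le), ?_⟩
  apply Subset.antisymm hSIoo
  intro x hx
  obtain ⟨u, huS, hu⟩ := exists_lt_of_csInf_lt hne hx.1
  obtain ⟨v, hvS, hv⟩ := exists_lt_of_lt_csSup hne hx.2
  exact hord.out huS hvS ⟨hu.le, hv.le⟩

/-- The endpoints of an interval component of an open set are not in the set. -/
lemma endpoints_not_mem {U : Set ℝ} (hU : IsOpen U) {t a b : ℝ}
    (hC : connectedComponentIn U t = Ioo a b) (hab : a < b) : a ∉ U ∧ b ∉ U := by
  have key : ∀ x : ℝ, x ∈ U → (∃ z, z ∈ Ioo a b ∧ z ∈ connectedComponentIn U x) →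
      x ∈ Ioo a b := by
    rintro x hxU ⟨z, hz1, hz2⟩
    have hx' : x ∈ connectedComponentIn U x := mem_connectedComponentIn hxU
    rw [connectedComponentIn_eq hz2] at hx'
    rwa [← connectedComponentIn_eq (show z ∈ connectedComponentIn U t from hC ▸ hz1), hC] at hx'
  constructor
  · intro haU
    obtain ⟨ε, hε, hball⟩ := Metric.isOpen_iff.1 hU a haU
    set z := (a + min b (a + ε / 2)) / 2 with hz
    have hz1 : a < z := by
      have : a < min b (a + ε / 2) := lt_min hab (by linarith)
      rw [hz]; linarith
    have hz2 : z < b := by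
      have h1 : min b (a + ε/2) ≤ b := min_le_left _ _
      rw [hz]; linarith
    have hz3 : z < a + ε := by
      have h1 : min b (a + ε/2) ≤ a + ε/2 := min_le_right _ _
      rw [hz]; linarith
    have hconn : Ioo (a - ε) (a + ε) ⊆ connectedComponentIn U a := by
      apply isPreconnected_Ioo.subset_connectedComponentIn
      · exact ⟨by linarith, by linarith⟩
      · intro y hy; apply hball
        rw [Metric.mem_ball, Real.dist_eq, abs_lt]
        constructor <;> [linarith [hy.1]; linarith [hy.2]]
    have := key a haU ⟨z, ⟨hz1, hz2⟩, hconn ⟨by linarith, hz3⟩⟩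
    exact absurd this.1 (lt_irrefl a)
  · intro hbU
    obtain ⟨ε, hε, hball⟩ := Metric.isOpen_iff.1 hU b hbU
    set z := (max a (b - ε / 2) + b) / 2 with hz
    have hz1 : z < b := by
      have : max a (b - ε / 2) < b := max_lt hab (by linarith)
      rw [hz]; linarith
    have hz2 : a < z := by
      have h1 : a ≤ max a (b - ε/2) := le_max_left _ _
      rw [hz]; linarith
    have hz3 : b - ε < z := by
      have h1 : b - ε/2 ≤ max a (b - ε/2) := le_max_right _ _
      rw [hz]; linarith
    have hconn : Ioo (b - ε) (b + ε) ⊆ connectedComponentIn U b := by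
      apply isPreconnected_Ioo.subset_connectedComponentIn
      · exact ⟨by linarith, by linarith⟩
      · intro y hy; apply hball
        rw [Metric.mem_ball, Real.dist_eq, abs_lt]
        constructor <;> [linarith [hy.1]; linarith [hy.2]]
    have := key b hbU ⟨z, ⟨hz2, hz1⟩, hconn ⟨hz3, by linarith⟩⟩
    exact absurd this.2 (lt_irrefl b)

/-- Limits of a strictly monotone surjection `Ioo a b → Ioo c d` at the endpoints. -/
lemma tendsto_mono_Ioo {τ : ℝ → ℝ} {a b c d : ℝ} (hab : a < b)
    (hm : StrictMonoOn τ (Ioo a b)) (him : τ '' Ioo a b = Ioo c d) :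
    Tendsto τ (𝓝[Ioo a b] b) (𝓝 d) ∧ Tendsto τ (𝓝[Ioo a b] a) (𝓝 c) := by
  have hmemIoo : ∀ t ∈ Ioo a b, τ t ∈ Ioo c d := by
    intro t ht; rw [← him]; exact mem_image_of_mem τ ht
  have hcd : c < d := by
    obtain ⟨x, hx⟩ := nonempty_Ioo.2 hab
    exact (hmemIoo x hx).1.trans (hmemIoo x hx).2
  constructor
  · rw [tendsto_order]
    constructor
    · intro y hy
      have hyd : max y c < d := max_lt hy hcd
      have hv : (max y c + d) / 2 ∈ Ioo c d :=
        ⟨lt_of_le_of_lt (le_max_right y c) (by linarith), by linarith⟩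
      rw [← him] at hv
      obtain ⟨s, hs, hτs⟩ := hv
      filter_upwards [eventually_mem_nhdsWithin,
        (eventually_gt_nhds hs.2).filter_mono nhdsWithin_le_nhds] with t htmem hts
      have h1 : τ s < τ t := hm hs htmem hts
      have h2 : y ≤ max y c := le_max_left y c
      linarith
    · intro y hy
      filter_upwards [eventually_mem_nhdsWithin] with t ht
      exact lt_trans (hmemIoo t ht).2 hy
  · rw [tendsto_order]
    constructor
    · intro y hy
      filter_upwards [eventually_mem_nhdsWithin] with t ht
      exact lt_trans hy (hmemIoo t ht).1
    · intro y hy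
      have hyc : c < min y d := lt_min hy hcd
      have hv : (c + min y d) / 2 ∈ Ioo c d :=
        ⟨by linarith, lt_of_lt_of_le (by linarith) (min_le_right y d)⟩
      rw [← him] at hv
      obtain ⟨s, hs, hτs⟩ := hv
      filter_upwards [eventually_mem_nhdsWithin,
        (eventually_lt_nhds hs.1).filter_mono nhdsWithin_le_nhds] with t htmem hts
      have h1 : τ t < τ s := hm htmem hs hts
      have h2 : min y d ≤ y := min_le_left y d
      linarith

/-- Anti version. -/
lemma tendsto_anti_Ioo {τ : ℝ → ℝ} {a b c d : ℝ} (hab : a < b)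
    (hm : StrictAntiOn τ (Ioo a b)) (him : τ '' Ioo a b = Ioo c d) :
    Tendsto τ (𝓝[Ioo a b] b) (𝓝 c) ∧ Tendsto τ (𝓝[Ioo a b] a) (𝓝 d) := by
  have hm' : StrictMonoOn (fun t => -τ t) (Ioo a b) := fun s hs t ht hst =>
    neg_lt_neg (hm hs ht hst)
  have him' : (fun t => -τ t) '' Ioo a b = Ioo (-d) (-c) := by
    have : (fun t => -τ t) '' Ioo a b = (fun x : ℝ => -x) '' (τ '' Ioo a b) := by
      rw [image_image]
    rw [this, him]
    ext x; simp only [mem_image, mem_Ioo]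
    constructor
    · rintro ⟨y, hy, rfl⟩; exact ⟨by linarith [hy.2], by linarith [hy.1]⟩
    · intro hx; exact ⟨-x, ⟨by linarith [hx.2], by linarith [hx.1]⟩, by ring⟩
  obtain ⟨h1, h2⟩ := tendsto_mono_Ioo hab hm' him'
  constructor
  · have := h1.neg; simpa using this
  · have := h2.neg; simpa using this

end FAproof

section Part3
open Chart
namespace FAproof

variable {X : Type*} [TopologicalSpace X] {e e' : Set X}

/-- Parameters in the chart of `e` whose image lies in `e'`. -/
def interU (C : Chart e) (e' : Set X) : Set ℝ := Ioo 0 1 ∩ C.p ⁻¹' e'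

lemma interU_open (C : Chart e) (he' : IsOpen e') : IsOpen (interU C e') :=
  C.contp.isOpen_inter_preimage isOpen_Ioo he'

lemma interU_subset (C : Chart e) : interU C e' ⊆ Ioo 0 1 := inter_subset_left

/-- The transition map. -/
def tr (C : Chart e) (C' : Chart e') : ℝ → ℝ := fun t => C'.q (C.p t)

lemma tr_mem (C : Chart e) (C' : Chart e') {t : ℝ} (ht : t ∈ interU C e') :
    tr C C' t ∈ interU C' e := by
  refine ⟨C'.qmem _ ht.2, ?_⟩
  show C'.p (C'.q (C.p t)) ∈ e
  rw [C'.right_inv _ ht.2]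
  exact C.maps t ht.1

lemma tr_tr (C : Chart e) (C' : Chart e') {t : ℝ} (ht : t ∈ interU C e') :
    tr C' C (tr C C' t) = t := by
  show C.q (C'.p (C'.q (C.p t))) = t
  rw [C'.right_inv _ ht.2, C.left_inv _ ht.1]

lemma tr_contOn (C : Chart e) (C' : Chart e') : ContinuousOn (tr C C') (interU C e') :=
  C'.contq.comp (C.contp.mono (interU_subset C)) (fun _ ht => ht.2)

lemma tr_injOn (C : Chart e) (C' : Chart e') : InjOn (tr C C') (interU C e') := by
  intro s hs t ht h
  have h1 := tr_tr C C' hs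
  rw [h, tr_tr C C' ht] at h1
  exact h1.symm

lemma tr_p_eq (C : Chart e) (C' : Chart e') {t : ℝ} (ht : t ∈ interU C e') :
    C'.p (tr C C' t) = C.p t := C'.right_inv _ ht.2

lemma tr_image_component_subset (C : Chart e) (C' : Chart e') {t₀ : ℝ}
    (ht₀ : t₀ ∈ interU C e') :
    tr C C' '' connectedComponentIn (interU C e') t₀ ⊆
      connectedComponentIn (interU C' e) (tr C C' t₀) := by
  apply IsPreconnected.subset_connectedComponentIn
  · exact isPreconnected_connectedComponentIn.image _
      ((tr_contOn C C').mono (connectedComponentIn_subset _ _))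
  · exact mem_image_of_mem _ (mem_connectedComponentIn ht₀)
  · rintro s ⟨u, hu, rfl⟩
    exact tr_mem C C' (connectedComponentIn_subset _ _ hu)

lemma tr_image_component (C : Chart e) (C' : Chart e') {t₀ : ℝ} (ht₀ : t₀ ∈ interU C e') :
    tr C C' '' connectedComponentIn (interU C e') t₀ =
      connectedComponentIn (interU C' e) (tr C C' t₀) := by
  apply Subset.antisymm (tr_image_component_subset C C' ht₀)
  intro s hs
  have hback := tr_image_component_subset C' C (tr_mem C C' ht₀)
  rw [tr_tr C C' ht₀] at hback
  have hsV : s ∈ interU C' e := connectedComponentIn_subset _ _ hs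
  have h1 : tr C' C s ∈ connectedComponentIn (interU C e') t₀ :=
    hback (mem_image_of_mem _ hs)
  refine ⟨tr C' C s, h1, ?_⟩
  exact tr_tr C' C hsV

/-- An interior endpoint of a component of `interU` cannot have an interior transition limit. -/
lemma not_interior_limit [T2Space X] (C : Chart e) (C' : Chart e') {S : Set ℝ}
    (hS : S ⊆ interU C e') {x ρ : ℝ} (hx : x ∈ Ioo (0:ℝ) 1) (hxU : x ∉ interU C e')
    (hρ : ρ ∈ Ioo (0:ℝ) 1) (hne : (𝓝[S] x).NeBot) (hlim : Tendsto (tr C C') (𝓝[S] x) (𝓝 ρ)) :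
    False := by
  have h1 : Tendsto C.p (𝓝[S] x) (𝓝 (C.p x)) :=
    ((C.contp.continuousAt (isOpen_Ioo.mem_nhds hx)).tendsto).mono_left nhdsWithin_le_nhds
  have h2 : Tendsto (fun t => C'.p (tr C C' t)) (𝓝[S] x) (𝓝 (C'.p ρ)) :=
    ((C'.contp.continuousAt (isOpen_Ioo.mem_nhds hρ)).tendsto).comp hlim
  have heq : ∀ᶠ t in 𝓝[S] x, C'.p (tr C C' t) = C.p t := by
    filter_upwards [eventually_mem_nhdsWithin] with t ht
    exact tr_p_eq C C' (hS ht)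
  have hkey : C'.p ρ = C.p x := tendsto_nhds_unique (h2.congr' heq) h1
  apply hxU
  refine ⟨hx, ?_⟩
  show C.p x ∈ e'
  rw [← hkey]
  exact C'.maps ρ hρ

/-- Full structure of a component of the overlap. -/
lemma comp_struct [T2Space X] (C : Chart e) (C' : Chart e') (he : IsOpen e) (he' : IsOpen e')
    {t₀ : ℝ} (ht₀ : t₀ ∈ interU C e') :
    ∃ a b c d : ℝ, 0 ≤ a ∧ a < b ∧ b ≤ 1 ∧ 0 ≤ c ∧ c < d ∧ d ≤ 1 ∧
      connectedComponentIn (interU C e') t₀ = Ioo a b ∧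
      connectedComponentIn (interU C' e) (tr C C' t₀) = Ioo c d ∧
      tr C C' '' Ioo a b = Ioo c d ∧
      ∃ ρa ρb : ℝ,
        Tendsto (tr C C') (𝓝[Ioo a b] a) (𝓝 ρa) ∧
        Tendsto (tr C C') (𝓝[Ioo a b] b) (𝓝 ρb) ∧
        ((StrictMonoOn (tr C C') (Ioo a b) ∧ ρa = c ∧ ρb = d) ∨
         (StrictAntiOn (tr C C') (Ioo a b) ∧ ρa = d ∧ ρb = c)) ∧
        (0 < a → ρa ∉ Ioo (0:ℝ) 1) ∧ (b < 1 → ρb ∉ Ioo (0:ℝ) 1) := by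
  have hUopen : IsOpen (interU C e') := interU_open C he'
  obtain ⟨a, b, ha0, hab, hb1, hC⟩ := open_preconnected_eq_Ioo
    (hUopen.connectedComponentIn) isPreconnected_connectedComponentIn
    ⟨t₀, mem_connectedComponentIn ht₀⟩ ((connectedComponentIn_subset _ _).trans (interU_subset C))
  obtain ⟨c, d, hc0, hcd, hd1, hD⟩ := open_preconnected_eq_Ioo
    ((interU_open C' he).connectedComponentIn) isPreconnected_connectedComponentIn
    ⟨tr C C' t₀, mem_connectedComponentIn (tr_mem C C' ht₀)⟩
    ((connectedComponentIn_subset _ _).trans (interU_subset C'))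
  have himg : tr C C' '' Ioo a b = Ioo c d := by
    rw [← hC, ← hD]; exact tr_image_component C C' ht₀
  have hsub : Ioo a b ⊆ interU C e' := hC ▸ connectedComponentIn_subset _ _
  have hend := endpoints_not_mem hUopen hC hab
  have haIoo : 0 < a → a ∈ Ioo (0:ℝ) 1 := fun h => ⟨h, lt_of_lt_of_le hab hb1⟩
  have hbIoo : b < 1 → b ∈ Ioo (0:ℝ) 1 := fun h => ⟨lt_of_le_of_lt ha0 hab, h⟩
  have hmoa := ContinuousOn.strictMonoOn_of_injOn_Ioo hab
    ((tr_contOn C C').mono hsub) ((tr_injOn C C').mono hsub)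
  refine ⟨a, b, c, d, ha0, hab, hb1, hc0, hcd, hd1, hC, hD, himg, ?_⟩
  rcases hmoa with hmono | hanti
  · obtain ⟨hlb, hla⟩ := tendsto_mono_Ioo hab hmono himg
    refine ⟨c, d, hla, hlb, Or.inl ⟨hmono, rfl, rfl⟩, ?_, ?_⟩
    · intro ha hmem
      exact not_interior_limit C C' hsub (haIoo ha) hend.1 hmem
        (left_nhdsWithin_Ioo_neBot hab) hla
    · intro hb hmem
      exact not_interior_limit C C' hsub (hbIoo hb) hend.2 hmem
        (right_nhdsWithin_Ioo_neBot hab) hlb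
  · obtain ⟨hlb, hla⟩ := tendsto_anti_Ioo hab hanti himg
    refine ⟨d, c, hla, hlb, Or.inr ⟨hanti, rfl, rfl⟩, ?_, ?_⟩
    · intro ha hmem
      exact not_interior_limit C C' hsub (haIoo ha) hend.1 hmem
        (left_nhdsWithin_Ioo_neBot hab) hla
    · intro hb hmem
      exact not_interior_limit C C' hsub (hbIoo hb) hend.2 hmem
        (right_nhdsWithin_Ioo_neBot hab) hlb

end FAproof
end Part3

section Part4
namespace FAproof

/-- A continuous strictly monotone map on a set is open on open subsets. -/
lemma mono_image_open {g : ℝ → ℝ} {s W : Set ℝ} (hm : StrictMonoOn g s)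
    (hc : ContinuousOn g s) (hW : W ⊆ s) (hWo : IsOpen W) : IsOpen (g '' W) := by
  rw [isOpen_iff_mem_nhds]
  rintro y ⟨x, hxW, rfl⟩
  obtain ⟨ε, hε, hball⟩ := Metric.isOpen_iff.1 hWo x hxW
  have hIcc : Icc (x - ε/2) (x + ε/2) ⊆ W := by
    intro z hz
    apply hball
    rw [Metric.mem_ball, Real.dist_eq, abs_lt]
    constructor <;> [linarith [hz.1]; linarith [hz.2]]
  have h1 : x - ε/2 ∈ W := hIcc ⟨by linarith, by linarith⟩
  have h2 : x + ε/2 ∈ W := hIcc ⟨by linarith, by linarith⟩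
  have hsub : Ioo (g (x - ε/2)) (g (x + ε/2)) ⊆ g '' W := by
    refine (intermediate_value_Ioo (by linarith) (hc.mono (hIcc.trans hW))).trans ?_
    apply image_mono
    intro z hz
    exact hIcc ⟨hz.1.le, hz.2.le⟩
  rw [mem_nhds_iff]
  exact ⟨Ioo (g (x - ε/2)) (g (x + ε/2)), hsub, isOpen_Ioo,
    ⟨hm (hW h1) (hW hxW) (by linarith), hm (hW hxW) (hW h2) (by linarith)⟩⟩

variable {X : Type*} [TopologicalSpace X] [T2Space X] {e e' : Set X}

/-- The gluing construction: if the overlap of two arc-like sets is a single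
"end to end" overlap, the union is homeomorphic to an interval. -/
lemma glue_homeo (C : Chart e) (C' : Chart e') {a d : ℝ}
    (ha : 0 < a) (ha1 : a < 1) (hd0 : 0 < d) (hd1 : d < 1)
    (hU : interU C e' = Ioo a 1) (hV : interU C' e = Ioo 0 d)
    (hmono : StrictMonoOn (tr C C') (Ioo a 1))
    (himg : tr C C' '' Ioo a 1 = Ioo 0 d) :
    Nonempty (↥(e ∪ e') ≃ₜ ↥(Ioo (0:ℝ) 1)) := by
  classical
  set τ := tr C C' with hτ
  set aff : ℝ → ℝ := fun t => d + (t - 1) * (1 - d) with haff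
  set G : ℝ → ℝ := fun t => if t < 1 then τ t else aff t with hG
  set F : ℝ → X := fun t => if t < 1 then C.p t else C'.p (aff t) with hF
  have hτmem : ∀ t ∈ Ioo a 1, τ t ∈ Ioo 0 d := by
    intro t ht; rw [← himg]; exact mem_image_of_mem τ ht
  have haffmem : ∀ t ∈ Ico (1:ℝ) 2, aff t ∈ Ico d 1 := by
    intro t ht
    constructor
    · have : (t - 1) * (1 - d) ≥ 0 := mul_nonneg (by linarith [ht.1]) (by linarith)
      simp only [haff]; linarith
    · have : (t - 1) * (1 - d) < 1 - d := by
        have := ht.2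
        nlinarith
      simp only [haff]; linarith
  have hGmono : StrictMonoOn G (Ioo a 2) := by
    intro s hs t ht hst
    by_cases hs1 : s < 1 <;> by_cases ht1 : t < 1
    · simp only [hG, if_pos hs1, if_pos ht1]
      exact hmono ⟨hs.1, hs1⟩ ⟨ht.1, ht1⟩ hst
    · simp only [hG, if_pos hs1, if_neg ht1]
      calc τ s < d := (hτmem s ⟨hs.1, hs1⟩).2
        _ ≤ aff t := (haffmem t ⟨not_lt.1 ht1, ht.2⟩).1
    · exact absurd (hst.trans ht1) hs1
    · simp only [hG, if_neg hs1, if_neg ht1, haff]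
      have : s - 1 < t - 1 := by linarith
      nlinarith
  have hGmem : ∀ t ∈ Ioo a 2, G t ∈ Ioo (0:ℝ) 1 := by
    intro t ht
    by_cases ht1 : t < 1
    · simp only [hG, if_pos ht1]
      have := hτmem t ⟨ht.1, ht1⟩
      exact ⟨this.1, this.2.trans hd1⟩
    · simp only [hG, if_neg ht1]
      have := haffmem t ⟨not_lt.1 ht1, ht.2⟩
      exact ⟨lt_of_lt_of_le hd0 this.1, this.2⟩
  have hτtendsto : Tendsto τ (𝓝[Ioo a 1] 1) (𝓝 d) := (tendsto_mono_Ioo ha1 hmono himg).1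
  have hGcont : ContinuousOn G (Ioo a 2) := by
    intro t ht
    rcases lt_trichotomy t 1 with ht1 | ht1 | ht1
    · have hta : ContinuousAt τ t := by
        have := (tr_contOn C C').continuousAt (x := t)
          (by rw [hU]; exact isOpen_Ioo.mem_nhds ⟨ht.1, ht1⟩)
        rwa [hτ]
      have : ContinuousAt G t := by
        apply hta.congr
        filter_upwards [Iio_mem_nhds ht1] with s hs
        show τ s = if s < 1 then τ s else aff s
        rw [if_pos (show s < 1 from hs)]
      exact this.continuousWithinAt
    · subst ht1
      have hG1 : G 1 = d := by simp [hG, haff]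
      have cw1 : ContinuousWithinAt G (Ioo a 1) 1 := by
        unfold ContinuousWithinAt
        rw [hG1]
        apply hτtendsto.congr'
        filter_upwards [eventually_mem_nhdsWithin] with s hs
        simp only [hG, if_pos hs.2]
      have cw2 : ContinuousWithinAt G (Ico 1 2) 1 := by
        have hcC : ContinuousWithinAt aff (Ico (1:ℝ) 2) 1 :=
          ((continuous_const.add ((continuous_id.sub continuous_const).mul
            continuous_const))).continuousWithinAt
        apply hcC.congr
        · intro s hs
          simp only [hG, if_neg (not_lt.2 hs.1)]
        · simp [hG, haff]
      exact (cw1.union cw2).mono (by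
        intro s hs
        rcases lt_or_ge s 1 with h | h
        · exact Or.inl ⟨hs.1, h⟩
        · exact Or.inr ⟨h, hs.2⟩)
    · have : ContinuousAt G t := by
        have hcC : ContinuousAt aff t :=
          ((continuous_const.add ((continuous_id.sub continuous_const).mul
            continuous_const))).continuousAt
        apply hcC.congr
        filter_upwards [Ioi_mem_nhds ht1] with s hs
        show aff s = if s < 1 then τ s else aff s
        rw [if_neg (not_lt.2 (le_of_lt (show 1 < s from hs)))]
      exact this.continuousWithinAt
  have hFeq : ∀ t ∈ Ioo a 2, F t = C'.p (G t) := by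
    intro t ht
    by_cases ht1 : t < 1
    · simp only [hF, hG, if_pos ht1]
      exact (tr_p_eq C C' (by rw [hU]; exact ⟨ht.1, ht1⟩)).symm
    · simp only [hF, hG, if_neg ht1]
  have hFcont : ContinuousOn F (Ioo 0 2) := by
    intro t ht
    rcases lt_or_ge t 1 with ht1 | ht1
    · have h1 : ContinuousOn F (Ioo 0 1) := by
        apply C.contp.congr
        intro s hs
        simp only [hF, if_pos hs.2]
      exact ((h1.continuousAt (isOpen_Ioo.mem_nhds ⟨ht.1, ht1⟩)).continuousWithinAt)
    · have h2 : ContinuousOn F (Ioo a 2) := by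
        apply ContinuousOn.congr (f := fun t => C'.p (G t)) ?_ hFeq
        exact C'.contp.comp hGcont hGmem
      exact ((h2.continuousAt (isOpen_Ioo.mem_nhds ⟨lt_of_lt_of_le ha1 ht1, ht.2⟩)).continuousWithinAt)
  have hFmem : ∀ t ∈ Ioo (0:ℝ) 2, F t ∈ e ∪ e' := by
    intro t ht
    by_cases ht1 : t < 1
    · left; simp only [hF, if_pos ht1]; exact C.maps t ⟨ht.1, ht1⟩
    · right; simp only [hF, if_neg ht1]
      have := haffmem t ⟨not_lt.1 ht1, ht.2⟩
      exact C'.maps _ ⟨lt_of_lt_of_le hd0 this.1, this.2⟩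
  have hnotmem : ∀ s ∈ Ico d 1, C'.p s ∉ e := by
    intro s hs hmem
    have : s ∈ interU C' e := ⟨⟨lt_of_lt_of_le hd0 hs.1, hs.2⟩, hmem⟩
    rw [hV] at this
    exact absurd this.2 (not_lt.2 hs.1)
  have hFinj : InjOn F (Ioo 0 2) := by
    intro s hs t ht heq
    by_cases hs1 : s < 1 <;> by_cases ht1 : t < 1
    · simp only [hF, if_pos hs1, if_pos ht1] at heq
      exact C.injOn ⟨hs.1, hs1⟩ ⟨ht.1, ht1⟩ heq
    · simp only [hF, if_pos hs1, if_neg ht1] at heq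
      exact absurd (heq ▸ C.maps s ⟨hs.1, hs1⟩)
        (hnotmem _ (haffmem t ⟨not_lt.1 ht1, ht.2⟩))
    · simp only [hF, if_neg hs1, if_pos ht1] at heq
      have hmem : C'.p (aff s) ∈ e := by rw [heq]; exact C.maps t ⟨ht.1, ht1⟩
      exact absurd hmem (hnotmem _ (haffmem s ⟨not_lt.1 hs1, hs.2⟩))
    · simp only [hF, if_neg hs1, if_neg ht1] at heq
      have h1 := C'.injOn (by
          have := haffmem s ⟨not_lt.1 hs1, hs.2⟩
          exact ⟨lt_of_lt_of_le hd0 this.1, this.2⟩) (by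
          have := haffmem t ⟨not_lt.1 ht1, ht.2⟩
          exact ⟨lt_of_lt_of_le hd0 this.1, this.2⟩) heq
      simp only [haff] at h1
      have hd' : (1:ℝ) - d ≠ 0 := by linarith
      field_simp at h1
      rcases mul_eq_zero.1 (show (s - t) * (1 - d) = 0 by linarith) with h1 | h1
      · linarith
      · exact absurd h1 hd'
  have hFsurj : e ∪ e' ⊆ F '' Ioo 0 2 := by
    have hecase : ∀ x ∈ e, x ∈ F '' Ioo 0 2 := by
      intro x hx
      refine ⟨C.q x, ?_, ?_⟩
      · have := C.qmem x hx
        exact ⟨this.1, this.2.trans (by norm_num)⟩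
      · simp only [hF, if_pos (C.qmem x hx).2]
        exact C.right_inv x hx
    intro x hx
    rcases hx with hx | hx
    · exact hecase x hx
    · set s := C'.q x with hs
      have hsIoo := C'.qmem x hx
      have hxs : C'.p s = x := C'.right_inv x hx
      rcases lt_or_ge s d with hsd | hsd
      · apply hecase
        have : s ∈ interU C' e := by rw [hV]; exact ⟨hsIoo.1, hsd⟩
        rw [← hxs]; exact this.2
      · refine ⟨1 + (s - d) / (1 - d), ?_, ?_⟩
        · have h1 : (s - d) / (1 - d) < 1 := by
            rw [div_lt_one (by linarith)]; linarith [hsIoo.2]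
          have h2 : (0:ℝ) ≤ (s - d) / (1 - d) :=
            div_nonneg (by linarith) (by linarith)
          constructor <;> linarith
        · have hnl : ¬(1 + (s - d) / (1 - d) < 1) := by
            have : (0:ℝ) ≤ (s - d) / (1 - d) := div_nonneg (by linarith) (by linarith)
            linarith
          simp only [hF, if_neg hnl, haff]
          rw [show d + (1 + (s - d) / (1 - d) - 1) * (1 - d) = d + (s - d) / (1 - d) * (1 - d)
            by ring, div_mul_cancel₀ _ (by linarith : (1:ℝ) - d ≠ 0)]
          rw [show d + (s - d) = s by ring]
          exact hxs
  have hFopen : ∀ W : Set ℝ, W ⊆ Ioo 0 2 → IsOpen W → IsOpen (F '' W) := by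
    intro W hW hWo
    have hcover : W = (W ∩ Ioo 0 1) ∪ (W ∩ Ioo a 2) := by
      apply Subset.antisymm
      · intro t htW
        rcases lt_or_ge t 1 with h | h
        · exact Or.inl ⟨htW, (hW htW).1, h⟩
        · exact Or.inr ⟨htW, lt_of_lt_of_le ha1 h, (hW htW).2⟩
      · exact union_subset inter_subset_left inter_subset_left
    rw [hcover, image_union]
    apply IsOpen.union
    · have : F '' (W ∩ Ioo 0 1) = C.p '' (W ∩ Ioo 0 1) := by
        apply image_congr
        intro t ht
        simp only [hF, if_pos ht.2.2]
      rw [this]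
      exact C.open_p _ inter_subset_right (hWo.inter isOpen_Ioo)
    · have : F '' (W ∩ Ioo a 2) = C'.p '' (G '' (W ∩ Ioo a 2)) := by
        rw [image_image]
        exact image_congr (fun t ht => hFeq t ht.2)
      rw [this]
      apply C'.open_p
      · rintro y ⟨t, ht, rfl⟩
        exact hGmem t ht.2
      · exact mono_image_open hGmono hGcont inter_subset_right (hWo.inter isOpen_Ioo)
  -- assemble the homeomorphism
  set ι : ↥(Ioo (0:ℝ) 2) → ↥(e ∪ e') := fun t => ⟨F t.1, hFmem t.1 t.2⟩ with hι
  have hbij : Function.Bijective ι := by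
    constructor
    · intro s t h
      apply Subtype.ext
      exact hFinj s.2 t.2 (congrArg Subtype.val h)
    · intro x
      obtain ⟨t, ht, hFt⟩ := hFsurj x.2
      exact ⟨⟨t, ht⟩, Subtype.ext hFt⟩
  have hcont : Continuous ι := Continuous.subtype_mk hFcont.restrict _
  have hopen : IsOpenMap ι := by
    intro W hWo
    obtain ⟨O, hOo, hOW⟩ := isOpen_induced_iff.1 hWo
    have himg2 : ι '' W = Subtype.val ⁻¹' (F '' (O ∩ Ioo 0 2)) := by
      ext x
      constructor
      · rintro ⟨t, htW, rfl⟩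
        exact ⟨t.1, ⟨by rw [← hOW] at htW; exact htW, t.2⟩, rfl⟩
      · rintro ⟨t, htO, hFt⟩
        exact ⟨⟨t, htO.2⟩, by rw [← hOW]; exact htO.1, Subtype.ext hFt⟩
    rw [himg2]
    exact (hFopen _ inter_subset_right (hOo.inter isOpen_Ioo)).preimage continuous_subtype_val
  have h1 : ↥(Ioo (0:ℝ) 2) ≃ₜ ↥(e ∪ e') :=
    Equiv.toHomeomorphOfContinuousOpen (Equiv.ofBijective ι hbij) hcont hopen
  have h2 : ↥(Ioo (0:ℝ) 2) ≃ₜ ↥(Ioo (0:ℝ) 1) := by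
    refine
    { toFun := fun t => ⟨t.1 / 2, ⟨by have := t.2.1; positivity, by have := t.2.2; simp; linarith⟩⟩
      invFun := fun s => ⟨2 * s.1, ⟨by have := s.2.1; positivity, by have := s.2.2; linarith⟩⟩
      left_inv := fun t => by ext; show 2 * (t.1 / 2) = t.1; ring
      right_inv := fun s => by ext; show 2 * s.1 / 2 = s.1; ring
      continuous_toFun := Continuous.subtype_mk (continuous_subtype_val.div_const 2) _
      continuous_invFun := Continuous.subtype_mk (continuous_const.mul continuous_subtype_val) _ }
  exact ⟨h1.symm.trans h2⟩

end FAproof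
end Part4

section Part5
namespace FAproof

variable {X : Type*} [TopologicalSpace X] [T2Space X] [Nonempty X] {e e' : Set X}

lemma interU_reflect (C : Chart e) (e' : Set X) :
    interU C.reflect e' = {t : ℝ | 1 - t ∈ interU C e'} := by
  ext t
  simp only [interU, Chart.reflect, mem_inter_iff, mem_preimage, mem_setOf_eq, mem_Ioo]
  constructor
  · rintro ⟨⟨h1, h2⟩, h3⟩; exact ⟨⟨by linarith, by linarith⟩, h3⟩
  · rintro ⟨⟨h1, h2⟩, h3⟩; exact ⟨⟨by linarith, by linarith⟩, h3⟩

lemma tr_reflect_right (C : Chart e) (C' : Chart e') :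
    tr C C'.reflect = fun t => 1 - tr C C' t := rfl

/-- If the component of the overlap is not all of `Ioo 0 1` on the other side,
then it touches the boundary. -/
lemma comp_touches (C : Chart e) (C' : Chart e') (he : IsOpen e) (he' : IsOpen e')
    (hVnf : interU C' e ≠ Ioo 0 1) {t₀ : ℝ} (ht₀ : t₀ ∈ interU C e') :
    ∃ a b : ℝ, connectedComponentIn (interU C e') t₀ = Ioo a b ∧
      0 ≤ a ∧ a < b ∧ b ≤ 1 ∧ (a = 0 ∨ b = 1) := by
  obtain ⟨a, b, c, d, ha0, hab, hb1, hc0, hcd, hd1, hC, hD, himg, ρa, ρb, hla, hlb,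
    hor, hba, hbb⟩ := comp_struct C C' he he' ht₀
  refine ⟨a, b, hC, ha0, hab, hb1, ?_⟩
  by_contra hcon
  push_neg at hcon
  obtain ⟨ha', hb'⟩ := hcon
  have ha : 0 < a := lt_of_le_of_ne ha0 (Ne.symm ha')
  have hb : b < 1 := lt_of_le_of_ne hb1 hb'
  have hcd' : c = 0 ∧ d = 1 := by
    rcases hor with ⟨_, rfl, rfl⟩ | ⟨_, rfl, rfl⟩
    · constructor
      · by_contra hc
        exact (hba ha) ⟨lt_of_le_of_ne hc0 (Ne.symm hc), lt_of_lt_of_le hcd hd1⟩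
      · by_contra hd
        exact (hbb hb) ⟨lt_of_le_of_lt hc0 hcd, lt_of_le_of_ne hd1 hd⟩
    · constructor
      · by_contra hc
        exact (hbb hb) ⟨lt_of_le_of_ne hc0 (Ne.symm hc), lt_of_lt_of_le hcd hd1⟩
      · by_contra hd
        exact (hba ha) ⟨lt_of_le_of_lt hc0 hcd, lt_of_le_of_ne hd1 hd⟩
  apply hVnf
  apply Subset.antisymm (interU_subset C')
  rw [← hcd'.1, ← hcd'.2, ← hD]
  exact connectedComponentIn_subset _ _

lemma comp_self {U : Set ℝ} (hU : IsPreconnected U) {t : ℝ} (ht : t ∈ U) :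
    connectedComponentIn U t = U :=
  Subset.antisymm (connectedComponentIn_subset _ _) (hU.subset_connectedComponentIn ht subset_rfl)

lemma subset_of_interU_full (C : Chart e) (hfull : interU C e' = Ioo 0 1) : e ⊆ e' := by
  intro x hx
  have h1 : C.q x ∈ interU C e' := by rw [hfull]; exact C.qmem x hx
  have h2 : C.p (C.q x) ∈ e' := h1.2
  rwa [C.right_inv x hx] at h2

/-- In the single-component case where the overlap is a right end of `e`'s chart,
the two arcs are equal. -/
lemma eq_of_single_right (he : IsFreeArc e) (he' : IsFreeArc e')
    (C : Chart e) (C' : Chart e') {a : ℝ} (ha : 0 < a) (ha1 : a < 1)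
    (hU : interU C e' = Ioo a 1) (hVnf : interU C' e ≠ Ioo 0 1) : e = e' := by
  -- the overlap set on `e'` side is a single component, the image of `Ioo a 1`
  have ht₀ : ∃ t₀, t₀ ∈ interU C e' := by
    rw [hU]
    exact ⟨(a+1)/2, by constructor <;> linarith⟩
  obtain ⟨t₀, ht₀⟩ := ht₀
  have hcompU : connectedComponentIn (interU C e') t₀ = Ioo a 1 := by
    rw [hU] at ht₀ ⊢
    exact comp_self isPreconnected_Ioo ht₀
  obtain ⟨a', b', c, d, _, hab', _, hc0, hcd, hd1, hC, hD, himg, ρa, ρb, hla, hlb,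
    hor, hba, hbb⟩ := comp_struct C C' he.1 he'.1 ht₀
  rw [hcompU] at hC
  have haa : a = a' := by
    have h := congrArg sInf hC
    rwa [csInf_Ioo ha1, csInf_Ioo hab'] at h
  have hbb1 : (1:ℝ) = b' := by
    have h := congrArg sSup hC
    rwa [csSup_Ioo ha1, csSup_Ioo hab'] at h
  subst haa
  subst hbb1
  -- the `V` side is the single component `Ioo c d`
  have hV : interU C' e = Ioo c d := by
    apply Subset.antisymm
    · intro s hs
      have h1 : connectedComponentIn (interU C' e) s = Ioo c d := by
        have h2 : tr C' C s ∈ interU C e' := tr_mem C' C hs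
        have h3 : connectedComponentIn (interU C e') (tr C' C s) = Ioo a 1 := by
          rw [hU] at h2 ⊢
          exact comp_self isPreconnected_Ioo h2
        have h4 := tr_image_component C C' h2
        rw [h3, himg, tr_tr C' C hs] at h4
        exact h4.symm
      rw [← h1]
      exact mem_connectedComponentIn hs
    · rw [← hD]; exact connectedComponentIn_subset _ _
  -- now use the limit structure to pin down the orientation
  have hglue : Nonempty (↥(e ∪ e') ≃ₜ ↥(Ioo (0:ℝ) 1)) := by
    rcases hor with ⟨hmono, hac, hbd⟩ | ⟨hanti, had, hbc⟩
    · -- monotone: ρa = c must be 0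
      have hc : c = 0 := by
        by_contra hc
        exact (hba ha) (by
          rw [hac]; exact ⟨lt_of_le_of_ne hc0 (Ne.symm hc), lt_of_lt_of_le hcd hd1⟩)
      subst hc
      have hd : d < 1 := by
        rcases lt_or_eq_of_le hd1 with h | h
        · exact h
        · exfalso; apply hVnf; rw [hV, h]
      exact glue_homeo C C' ha ha1 hcd hd hU hV hmono himg
    · -- antitone: ρa = d must be 1; reflect the second chart
      have hd : d = 1 := by
        by_contra hd
        exact (hba ha) (by
          rw [had]; exact ⟨lt_of_le_of_lt hc0 hcd, lt_of_le_of_ne hd1 hd⟩)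
      subst hd
      have hc : 0 < c := by
        rcases lt_or_eq_of_le hc0 with h | h
        · exact h
        · exfalso; apply hVnf; rw [hV, ← h]
      set C'' := C'.reflect with hC''
      have hV'' : interU C'' e = Ioo 0 (1 - c) := by
        rw [hC'', interU_reflect, hV]
        ext t
        simp only [mem_setOf_eq, mem_Ioo]
        constructor
        · rintro ⟨h1, h2⟩; exact ⟨by linarith, by linarith⟩
        · rintro ⟨h1, h2⟩; exact ⟨by linarith, by linarith⟩
      have hmono'' : StrictMonoOn (tr C C'') (Ioo a 1) := by
        rw [tr_reflect_right]
        intro s hs t ht hst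
        simp only
        have := hanti hs ht hst
        linarith
      have himg'' : tr C C'' '' Ioo a 1 = Ioo 0 (1 - c) := by
        rw [tr_reflect_right]
        have h1 : (fun t => 1 - tr C C' t) '' Ioo a 1
            = (fun y : ℝ => 1 - y) '' (tr C C' '' Ioo a 1) := by
          rw [image_image]
        rw [h1, himg]
        ext s
        simp only [mem_image, mem_Ioo]
        constructor
        · rintro ⟨y, hy, rfl⟩; exact ⟨by linarith [hy.2], by linarith [hy.1]⟩
        · rintro ⟨h1, h2⟩; exact ⟨1 - s, ⟨by linarith, by linarith⟩, by ring⟩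
      exact glue_homeo C C'' ha ha1 (by linarith) (by linarith) hU hV'' hmono'' himg''
  -- maximality
  have h1 : e ∪ e' = e := he.2.2 (e ∪ e') (he.1.union he'.1) hglue subset_union_left
  have h2 : e' ⊆ e := by rw [← h1]; exact subset_union_right
  exact he'.2.2 e he.1 he.2.1 h2

end FAproof
end Part5

section Part6
namespace FAproof

variable {X : Type*} [TopologicalSpace X] [T2Space X] {e e' : Set X}

lemma not_full_comp (C' : Chart e') (hVnf : interU C' e ≠ Ioo 0 1) {s : ℝ}
    (hcomp : connectedComponentIn (interU C' e) s = Ioo 0 1) : False := by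
  apply hVnf
  apply Subset.antisymm (interU_subset C')
  rw [← hcomp]
  exact connectedComponentIn_subset _ _

lemma end_limit_left (C : Chart e) (C' : Chart e') (he : IsOpen e) (he' : IsOpen e')
    (hVnf : interU C' e ≠ Ioo 0 1) {t₀ b : ℝ} (ht₀ : t₀ ∈ interU C e')
    (hcomp : connectedComponentIn (interU C e') t₀ = Ioo 0 b) (hb1 : b < 1) :
    ∃ ρ ∈ Ioo (0:ℝ) 1, Tendsto (tr C C') (𝓝[Ioo 0 b] 0) (𝓝 ρ) := by
  obtain ⟨a', b', c, d, ha0', hab', hb1', hc0, hcd, hd1, hC, hD, himg, ρa, ρb, hla, hlb,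
    hor, hba, hbb⟩ := comp_struct C C' he he' ht₀
  rw [hcomp] at hC
  have hb0 : 0 < b := by
    have : a' < b' := hab'
    have h := congrArg sInf hC.symm
    have h2 := congrArg sSup hC.symm
    rw [csInf_Ioo hab'] at h
    rw [csSup_Ioo hab'] at h2
    have hba' : (0:ℝ) < b := by
      by_contra hcon
      push_neg at hcon
      rw [Ioo_eq_empty (by linarith)] at hC
      exact (nonempty_Ioo.2 hab').ne_empty hC.symm
    exact hba'
  have ha' : (0:ℝ) = a' := by
    have h := congrArg sInf hC
    rwa [csInf_Ioo hb0, csInf_Ioo hab'] at h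
  have hb' : b = b' := by
    have h := congrArg sSup hC
    rwa [csSup_Ioo hb0, csSup_Ioo hab'] at h
  subst ha'; subst hb'
  have hnotfull : ¬(c = 0 ∧ d = 1) := by
    rintro ⟨rfl, rfl⟩
    exact not_full_comp C' hVnf hD
  rcases hor with ⟨hm, hac, hbd⟩ | ⟨han, had, hbc⟩
  · -- monotone: limit at b is d, which must be 1, so c > 0 and limit at 0 is c
    have hd : d = 1 := by
      by_contra hd
      exact (hbb hb1) (by rw [hbd]; exact ⟨lt_of_le_of_lt hc0 hcd, lt_of_le_of_ne hd1 hd⟩)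
    have hc : 0 < c := by
      rcases lt_or_eq_of_le hc0 with h | h
      · exact h
      · exact absurd ⟨h.symm, hd⟩ hnotfull
    exact ⟨ρa, by rw [hac]; exact ⟨hc, by rw [← hd] at hd1 ⊢; exact hcd⟩, hla⟩
  · -- antitone: limit at b is c, which must be 0, so d < 1 and limit at 0 is d
    have hc : c = 0 := by
      by_contra hc
      exact (hbb hb1) (by rw [hbc]; exact ⟨lt_of_le_of_ne hc0 (Ne.symm hc), lt_of_lt_of_le hcd hd1⟩)
    have hd : d < 1 := by
      rcases lt_or_eq_of_le hd1 with h | h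
      · exact h
      · exact absurd ⟨hc, h⟩ hnotfull
    exact ⟨ρa, by rw [had]; exact ⟨by rw [← hc]; exact hcd, hd⟩, hla⟩

lemma end_limit_right (C : Chart e) (C' : Chart e') (he : IsOpen e) (he' : IsOpen e')
    (hVnf : interU C' e ≠ Ioo 0 1) {t₀ a : ℝ} (ht₀ : t₀ ∈ interU C e')
    (hcomp : connectedComponentIn (interU C e') t₀ = Ioo a 1) (ha0 : 0 < a) :
    ∃ ρ ∈ Ioo (0:ℝ) 1, Tendsto (tr C C') (𝓝[Ioo a 1] 1) (𝓝 ρ) := by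
  obtain ⟨a', b', c, d, ha0', hab', hb1', hc0, hcd, hd1, hC, hD, himg, ρa, ρb, hla, hlb,
    hor, hba, hbb⟩ := comp_struct C C' he he' ht₀
  rw [hcomp] at hC
  have ha1 : a < 1 := by
    by_contra hcon
    push_neg at hcon
    rw [Ioo_eq_empty (by linarith)] at hC
    exact (nonempty_Ioo.2 hab').ne_empty hC.symm
  have ha' : a = a' := by
    have h := congrArg sInf hC
    rwa [csInf_Ioo ha1, csInf_Ioo hab'] at h
  have hb' : (1:ℝ) = b' := by
    have h := congrArg sSup hC
    rwa [csSup_Ioo ha1, csSup_Ioo hab'] at h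
  subst ha'; subst hb'
  have hnotfull : ¬(c = 0 ∧ d = 1) := by
    rintro ⟨rfl, rfl⟩
    exact not_full_comp C' hVnf hD
  rcases hor with ⟨hm, hac, hbd⟩ | ⟨han, had, hbc⟩
  · -- monotone: limit at a is c, which must be 0, so d < 1; limit at 1 is d
    have hc : c = 0 := by
      by_contra hc
      exact (hba ha0) (by rw [hac]; exact ⟨lt_of_le_of_ne hc0 (Ne.symm hc), lt_of_lt_of_le hcd hd1⟩)
    have hd : d < 1 := by
      rcases lt_or_eq_of_le hd1 with h | h
      · exact h
      · exact absurd ⟨hc, h⟩ hnotfull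
    exact ⟨ρb, by rw [hbd]; exact ⟨by rw [← hc]; exact hcd, hd⟩, hlb⟩
  · -- antitone: limit at a is d, which must be 1, so c > 0; limit at 1 is c
    have hd : d = 1 := by
      by_contra hd
      exact (hba ha0) (by rw [had]; exact ⟨lt_of_le_of_lt hc0 hcd, lt_of_le_of_ne hd1 hd⟩)
    have hc : 0 < c := by
      rcases lt_or_eq_of_le hc0 with h | h
      · exact h
      · exact absurd ⟨h.symm, hd⟩ hnotfull
    exact ⟨ρb, by rw [hbc]; exact ⟨hc, by rw [← hd] at hd1 ⊢; exact hcd⟩, hlb⟩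

lemma closure_subset_union [FrechetUrysohnSpace X] (C : Chart e) (C' : Chart e')
    (he : IsOpen e) (he' : IsOpen e') (hVnf : interU C' e ≠ Ioo 0 1)
    {b a t₀ t₁ : ℝ} (hb0 : 0 < b) (hb1 : b < 1) (ha0 : 0 < a) (_ha1 : a < 1)
    (ht₀ : t₀ ∈ interU C e') (ht₁ : t₁ ∈ interU C e')
    (hcomp₀ : connectedComponentIn (interU C e') t₀ = Ioo 0 b)
    (hcomp₁ : connectedComponentIn (interU C e') t₁ = Ioo a 1) :
    closure e ⊆ e ∪ e' := by
  obtain ⟨ρ₀, hρ₀, hlim₀⟩ := end_limit_left C C' he he' hVnf ht₀ hcomp₀ hb1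
  obtain ⟨ρ₁, hρ₁, hlim₁⟩ := end_limit_right C C' he he' hVnf ht₁ hcomp₁ ha0
  have hUsub₀ : Ioo 0 b ⊆ interU C e' := hcomp₀ ▸ connectedComponentIn_subset _ _
  have hUsub₁ : Ioo a 1 ⊆ interU C e' := hcomp₁ ▸ connectedComponentIn_subset _ _
  intro x hx
  obtain ⟨u, hu, hulim⟩ := mem_closure_iff_seq_limit.1 hx
  set t : ℕ → ℝ := fun n => C.q (u n) with htdef
  have htIoo : ∀ n, t n ∈ Ioo (0:ℝ) 1 := fun n => C.qmem _ (hu n)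
  have hpt : ∀ n, C.p (t n) = u n := fun n => C.right_inv _ (hu n)
  obtain ⟨ts, hts, φ, hφ, hlim⟩ := (isCompact_Icc (a := (0:ℝ)) (b := 1)).tendsto_subseq
    (fun n => ⟨(htIoo n).1.le, (htIoo n).2.le⟩)
  have huφ : Tendsto (u ∘ φ) atTop (𝓝 x) := hulim.comp hφ.tendsto_atTop
  by_cases hsmem : ts ∈ Ioo (0:ℝ) 1
  · left
    have h1 : Tendsto (fun n => C.p (t (φ n))) atTop (𝓝 (C.p ts)) :=
      ((C.contp.continuousAt (isOpen_Ioo.mem_nhds hsmem)).tendsto).comp hlim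
    have h2 : (fun n => C.p (t (φ n))) = u ∘ φ := funext fun n => hpt (φ n)
    rw [h2] at h1
    have := tendsto_nhds_unique huφ h1
    rw [this]
    exact C.maps ts hsmem
  · have hts01 : ts = 0 ∨ ts = 1 := by
      simp only [mem_Ioo, not_and_or, not_lt] at hsmem
      rcases hsmem with h | h
      · exact Or.inl (le_antisymm h hts.1)
      · exact Or.inr (le_antisymm hts.2 h)
    have key : ∀ (I : Set ℝ) (z ρ : ℝ), ts = z → Tendsto (tr C C') (𝓝[I] z) (𝓝 ρ) →
        ρ ∈ Ioo (0:ℝ) 1 → I ⊆ interU C e' → (∀ᶠ n in atTop, t (φ n) ∈ I) → x ∈ e ∪ e' := by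
      intro I z ρ hz hlimI hρ hIsub hev
      right
      have hlim' : Tendsto (fun n => t (φ n)) atTop (𝓝[I] z) := by
        rw [tendsto_nhdsWithin_iff]
        exact ⟨hz ▸ hlim, hev⟩
      have h3 : Tendsto (fun n => tr C C' (t (φ n))) atTop (𝓝 ρ) := hlimI.comp hlim'
      have h4 : Tendsto (fun n => C'.p (tr C C' (t (φ n)))) atTop (𝓝 (C'.p ρ)) :=
        ((C'.contp.continuousAt (isOpen_Ioo.mem_nhds hρ)).tendsto).comp h3
      have h5 : ∀ᶠ n in atTop, C'.p (tr C C' (t (φ n))) = u (φ n) := by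
        filter_upwards [hev] with n hn
        rw [tr_p_eq C C' (hIsub hn), hpt (φ n)]
      have h6 : Tendsto (u ∘ φ) atTop (𝓝 (C'.p ρ)) := h4.congr' h5
      have := tendsto_nhds_unique huφ h6
      rw [this]
      exact C'.maps ρ hρ
    rcases hts01 with hts0 | hts1
    · apply key (Ioo 0 b) 0 ρ₀ hts0 hlim₀ hρ₀ hUsub₀
      have hevb : ∀ᶠ n in atTop, t (φ n) < b := by
        rw [hts0] at hlim
        exact hlim.eventually (eventually_lt_nhds hb0)
      filter_upwards [hevb] with n hn
      exact ⟨(htIoo (φ n)).1, hn⟩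
    · apply key (Ioo a 1) 1 ρ₁ hts1 hlim₁ hρ₁ hUsub₁
      have heva : ∀ᶠ n in atTop, a < t (φ n) := by
        rw [hts1] at hlim
        exact hlim.eventually (eventually_gt_nhds _ha1)
      filter_upwards [heva] with n hn
      exact ⟨hn, (htIoo (φ n)).2⟩

end FAproof
end Part6

section Part7

namespace FAproof

variable {X : Type*} [TopologicalSpace X] [T2Space X] [Nonempty X] {e e' : Set X}

lemma comp_eq_of_mem_both {F : Set ℝ} {x y z : ℝ} (h1 : z ∈ connectedComponentIn F x)
    (h2 : z ∈ connectedComponentIn F y) :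
    connectedComponentIn F x = connectedComponentIn F y :=
  (connectedComponentIn_eq h1).trans (connectedComponentIn_eq h2).symm

lemma no_circle [FrechetUrysohnSpace X] [PreconnectedSpace X]
    (he : IsFreeArc e) (he' : IsFreeArc e') (C : Chart e) (C' : Chart e')
    (hUnf : interU C e' ≠ Ioo 0 1) (hVnf : interU C' e ≠ Ioo 0 1)
    {b a t₀ t₁ : ℝ} (hb0 : 0 < b) (hb1 : b < 1) (ha0 : 0 < a) (ha1 : a < 1)
    (ht₀ : t₀ ∈ interU C e') (ht₁ : t₁ ∈ interU C e')
    (hcomp₀ : connectedComponentIn (interU C e') t₀ = Ioo 0 b)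
    (hcomp₁ : connectedComponentIn (interU C e') t₁ = Ioo a 1)
    (hg : (ground X).Nonempty) : False := by
  have h1 : closure e ⊆ e ∪ e' :=
    closure_subset_union C C' he.1 he'.1 hVnf hb0 hb1 ha0 ha1 ht₀ ht₁ hcomp₀ hcomp₁
  -- structure of the components on the `e'` side
  set s₀ := tr C C' t₀ with hs₀def
  set s₁ := tr C C' t₁ with hs₁def
  have hs₀ : s₀ ∈ interU C' e := tr_mem C C' ht₀
  have hs₁ : s₁ ∈ interU C' e := tr_mem C C' ht₁
  have back₀ : tr C' C '' connectedComponentIn (interU C' e) s₀ = Ioo 0 b := by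
    have h := tr_image_component C' C hs₀
    rw [hs₀def, tr_tr C C' ht₀] at h
    rw [h, hcomp₀]
  have back₁ : tr C' C '' connectedComponentIn (interU C' e) s₁ = Ioo a 1 := by
    have h := tr_image_component C' C hs₁
    rw [hs₁def, tr_tr C C' ht₁] at h
    rw [h, hcomp₁]
  have hdistinct : connectedComponentIn (interU C' e) s₀ ≠ connectedComponentIn (interU C' e) s₁ := by
    intro h
    rw [h, back₁] at back₀
    have := congrArg sInf back₀
    rw [csInf_Ioo ha1, csInf_Ioo hb0] at this
    linarith
  obtain ⟨c₀, d₀, hcV₀, hc₀0, hcd₀, hd₀1, htouch₀⟩ :=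
    comp_touches C' C he'.1 he.1 hUnf hs₀
  obtain ⟨c₁, d₁, hcV₁, hc₁0, hcd₁, hd₁1, htouch₁⟩ :=
    comp_touches C' C he'.1 he.1 hUnf hs₁
  -- each component of the `e'` side touching a side must avoid being full
  have hnf₀ : ¬(c₀ = 0 ∧ d₀ = 1) := by
    rintro ⟨rfl, rfl⟩
    exact not_full_comp C' hVnf hcV₀
  have hnf₁ : ¬(c₁ = 0 ∧ d₁ = 1) := by
    rintro ⟨rfl, rfl⟩
    exact not_full_comp C' hVnf hcV₁
  -- they cannot touch the same side
  have hopp : ∀ {u v w z : ℝ}, connectedComponentIn (interU C' e) u = Ioo 0 w →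
      connectedComponentIn (interU C' e) v = Ioo 0 z → 0 < w → 0 < z →
      connectedComponentIn (interU C' e) u = connectedComponentIn (interU C' e) v := by
    intro u v w z hu hv hw hz
    have hm : min w z / 2 ∈ Ioo 0 w := ⟨by positivity, by
      have := min_le_left w z; have := min_le_right w z
      have h2 : min w z / 2 < min w z := by
        have : 0 < min w z := lt_min hw hz
        linarith
      linarith [min_le_left w z]⟩
    have hm' : min w z / 2 ∈ Ioo 0 z := ⟨by positivity, by
      have h2 : min w z / 2 < min w z := by
        have : 0 < min w z := lt_min hw hz
        linarith
      linarith [min_le_right w z]⟩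
    exact comp_eq_of_mem_both (hu ▸ hm) (hv ▸ hm')
  have hopp' : ∀ {u v w z : ℝ}, connectedComponentIn (interU C' e) u = Ioo w 1 →
      connectedComponentIn (interU C' e) v = Ioo z 1 → w < 1 → z < 1 →
      connectedComponentIn (interU C' e) u = connectedComponentIn (interU C' e) v := by
    intro u v w z hu hv hw hz
    have hmax : max w z < 1 := max_lt hw hz
    have hm : (max w z + 1) / 2 ∈ Ioo w 1 :=
      ⟨by linarith [le_max_left w z], by linarith⟩
    have hm' : (max w z + 1) / 2 ∈ Ioo z 1 :=
      ⟨by linarith [le_max_right w z], by linarith⟩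
    exact comp_eq_of_mem_both (hu ▸ hm) (hv ▸ hm')
  -- extract the left/right pair on the `e'` side
  have hpair : ∃ sL sR β γ : ℝ, sL ∈ interU C' e ∧ sR ∈ interU C' e ∧
      connectedComponentIn (interU C' e) sL = Ioo 0 β ∧
      connectedComponentIn (interU C' e) sR = Ioo γ 1 ∧
      0 < β ∧ β < 1 ∧ 0 < γ ∧ γ < 1 := by
    rcases htouch₀ with h0L | h0R <;> rcases htouch₁ with h1L | h1R
    · subst h0L; subst h1L
      exact absurd (hopp hcV₀ hcV₁ hcd₀ hcd₁) hdistinct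
    · subst h0L; subst h1R
      refine ⟨s₀, s₁, d₀, c₁, hs₀, hs₁, hcV₀, hcV₁, hcd₀, ?_, ?_, hcd₁⟩
      · rcases lt_or_eq_of_le hd₀1 with h | h
        · exact h
        · exact absurd ⟨rfl, h⟩ hnf₀
      · rcases lt_or_eq_of_le hc₁0 with h2 | h2
        · exact h2
        · exact absurd ⟨h2.symm, rfl⟩ hnf₁
    · subst h0R; subst h1L
      refine ⟨s₁, s₀, d₁, c₀, hs₁, hs₀, hcV₁, hcV₀, hcd₁, ?_, ?_, hcd₀⟩
      · rcases lt_or_eq_of_le hd₁1 with h | h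
        · exact h
        · exact absurd ⟨rfl, h⟩ hnf₁
      · rcases lt_or_eq_of_le hc₀0 with h | h
        · exact h
        · exact absurd ⟨h.symm, rfl⟩ hnf₀
    · subst h0R; subst h1R
      exact absurd (hopp' hcV₀ hcV₁
        (lt_of_lt_of_le hcd₀ hd₀1) (lt_of_lt_of_le hcd₁ hd₁1)) hdistinct
  obtain ⟨sL, sR, β, γ, hsL, hsR, hcL, hcR, hβ0, hβ1, hγ0, hγ1⟩ := hpair
  have h2 : closure e' ⊆ e' ∪ e :=
    closure_subset_union C' C he'.1 he.1 hUnf hβ0 hβ1 hγ0 hγ1 hsL hsR hcL hcR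
  have hZclosed : IsClosed (e ∪ e') := by
    apply isClosed_of_closure_subset
    rw [closure_union]
    intro x hx
    rcases hx with hx | hx
    · exact h1 hx
    · rcases h2 hx with h | h
      · exact Or.inr h
      · exact Or.inl h
  have huniv : e ∪ e' = univ :=
    IsClopen.eq_univ (s := e ∪ e') ⟨hZclosed, he.1.union he'.1⟩
      ⟨C.p (1/2), Or.inl (C.maps _ ⟨by norm_num, by norm_num⟩)⟩
  obtain ⟨g, hgG⟩ := hg
  have hgZ : g ∈ e ∪ e' := huniv ▸ mem_univ g
  rcases hgZ with h | h
  · exact hgG e he h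
  · exact hgG e' he' h

end FAproof
end Part7

section Part8
namespace FAproof

lemma freeArc_eq_of_inter {X : Type*} [TopologicalSpace X] [ConnectedSpace X]
    [TopologicalSpace.MetrizableSpace X] [Nonempty X] {e e' : Set X}
    (he : IsFreeArc e) (he' : IsFreeArc e') (hint : (e ∩ e').Nonempty)
    (hg : (ground X).Nonempty) : e = e' := by
  letI : MetricSpace X := TopologicalSpace.metrizableSpaceMetric X
  set C := Chart.ofFreeArc he with hCdef
  set C' := Chart.ofFreeArc he' with hC'def
  by_cases hUf : interU C e' = Ioo 0 1
  · exact (he.2.2 e' he'.1 he'.2.1 (subset_of_interU_full C hUf)).symm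
  by_cases hVf : interU C' e = Ioo 0 1
  · exact he'.2.2 e he.1 he.2.1 (subset_of_interU_full C' hVf)
  obtain ⟨x, hxe, hxe'⟩ := hint
  have ht₀ : C.q x ∈ interU C e' := by
    refine ⟨C.qmem x hxe, ?_⟩
    show C.p (C.q x) ∈ e'
    rw [C.right_inv x hxe]
    exact hxe'
  obtain ⟨a₀, b₀, hcomp₀, ha₀0, hab₀, hb₀1, htouch₀⟩ := comp_touches C C' he.1 he'.1 hVf ht₀
  by_cases hall : ∀ t ∈ interU C e', connectedComponentIn (interU C e') t = Ioo a₀ b₀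
  · -- single component case
    have hUeq : interU C e' = Ioo a₀ b₀ := by
      apply Subset.antisymm
      · intro t ht; rw [← hall t ht]; exact mem_connectedComponentIn ht
      · rw [← hcomp₀]; exact connectedComponentIn_subset _ _
    rcases htouch₀ with h0 | h1
    · subst h0
      have hb₀1' : b₀ < 1 := lt_of_le_of_ne hb₀1 (fun h => hUf (by rw [hUeq, h]))
      have hU' : interU C.reflect e' = Ioo (1 - b₀) 1 := by
        rw [interU_reflect, hUeq]
        ext t
        simp only [mem_setOf_eq, mem_Ioo]
        constructor
        · rintro ⟨h1, h2⟩; exact ⟨by linarith, by linarith⟩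
        · rintro ⟨h1, h2⟩; exact ⟨by linarith, by linarith⟩
      exact eq_of_single_right he he' C.reflect C' (by linarith) (by linarith) hU' hVf
    · subst h1
      have ha₀' : 0 < a₀ := by
        rcases lt_or_eq_of_le ha₀0 with h | h
        · exact h
        · exact absurd (by rw [hUeq, ← h]) hUf
      exact eq_of_single_right he he' C C' ha₀' hab₀ hUeq hVf
  · -- two components: circle case, contradiction with the ground point
    push_neg at hall
    obtain ⟨t₁, ht₁, hne₁⟩ := hall
    obtain ⟨a₁, b₁, hcomp₁, ha₁0, hab₁, hb₁1, htouch₁⟩ := comp_touches C C' he.1 he'.1 hVf ht₁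
    have hUnf₀ : ¬(a₀ = 0 ∧ b₀ = 1) := by
      rintro ⟨rfl, rfl⟩
      apply hUf
      apply Subset.antisymm (interU_subset C)
      rw [← hcomp₀]; exact connectedComponentIn_subset _ _
    have hUnf₁ : ¬(a₁ = 0 ∧ b₁ = 1) := by
      rintro ⟨rfl, rfl⟩
      apply hUf
      apply Subset.antisymm (interU_subset C)
      rw [← hcomp₁]; exact connectedComponentIn_subset _ _
    have hdist : connectedComponentIn (interU C e') (C.q x) ≠
        connectedComponentIn (interU C e') t₁ := by
      rw [hcomp₀, hcomp₁]
      intro h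
      exact hne₁ (hcomp₁.trans h.symm)
    exfalso
    rcases htouch₀ with h0L | h0R <;> rcases htouch₁ with h1L | h1R
    · -- both touch 0: contradiction
      subst h0L; subst h1L
      have hm : min b₀ b₁ / 2 ∈ Ioo (0:ℝ) b₀ := by
        constructor
        · have := lt_min hab₀ hab₁; positivity
        · have h2 : min b₀ b₁ / 2 < min b₀ b₁ := by
            have := lt_min hab₀ hab₁; linarith
          linarith [min_le_left b₀ b₁]
      have hm' : min b₀ b₁ / 2 ∈ Ioo (0:ℝ) b₁ := by
        constructor
        · have := lt_min hab₀ hab₁; positivity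
        · have h2 : min b₀ b₁ / 2 < min b₀ b₁ := by
            have := lt_min hab₀ hab₁; linarith
          linarith [min_le_right b₀ b₁]
      exact hdist (comp_eq_of_mem_both (hcomp₀ ▸ hm) (hcomp₁ ▸ hm'))
    · -- t₀ side touches 0, t₁ touches 1
      subst h0L; subst h1R
      have hb₀1' : b₀ < 1 := lt_of_le_of_ne hb₀1 (fun h => hUnf₀ ⟨rfl, h⟩)
      have ha₁' : 0 < a₁ := lt_of_le_of_ne ha₁0 (fun h => hUnf₁ ⟨h.symm, rfl⟩)
      exact no_circle he he' C C' hUf hVf hab₀ hb₀1' ha₁' hab₁ ht₀ ht₁ hcomp₀ hcomp₁ hg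
    · -- t₀ touches 1, t₁ touches 0
      subst h0R; subst h1L
      have hb₁1' : b₁ < 1 := lt_of_le_of_ne hb₁1 (fun h => hUnf₁ ⟨rfl, h⟩)
      have ha₀' : 0 < a₀ := lt_of_le_of_ne ha₀0 (fun h => hUnf₀ ⟨h.symm, rfl⟩)
      exact no_circle he he' C C' hUf hVf hab₁ hb₁1' ha₀' hab₀ ht₁ ht₀ hcomp₁ hcomp₀ hg
    · -- both touch 1: contradiction
      subst h0R; subst h1R
      have hmax : max a₀ a₁ < 1 := max_lt hab₀ hab₁
      have hm : (max a₀ a₁ + 1) / 2 ∈ Ioo a₀ 1 :=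
        ⟨by linarith [le_max_left a₀ a₁], by linarith⟩
      have hm' : (max a₀ a₁ + 1) / 2 ∈ Ioo a₁ 1 :=
        ⟨by linarith [le_max_right a₀ a₁], by linarith⟩
      exact hdist (comp_eq_of_mem_both (hcomp₀ ▸ hm) (hcomp₁ ▸ hm'))

end FAproof
end Part8

section Part9
namespace FAproof
open Metric in
theorem main {X : Type*} [TopologicalSpace X] [CompactSpace X] [ConnectedSpace X]
    [LocallyConnectedSpace X] [TopologicalSpace.MetrizableSpace X] [Nonempty X]
    (A B : Set X) (hA : IsClosed A) (hB : IsClosed B)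
    (hAne : A.Nonempty) (hBne : B.Nonempty) (hdisj : Disjoint A B)
    (hunion : A ∪ B = ground X) :
    (edgeCut A B).Finite := by
  letI : MetricSpace X := TopologicalSpace.metrizableSpaceMetric X
  have hgnd : A ⊆ ground X := hunion ▸ subset_union_left
  have hgne : (ground X).Nonempty := hAne.mono hgnd
  -- the two sides are at positive distance
  obtain ⟨b₀, hb₀B, hb₀min⟩ := (hB.isCompact).exists_isMinOn hBne
    ((continuous_infDist_pt A).continuousOn)
  set δ := infDist b₀ A with hδdef
  have hδpos : 0 < δ := by
    rw [hδdef]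
    exact (hA.notMem_iff_infDist_pos hAne).1 (disjoint_right.1 hdisj hb₀B)
  have hBd : ∀ y ∈ B, δ ≤ infDist y A := fun y hy => hb₀min hy
  -- a point not in the ground space lies on a free arc
  have harc : ∀ z : X, infDist z A = δ/2 → ∃ f : Set X, IsFreeArc f ∧ z ∈ f := by
    intro z hz
    have hzA : z ∉ A := fun h => by
      rw [infDist_zero_of_mem h] at hz; linarith
    have hzB : z ∉ B := fun h => by
      have := hBd z h; rw [hz] at this; linarith
    have hzg : z ∉ ground X := by
      rw [← hunion]
      rintro (h | h) <;> [exact hzA h; exact hzB h]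
    simp only [ground, mem_setOf_eq, not_forall] at hzg
    obtain ⟨f, hf, hzf⟩ := hzg
    exact ⟨f, hf, not_not.1 hzf⟩
  -- in each arc of the cut there is a point at distance δ/2 from A
  have hpoint : ∀ E ∈ edgeCut A B, ∃ y ∈ E, infDist y A = δ/2 := by
    rintro E ⟨hfree, ⟨p, hpc, hpA⟩, ⟨q, hqc, hqB⟩⟩
    have hEconn : IsPreconnected (closure E) := by
      apply IsPreconnected.closure
      have h1 := (Chart.ofFreeArc hfree (X := X)).image_Ioo
      rw [← h1]
      exact isPreconnected_Ioo.image _ (Chart.ofFreeArc hfree).contp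
    have hIVT := hEconn.intermediate_value hpc hqc
      ((continuous_infDist_pt A).continuousOn)
    have hδmem : δ/2 ∈ Icc (infDist p A) (infDist q A) := by
      rw [infDist_zero_of_mem hpA]
      exact ⟨by linarith, by linarith [hBd q hqB]⟩
    obtain ⟨y, hyc, hyd⟩ := hIVT hδmem
    obtain ⟨f, hf, hyf⟩ := harc y hyd
    have hfE : (f ∩ E).Nonempty := _root_.mem_closure_iff.1 hyc f hf.1 hyf
    have hfeq : f = E := freeArc_eq_of_inter hf hfree hfE hgne
    exact ⟨y, hfeq ▸ hyf, hyd⟩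
  -- conclude by compactness
  by_contra hinf
  have hInf : (edgeCut A B).Infinite := hinf
  set ι := hInf.natEmbedding with hιdef
  set E : ℕ → Set X := fun n => (ι n : Set X) with hEdef
  have hEmem : ∀ n, E n ∈ edgeCut A B := fun n => (ι n).2
  have hEinj : ∀ {n m}, E n = E m → n = m := by
    intro n m h
    exact ι.injective (Subtype.ext h)
  choose y hy hyd using fun n => hpoint (E n) (hEmem n)
  obtain ⟨x, -, φ, hφ, hxlim⟩ := isCompact_univ.tendsto_subseq (fun n => mem_univ (y n))
  have hxd : infDist x A = δ/2 := by
    have h1 : Tendsto (fun k => infDist (y (φ k)) A) atTop (𝓝 (infDist x A)) :=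
      ((continuous_infDist_pt A).continuousAt).tendsto.comp hxlim
    have h2 : (fun k => infDist (y (φ k)) A) = fun _ => δ/2 := funext fun k => hyd (φ k)
    rw [h2] at h1
    exact (tendsto_nhds_unique h1 tendsto_const_nhds)
  obtain ⟨f, hf, hxf⟩ := harc x hxd
  have hev : ∀ᶠ k in atTop, y (φ k) ∈ f := hxlim.eventually_mem (hf.1.mem_nhds hxf)
  obtain ⟨N, hN⟩ := eventually_atTop.1 hev
  have heq : ∀ k, N ≤ k → E (φ k) = f := by
    intro k hk
    exact freeArc_eq_of_inter (hEmem (φ k)).1 hf ⟨y (φ k), hy (φ k), hN k hk⟩ hgne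
  have h1 : E (φ N) = E (φ (N+1)) := by
    rw [heq N le_rfl, heq (N+1) (by omega)]
  have := hEinj h1
  have := hφ (show N < N + 1 by omega)
  omega

end FAproof
end Part9


/-- Every edge cut of a Peano continuum is finite. -/
theorem stmt_8 {X : Type*} [TopologicalSpace X] [CompactSpace X] [ConnectedSpace X]
    [LocallyConnectedSpace X] [TopologicalSpace.MetrizableSpace X] [Nonempty X]
    (A B : Set X) (hA : IsClosed A) (hB : IsClosed B)
    (hAne : A.Nonempty) (hBne : B.Nonempty) (hdisj : Disjoint A B)
    (hunion : A ∪ B = ground X) :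
    (edgeCut A B).Finite :=
  FAproof.main A B hA hB hAne hBne hdisj hunion
end

section
/- Let X be a compact metrizable space with a compatible metric, and let Y, Y₀, Y₁, Y₂, … be subsets of X each of which is, in the subspace topology, a nonempty compact connected locally connected space, such that diam(Yₙ) → 0 as n → ∞ and Y ∩ Yₙ ≠ ∅ for every n ∈ ℕ. Then Y' := Y ∪ ⋃ₙ Yₙ is, in the subspace topology, a Peano continuum (nonempty, compact, connected and locally connected). -/
open Topology Set Filter

open Metric


lemma loc_conn_sub {X : Type*} [MetricSpace X] {A : Set X}
    (h : LocallyConnectedSpace ↥A) {x : X} (hx : x ∈ A) {ε : ℝ} (hε : 0 < ε) :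
    ∃ V : Set X, V ⊆ A ∧ x ∈ V ∧ IsPreconnected V ∧ V ⊆ Metric.ball x ε ∧
      ∃ δ > 0, A ∩ Metric.ball x δ ⊆ V := by
  have hU : (Subtype.val ⁻¹' Metric.ball x ε : Set ↥A) ∈ 𝓝 (⟨x, hx⟩ : ↥A) :=
    continuous_subtype_val.continuousAt.preimage_mem_nhds (Metric.ball_mem_nhds x hε)
  obtain ⟨V', hV'n, hV'c, hV'sub⟩ :=
    locallyConnectedSpace_iff_connected_subsets.mp h ⟨x, hx⟩ _ hU
  refine ⟨Subtype.val '' V', ?_, ⟨⟨x, hx⟩, mem_of_mem_nhds hV'n, rfl⟩,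
    hV'c.image _ continuous_subtype_val.continuousOn, ?_, ?_⟩
  · rintro y ⟨z, _, rfl⟩; exact z.2
  · rintro y ⟨z, hz, rfl⟩; exact hV'sub hz
  · rw [nhds_subtype_eq_comap, Filter.mem_comap] at hV'n
    obtain ⟨t, ht, htV⟩ := hV'n
    obtain ⟨δ, hδ, hball⟩ := Metric.mem_nhds_iff.mp ht
    refine ⟨δ, hδ, fun y ⟨hyA, hyb⟩ => ?_⟩
    exact ⟨⟨y, hyA⟩, htV (by exact hball hyb), rfl⟩

lemma main_nbhd {X : Type*} [MetricSpace X]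
    (Y : Set X) (Yseq : ℕ → Set X)
    (hYc : IsCompact Y) (hYconn : IsConnected Y) (hYlc : LocallyConnectedSpace ↥Y)
    (hYnc : ∀ n, IsCompact (Yseq n)) (hYnconn : ∀ n, IsConnected (Yseq n))
    (hYnlc : ∀ n, LocallyConnectedSpace ↥(Yseq n))
    (hdiam : Filter.Tendsto (fun n => Metric.diam (Yseq n)) Filter.atTop (nhds 0))
    (hmeet : ∀ n, (Y ∩ Yseq n).Nonempty)
    {x : X} (hxZ : x ∈ Y ∪ ⋃ n, Yseq n) {ε : ℝ} (hε : 0 < ε) :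
    ∃ V : Set X, V ⊆ (Y ∪ ⋃ n, Yseq n) ∧ x ∈ V ∧ IsPreconnected V ∧
      V ⊆ Metric.ball x ε ∧ ∃ ρ > 0, (Y ∪ ⋃ n, Yseq n) ∩ Metric.ball x ρ ⊆ V := by
  classical
  set Z := Y ∪ ⋃ n, Yseq n with hZ
  -- threshold extraction from diam → 0
  have hN : ∀ c : ℝ, 0 < c → ∃ N : ℕ, ∀ n, N ≤ n → Metric.diam (Yseq n) < c := by
    intro c hc
    exact eventually_atTop.mp (hdiam.eventually_lt_const hc)
  -- choice of local pieces for each n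
  have hW : ∀ n : ℕ, ∃ (W : Set X) (r : ℝ), 0 < r ∧ W ⊆ Yseq n ∧ W ⊆ Metric.ball x ε ∧
      Yseq n ∩ Metric.ball x r ⊆ W ∧ IsPreconnected (W ∪ {x}) := by
    intro n
    by_cases hx : x ∈ Yseq n
    · obtain ⟨W, hWA, hxW, hWc, hWb, δ, hδ, hsub⟩ := loc_conn_sub (hYnlc n) hx hε
      refine ⟨W, δ, hδ, hWA, hWb, hsub, ?_⟩
      rwa [Set.union_eq_self_of_subset_right (by simpa using hxW)]
    · have hpos : 0 < infDist x (Yseq n) :=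
        (((hYnc n).isClosed).notMem_iff_infDist_pos (hYnconn n).nonempty).1 hx
      refine ⟨∅, infDist x (Yseq n), hpos, empty_subset _, empty_subset _, ?_, ?_⟩
      · rintro z ⟨hz1, hz2⟩
        exact absurd (Metric.infDist_le_dist_of_mem hz1) (not_le.2 (by
          rw [Metric.mem_ball] at hz2; rwa [dist_comm] at hz2))
      · simpa using isPreconnected_singleton
  choose W r hr hWsub hWball hWnbhd hWconn using hW
  by_cases hxY : x ∈ Y
  · -- main case : x ∈ Y
    obtain ⟨V₀, hV₀Y, hxV₀, hV₀c, hV₀b, δ₀, hδ₀, hδ₀sub⟩ :=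
      loc_conn_sub hYlc hxY (half_pos hε)
    set δ : ℝ := min δ₀ (ε / 2) with hδdef
    have hδpos : 0 < δ := lt_min hδ₀ (half_pos hε)
    have hδsub : Y ∩ Metric.ball x δ ⊆ V₀ := fun y hy =>
      hδ₀sub ⟨hy.1, Metric.ball_subset_ball (min_le_left _ _) hy.2⟩
    have hδle : δ ≤ ε / 2 := min_le_right _ _
    obtain ⟨N, hNs⟩ := hN (δ / 2) (half_pos hδpos)
    -- the condition for absorbing whole small pieces
    set P : ℕ → Prop := fun n =>
      (Yseq n ∩ Metric.ball x (δ / 2)).Nonempty ∧ Metric.diam (Yseq n) < δ / 2 with hP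
    have hPball : ∀ n, P n → Yseq n ⊆ Metric.ball x δ := by
      rintro n ⟨⟨z, hz, hzb⟩, hdm⟩ w hw
      rw [Metric.mem_ball] at hzb ⊢
      calc dist w x ≤ dist w z + dist z x := dist_triangle _ _ _
        _ < δ / 2 + δ / 2 := by
            refine add_lt_add_of_le_of_lt ?_ hzb
            exact le_trans (Metric.dist_le_diam_of_mem (hYnc n).isBounded hw hz) hdm.le
        _ = δ := by ring
    set T : ℕ → Set X := fun n =>
      (V₀ ∪ (W n ∪ {x})) ∪ (if P n then Yseq n else ∅) with hT
    refine ⟨⋃ n, T n, ?_, ?_, ?_, ?_, ?_⟩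
    · -- ⊆ Z
      refine Set.iUnion_subset fun n => ?_
      refine Set.union_subset (Set.union_subset (hV₀Y.trans Set.subset_union_left) ?_) ?_
      · refine Set.union_subset ((hWsub n).trans ?_) (by simpa using hxZ)
        exact (Set.subset_iUnion Yseq n).trans Set.subset_union_right
      · split
        · exact (Set.subset_iUnion Yseq n).trans Set.subset_union_right
        · exact Set.empty_subset _
    · exact Set.mem_iUnion.2 ⟨0, Or.inl (Or.inl hxV₀)⟩
    · -- preconnected
      refine isPreconnected_iUnion ⟨x, Set.mem_iInter.2 fun n => Or.inl (Or.inl hxV₀)⟩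
        fun n => ?_
      have h1 : IsPreconnected (V₀ ∪ (W n ∪ {x})) :=
        IsPreconnected.union x hxV₀ (Set.mem_union_right _ rfl) hV₀c (hWconn n)
      show IsPreconnected ((V₀ ∪ (W n ∪ {x})) ∪ if P n then Yseq n else ∅)
      by_cases hPn : P n
      · rw [if_pos hPn]
        obtain ⟨y, hyY, hyn⟩ := hmeet n
        have hyb : y ∈ Metric.ball x δ := hPball n hPn hyn
        refine IsPreconnected.union' ⟨y, Or.inl (hδsub ⟨hyY, hyb⟩), hyn⟩ h1
          (hYnconn n).isPreconnected
      · rw [if_neg hPn]; simpa using h1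
    · -- ⊆ ball x ε
      refine Set.iUnion_subset fun n => ?_
      refine Set.union_subset (Set.union_subset
        (hV₀b.trans (Metric.ball_subset_ball (by linarith))) ?_) ?_
      · refine Set.union_subset (hWball n) ?_
        exact Set.singleton_subset_iff.2 (Metric.mem_ball_self hε)
      · split
        · rename_i hPn
          exact (hPball n hPn).trans (Metric.ball_subset_ball (by linarith))
        · exact Set.empty_subset _
    · -- neighborhood radius
      have hrange : (Finset.range (N + 1)).Nonempty := ⟨0, Finset.mem_range.2 (Nat.succ_pos N)⟩
      set ρ : ℝ := min (δ / 2) ((Finset.range (N + 1)).inf' hrange r) with hρdef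
      have hρpos : 0 < ρ := by
        refine lt_min (half_pos hδpos) ?_
        rw [Finset.lt_inf'_iff]
        exact fun i _ => hr i
      refine ⟨ρ, hρpos, ?_⟩
      rintro z ⟨hzZ, hzb⟩
      have hzδ2 : z ∈ Metric.ball x (δ / 2) :=
        Metric.ball_subset_ball (min_le_left _ _) hzb
      rcases hzZ with hzY | hzU
      · exact Set.mem_iUnion.2 ⟨0, Or.inl (Or.inl (hδsub
          ⟨hzY, Metric.ball_subset_ball (by linarith) hzδ2⟩))⟩
      · obtain ⟨n, hzn⟩ := Set.mem_iUnion.mp hzU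
        rcases le_or_gt n N with hn | hn
        · refine Set.mem_iUnion.2 ⟨n, Or.inl (Or.inr (Or.inl (hWnbhd n ⟨hzn, ?_⟩)))⟩
          refine Metric.ball_subset_ball ?_ hzb
          exact (min_le_right _ _).trans
            (Finset.inf'_le r (Finset.mem_range.2 (Nat.lt_succ_of_le hn)))
        · have hPn : P n := ⟨⟨z, hzn, hzδ2⟩, hNs n hn.le⟩
          refine Set.mem_iUnion.2 ⟨n, Or.inr ?_⟩
          rw [if_pos hPn]; exact hzn
  · -- case x ∉ Y
    set η : ℝ := infDist x Y with hη
    have hηpos : 0 < η := (hYc.isClosed.notMem_iff_infDist_pos hYconn.nonempty).1 hxY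
    have hηle : ∀ y ∈ Y, η ≤ dist x y := fun y hy => Metric.infDist_le_dist_of_mem hy
    obtain ⟨N, hNs⟩ := hN (η / 2) (half_pos hηpos)
    -- small pieces stay away from x
    have hfar : ∀ n, Metric.diam (Yseq n) < η / 2 → ∀ z ∈ Yseq n, η / 2 ≤ dist x z := by
      intro n hdm z hz
      obtain ⟨y, hyY, hyn⟩ := hmeet n
      have := hηle y hyY
      have hd : dist z y ≤ Metric.diam (Yseq n) :=
        Metric.dist_le_diam_of_mem (hYnc n).isBounded hz hyn
      have := dist_triangle x z y
      linarith [this]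
    refine ⟨⋃ n, (W n ∪ {x}), ?_, Set.mem_iUnion.2 ⟨0, Or.inr rfl⟩, ?_, ?_, ?_⟩
    · refine Set.iUnion_subset fun n => Set.union_subset ?_ (by simpa using hxZ)
      exact (hWsub n).trans ((Set.subset_iUnion Yseq n).trans Set.subset_union_right)
    · exact isPreconnected_iUnion ⟨x, Set.mem_iInter.2 fun n => Or.inr rfl⟩ hWconn
    · refine Set.iUnion_subset fun n => Set.union_subset (hWball n) ?_
      exact Set.singleton_subset_iff.2 (Metric.mem_ball_self hε)
    · have hrange : (Finset.range (N + 1)).Nonempty := ⟨0, Finset.mem_range.2 (Nat.succ_pos N)⟩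
      set ρ : ℝ := min (η / 2) ((Finset.range (N + 1)).inf' hrange r) with hρdef
      have hρpos : 0 < ρ := by
        refine lt_min (half_pos hηpos) ?_
        rw [Finset.lt_inf'_iff]
        exact fun i _ => hr i
      refine ⟨ρ, hρpos, ?_⟩
      rintro z ⟨hzZ, hzb⟩
      have hzd : dist x z < ρ := by rw [Metric.mem_ball] at hzb; rwa [dist_comm] at hzb
      rcases hzZ with hzY | hzU
      · exact absurd (hηle z hzY) (not_le.2 (by
          have : ρ ≤ η / 2 := min_le_left _ _
          linarith))
      · obtain ⟨n, hzn⟩ := Set.mem_iUnion.mp hzU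
        rcases le_or_gt n N with hn | hn
        · refine Set.mem_iUnion.2 ⟨n, Or.inl (hWnbhd n ⟨hzn, ?_⟩)⟩
          refine Metric.ball_subset_ball ?_ hzb
          exact (min_le_right _ _).trans
            (Finset.inf'_le r (Finset.mem_range.2 (Nat.lt_succ_of_le hn)))
        · exact absurd (hfar n (hNs n hn.le) z hzn) (not_le.2 (by
            have : ρ ≤ η / 2 := min_le_left _ _
            linarith))

/-- Attaching a zero-sequence of Peano subcontinua, each meeting `Y`,
to a Peano subspace `Y` of a compact metric space yields a Peano continuum. -/
theorem stmt_9 {X : Type*} [MetricSpace X] [CompactSpace X]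
    (Y : Set X) (Yseq : ℕ → Set X)
    (hYc : IsCompact Y) (hYconn : IsConnected Y) (hYlc : LocallyConnectedSpace ↥Y)
    (hYnc : ∀ n, IsCompact (Yseq n)) (hYnconn : ∀ n, IsConnected (Yseq n))
    (hYnlc : ∀ n, LocallyConnectedSpace ↥(Yseq n))
    (hdiam : Filter.Tendsto (fun n => Metric.diam (Yseq n)) Filter.atTop (nhds 0))
    (hmeet : ∀ n, (Y ∩ Yseq n).Nonempty) :
    IsCompact (Y ∪ ⋃ n, Yseq n) ∧ IsConnected (Y ∪ ⋃ n, Yseq n) ∧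
      LocallyConnectedSpace ↥(Y ∪ ⋃ n, Yseq n) := by
  set Z := Y ∪ ⋃ n, Yseq n with hZ
  have hN : ∀ c : ℝ, 0 < c → ∃ N : ℕ, ∀ n, N ≤ n → Metric.diam (Yseq n) < c := by
    intro c hc
    exact eventually_atTop.mp (hdiam.eventually_lt_const hc)
  -- closedness of Z
  have hclosed : IsClosed Z := by
    rw [← isOpen_compl_iff, Metric.isOpen_iff]
    intro x hx
    rw [Set.mem_compl_iff, hZ, Set.mem_union, not_or, Set.mem_iUnion, not_exists] at hx
    obtain ⟨hxY, hxn⟩ := hx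
    have hηpos : 0 < infDist x Y :=
      (hYc.isClosed.notMem_iff_infDist_pos hYconn.nonempty).1 hxY
    set η := infDist x Y with hη
    obtain ⟨N, hNs⟩ := hN (η / 2) (half_pos hηpos)
    have hrange : (Finset.range (N + 1)).Nonempty := ⟨0, Finset.mem_range.2 (Nat.succ_pos N)⟩
    set ρ : ℝ := min (η / 2) ((Finset.range (N + 1)).inf' hrange
      (fun n => infDist x (Yseq n))) with hρdef
    have hρpos : 0 < ρ := by
      refine lt_min (half_pos hηpos) ?_
      rw [Finset.lt_inf'_iff]
      intro i _
      exact (((hYnc i).isClosed).notMem_iff_infDist_pos (hYnconn i).nonempty).1 (hxn i)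
    refine ⟨ρ, hρpos, ?_⟩
    rintro z hzb
    rw [Metric.mem_ball] at hzb
    have hzd : dist x z < ρ := by rwa [dist_comm] at hzb
    rw [Set.mem_compl_iff, hZ, Set.mem_union, not_or, Set.mem_iUnion, not_exists]
    constructor
    · intro hzY
      have h1 : η ≤ dist x z := Metric.infDist_le_dist_of_mem hzY
      have h2 : ρ ≤ η / 2 := min_le_left _ _
      linarith
    · intro n hzn
      rcases le_or_gt n N with hn | hn
      · have h1 : ρ ≤ infDist x (Yseq n) :=
          (min_le_right _ _).trans (Finset.inf'_le _ (Finset.mem_range.2 (Nat.lt_succ_of_le hn)))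
        have h2 : infDist x (Yseq n) ≤ dist x z := Metric.infDist_le_dist_of_mem hzn
        linarith
      · obtain ⟨y, hyY, hyn⟩ := hmeet n
        have h1 : η ≤ dist x y := Metric.infDist_le_dist_of_mem hyY
        have h2 : dist z y ≤ Metric.diam (Yseq n) :=
          Metric.dist_le_diam_of_mem (hYnc n).isBounded hzn hyn
        have h3 := hNs n hn.le
        have h4 := dist_triangle x z y
        have h5 : ρ ≤ η / 2 := min_le_left _ _
        linarith
  refine ⟨hclosed.isCompact, ?_, ?_⟩
  · -- connected
    have hrw : Z = ⋃ n, (Y ∪ Yseq n) := by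
      ext z
      simp only [hZ, Set.mem_union, Set.mem_iUnion]
      constructor
      · rintro (hz | ⟨n, hn⟩)
        · exact ⟨0, Or.inl hz⟩
        · exact ⟨n, Or.inr hn⟩
      · rintro ⟨n, hz | hz⟩
        · exact Or.inl hz
        · exact Or.inr ⟨n, hz⟩
    rw [hrw]
    obtain ⟨y₀, hy₀⟩ := hYconn.nonempty
    refine ⟨⟨y₀, Set.mem_iUnion.2 ⟨0, Or.inl hy₀⟩⟩, ?_⟩
    refine isPreconnected_iUnion ⟨y₀, Set.mem_iInter.2 fun n => Or.inl hy₀⟩ fun n => ?_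
    exact (hYconn.union (hmeet n) (hYnconn n)).isPreconnected
  · -- locally connected
    refine locallyConnectedSpace_iff_connected_subsets.mpr ?_
    rintro ⟨x, hxZ⟩ U hU
    rw [nhds_subtype_eq_comap, Filter.mem_comap] at hU
    obtain ⟨t, ht, htU⟩ := hU
    obtain ⟨ε, hε, hball⟩ := Metric.mem_nhds_iff.mp ht
    obtain ⟨V, hVZ, hxV, hVc, hVb, ρ, hρ, hρsub⟩ :=
      main_nbhd Y Yseq hYc hYconn hYlc hYnc hYnconn hYnlc hdiam hmeet hxZ hε
    refine ⟨Subtype.val ⁻¹' V, ?_, ?_, ?_⟩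
    · rw [nhds_subtype_eq_comap]
      exact Filter.mem_comap.2 ⟨Metric.ball x ρ, Metric.ball_mem_nhds _ hρ,
        fun y hy => hρsub ⟨y.2, hy⟩⟩
    · have himg : Subtype.val '' (Subtype.val ⁻¹' V : Set ↥Z) = V := by
        rw [Subtype.image_preimage_coe]
        exact Set.inter_eq_self_of_subset_right hVZ
      exact IsInducing.subtypeVal.isPreconnected_image.mp (by rw [himg]; exact hVc)
    · exact fun y hy => htU (hball (hVb hy))
end
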